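/- arXiv:1111.4180 — 7 statements merged into one kernel-verified Lean document; each statement's English description precedes it below -/
import Mathlib

section
/- Let D be a complete normed vector space, D_q ⊆ D, and Ξ a metric space. Let q : D_q × Ξ → ℝ be Hadamard differentiable at P ∈ D_q around ξ(P) tangentially to D_0 ⊆ D, with derivative q'(P; ξ(P)) : D_0 → ℝ, and let ξ : D_q → Ξ be continuous. Let (P̂_n) be a sequence of Borel-measurable random elements of D_q such that √n(P̂_n − P) is measurable and its laws converge weakly to the law of a random element Z of D taking values in D_0, and assume √n(q(P̂_n; ξ(P̂_n)) − q(P; ξ(P̂_n))) is measurable for each n. Then the laws of √n(q(P̂_n; ξ(P̂_n)) − q(P; ξ(P̂_n))) converge weakly to the law of q'(P; ξ(P))(Z). -/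
open MeasureTheory Filter Topology

/-- Hadamard differentiability of the family `q(·; ξ)` at `θ` around `ξ0`
tangentially to `D0`, with (continuous linear) derivative `L`. -/
def HadamardDiffFamily {D Ξ : Type*} [NormedAddCommGroup D] [NormedSpace ℝ D]
    [TopologicalSpace Ξ]
    (q : D → Ξ → ℝ) (Dq : Set D) (θ : D) (ξ0 : Ξ) (D0 : Set D) (L : D →L[ℝ] ℝ) : Prop :=
  ∀ (ξn : ℕ → Ξ) (tn : ℕ → ℝ) (hn : ℕ → D) (h : D),
    Tendsto ξn atTop (𝓝 ξ0) →
    Tendsto tn atTop (𝓝 0) → (∀ n, tn n ≠ 0) →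
    Tendsto hn atTop (𝓝 h) → h ∈ D0 →
    (∀ n, θ + tn n • hn n ∈ Dq) →
    Tendsto (fun n => (q (θ + tn n • hn n) (ξn n) - q θ (ξn n)) / tn n) atTop (𝓝 (L h))

/-- Extended functional delta method: if `q` is Hadamard differentiable at `P` around
`ξ(P)` tangentially to `D0`, `ξ` is continuous, and `√n(P̂_n − P)` converges weakly to
the law of `Z` (with values in `D0`), then `√n(q(P̂_n; ξ(P̂_n)) − q(P; ξ(P̂_n)))`
converges weakly to the law of `q'(P; ξ(P))(Z)`. -/
theorem stmt0 {D Ξ Ω Ω' : Type*}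
    [NormedAddCommGroup D] [NormedSpace ℝ D] [CompleteSpace D]
    [MeasurableSpace D] [BorelSpace D]
    [MetricSpace Ξ]
    [MeasurableSpace Ω] [MeasurableSpace Ω']
    (μ : Measure Ω) [IsProbabilityMeasure μ]
    (μ' : Measure Ω') [IsProbabilityMeasure μ']
    (Dq D0 : Set D)
    (q : D → Ξ → ℝ) (ξ : D → Ξ)
    (P : D) (hP : P ∈ Dq)
    (L : D →L[ℝ] ℝ)
    (hq : HadamardDiffFamily q Dq P (ξ P) D0 L)
    (hξ : ContinuousOn ξ Dq)
    (Phat : ℕ → Ω → D)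
    (hPhatDq : ∀ n ω, Phat n ω ∈ Dq)
    (hPhatMeas : ∀ n, Measurable (Phat n))
    (hdiffMeas : ∀ n : ℕ, Measurable fun ω => Real.sqrt n • (Phat n ω - P))
    (Z : Ω' → D) (hZmeas : Measurable Z) (hZD0 : ∀ ω', Z ω' ∈ D0)
    (hweak : ∀ f : BoundedContinuousFunction D ℝ,
      Tendsto (fun n : ℕ => ∫ ω, f (Real.sqrt n • (Phat n ω - P)) ∂μ) atTop
        (𝓝 (∫ ω', f (Z ω') ∂μ')))
    (hqMeas : ∀ n : ℕ, Measurable fun ω =>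
      Real.sqrt n * (q (Phat n ω) (ξ (Phat n ω)) - q P (ξ (Phat n ω)))) :
    ∀ f : BoundedContinuousFunction ℝ ℝ,
      Tendsto (fun n : ℕ => ∫ ω,
          f (Real.sqrt n * (q (Phat n ω) (ξ (Phat n ω)) - q P (ξ (Phat n ω)))) ∂μ) atTop
        (𝓝 (∫ ω', f (L (Z ω')) ∂μ')) := by
  -- Notation
  set Xn : ℕ → Ω → D := fun n ω => Real.sqrt n • (Phat n ω - P) with hXndef
  set Yn : ℕ → Ω → ℝ := fun n ω =>
    Real.sqrt n * (q (Phat n ω) (ξ (Phat n ω)) - q P (ξ (Phat n ω))) with hYndef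
  set g : ℕ → D → ℝ := fun n h =>
    Real.sqrt n * (q (P + (Real.sqrt n)⁻¹ • h) (ξ (P + (Real.sqrt n)⁻¹ • h))
      - q P (ξ (P + (Real.sqrt n)⁻¹ • h))) with hgdef
  set A : ℕ → Set D := fun n => {h | P + (Real.sqrt n)⁻¹ • h ∈ Dq} with hAdef
  have hsqrtpos : ∀ n : ℕ, 1 ≤ n → (0 : ℝ) < Real.sqrt n := by
    intro n hn
    exact Real.sqrt_pos.mpr (by exact_mod_cast Nat.lt_of_lt_of_le Nat.zero_lt_one hn)
  have hXA : ∀ n : ℕ, 1 ≤ n → ∀ ω, Xn n ω ∈ A n ∧ Yn n ω = g n (Xn n ω) := by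
    intro n hn ω
    have hs : (Real.sqrt n)⁻¹ • (Xn n ω) = Phat n ω - P := by
      rw [hXndef, smul_smul, inv_mul_cancel₀ (hsqrtpos n hn).ne', one_smul]
    have hPt : P + (Real.sqrt n)⁻¹ • (Xn n ω) = Phat n ω := by
      rw [hs]; abel
    constructor
    · show P + (Real.sqrt n)⁻¹ • (Xn n ω) ∈ Dq
      rw [hPt]; exact hPhatDq n ω
    · show Yn n ω = _
      rw [hgdef]; simp only [hPt]; rfl
  -- the sets in the diagonal argument
  set FK : Set ℝ → ℕ → Set D := fun F k =>
    closure (⋃ n : ℕ, ⋃ _ : k + 1 ≤ n, A n ∩ g n ⁻¹' F) with hFKdef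
  have hFKanti : ∀ F, Antitone (FK F) := by
    intro F k k' hkk'
    apply closure_mono
    refine Set.iUnion_mono fun n => Set.iUnion_subset fun hn => ?_
    exact Set.subset_iUnion_of_subset (by omega) subset_rfl
  -- deterministic key lemma
  have key : ∀ F : Set ℝ, IsClosed F → ∀ h : D, h ∈ D0 → (∀ k, h ∈ FK F k) → L h ∈ F := by
    intro F hF h hD0 hhk
    have hy : ∀ k : ℕ, ∃ y, (∃ m, k + 1 ≤ m ∧ y ∈ A m ∧ g m y ∈ F)
        ∧ dist h y < 1 / (k + 1) := by
      intro k
      obtain ⟨b, hb, hdist⟩ := Metric.mem_closure_iff.mp (hhk k) (1 / (k + 1)) (by positivity)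
      simp only [Set.mem_iUnion, Set.mem_inter_iff, Set.mem_preimage] at hb
      obtain ⟨m, hm, hbA, hbF⟩ := hb
      exact ⟨b, ⟨m, hm, hbA, hbF⟩, hdist⟩
    choose y hy hdist using hy
    choose m hm hyA hyF using hy
    set t : ℕ → ℝ := fun k => (Real.sqrt (m k))⁻¹ with htdef
    have hm1 : ∀ k, 1 ≤ m k := fun k => le_trans (by omega) (hm k)
    have htpos : ∀ k, 0 < Real.sqrt (m k) := fun k => hsqrtpos (m k) (hm1 k)
    have htne : ∀ k, t k ≠ 0 := fun k => inv_ne_zero (htpos k).ne'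
    have hmtop : Tendsto (fun k => (m k : ℝ)) atTop atTop := by
      apply tendsto_natCast_atTop_atTop.comp
      exact tendsto_atTop_mono (fun k => ((Nat.lt_succ_self k).le.trans (hm k))) tendsto_id
    have hsqrttop : Tendsto (fun k => Real.sqrt (m k)) atTop atTop := by
      refine (tendsto_atTop_atTop_of_monotone (fun a b hab => Real.sqrt_le_sqrt hab) ?_).comp hmtop
      intro b
      exact ⟨(max b 0) ^ 2, by rw [Real.sqrt_sq (le_max_right _ _)]; exact le_max_left _ _⟩
    have ht0 : Tendsto t atTop (𝓝 0) := hsqrttop.inv_tendsto_atTop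
    have hytend : Tendsto y atTop (𝓝 h) := by
      rw [tendsto_iff_dist_tendsto_zero]
      apply squeeze_zero (fun k => dist_nonneg) (fun k => (dist_comm (y k) h ▸ (hdist k).le))
      exact tendsto_one_div_add_atTop_nhds_zero_nat
    have hmem : ∀ k, P + t k • y k ∈ Dq := fun k => hyA k
    have hPtend : Tendsto (fun k => P + t k • y k) atTop (𝓝 P) := by
      have : Tendsto (fun k => t k • y k) atTop (𝓝 ((0 : ℝ) • h)) := ht0.smul hytend
      rw [zero_smul] at this
      simpa using tendsto_const_nhds.add this
    have hξtend : Tendsto (fun k => ξ (P + t k • y k)) atTop (𝓝 (ξ P)) := by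
      have hwithin : Tendsto (fun k => P + t k • y k) atTop (𝓝[Dq] P) :=
        tendsto_nhdsWithin_iff.mpr ⟨hPtend, Eventually.of_forall hmem⟩
      exact Filter.Tendsto.comp (hξ P hP) hwithin
    have hmain := hq (fun k => ξ (P + t k • y k)) t y h hξtend ht0 htne hytend hD0 hmem
    have heq : ∀ k, (q (P + t k • y k) (ξ (P + t k • y k)) - q P (ξ (P + t k • y k))) / t k
        = g (m k) (y k) := by
      intro k
      have ht : t k = (Real.sqrt (m k))⁻¹ := rfl
      rw [hgdef]
      simp only [ht, div_eq_mul_inv, inv_inv, mul_comm]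
    rw [show (fun k => (q (P + t k • y k) (ξ (P + t k • y k)) - q P (ξ (P + t k • y k))) / t k)
        = fun k => g (m k) (y k) from funext heq] at hmain
    exact hF.mem_of_tendsto hmain (Eventually.of_forall hyF)
  -- measurability
  have hXmeas : ∀ n, Measurable (Xn n) := hdiffMeas
  have hYmeas : ∀ n, Measurable (Yn n) := hqMeas
  have hLZmeas : Measurable fun ω' => L (Z ω') := L.continuous.measurable.comp hZmeas
  -- measures
  set lamn : ℕ → Measure D := fun n => μ.map (Xn n) with hlamndef
  set lam : Measure D := μ'.map Z with hlamdef
  set nun : ℕ → Measure ℝ := fun n => μ.map (Yn n) with hnundef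
  set nu : Measure ℝ := μ'.map (fun ω' => L (Z ω')) with hnudef
  haveI hlamnP : ∀ n, IsProbabilityMeasure (lamn n) :=
    fun n => Measure.isProbabilityMeasure_map (hXmeas n).aemeasurable
  haveI hlamP : IsProbabilityMeasure lam := Measure.isProbabilityMeasure_map hZmeas.aemeasurable
  haveI hnunP : ∀ n, IsProbabilityMeasure (nun n) :=
    fun n => Measure.isProbabilityMeasure_map (hYmeas n).aemeasurable
  haveI hnuP : IsProbabilityMeasure nu := Measure.isProbabilityMeasure_map hLZmeas.aemeasurable
  set Λn : ℕ → ProbabilityMeasure D := fun n => ⟨lamn n, hlamnP n⟩ with hΛndef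
  set Λ : ProbabilityMeasure D := ⟨lam, hlamP⟩ with hΛdef
  have hΛtendsto : Tendsto Λn atTop (𝓝 Λ) := by
    rw [ProbabilityMeasure.tendsto_iff_forall_integral_tendsto]
    intro f'
    have h1 : ∀ n, ∫ x, f' x ∂(Λn n : Measure D) = ∫ ω, f' (Xn n ω) ∂μ := fun n =>
      integral_map (hXmeas n).aemeasurable f'.continuous.measurable.aestronglyMeasurable
    have h2 : ∫ x, f' x ∂(Λ : Measure D) = ∫ ω', f' (Z ω') ∂μ' :=
      integral_map hZmeas.aemeasurable f'.continuous.measurable.aestronglyMeasurable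
    simp only [h1, h2]
    exact hweak f'
  have hclosedD : ∀ F : Set D, IsClosed F →
      atTop.limsup (fun n => lamn n F) ≤ lam F := fun F hF =>
    ProbabilityMeasure.limsup_measure_closed_le_of_tendsto hΛtendsto hF
  -- closed-set limsup bound in ℝ
  have hclosedR : ∀ F : Set ℝ, IsClosed F →
      atTop.limsup (fun n => nun n F) ≤ nu F := by
    intro F hF
    have step1 : ∀ k : ℕ, atTop.limsup (fun n => nun n F) ≤ lam (FK F k) := by
      intro k
      have hle : ∀ n, k + 1 ≤ n → nun n F ≤ lamn n (FK F k) := by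
        intro n hn
        rw [hnundef, hlamndef, Measure.map_apply (hYmeas n) hF.measurableSet,
          Measure.map_apply (hXmeas n) isClosed_closure.measurableSet]
        apply measure_mono
        intro ω hω
        apply subset_closure
        refine Set.mem_iUnion.mpr ⟨n, Set.mem_iUnion.mpr ⟨hn, ?_⟩⟩
        have h1n : 1 ≤ n := by omega
        refine ⟨(hXA n h1n ω).1, ?_⟩
        rw [Set.mem_preimage, ← (hXA n h1n ω).2]
        exact hω
      calc atTop.limsup (fun n => nun n F)
          ≤ atTop.limsup (fun n => lamn n (FK F k)) :=
            limsup_le_limsup (eventually_atTop.mpr ⟨k + 1, hle⟩)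
        _ ≤ lam (FK F k) := hclosedD _ isClosed_closure
    have hiInter : Tendsto (fun k => lam (FK F k)) atTop (𝓝 (lam (⋂ k, FK F k))) :=
      tendsto_measure_iInter_atTop
        (fun k => isClosed_closure.measurableSet.nullMeasurableSet)
        (hFKanti F) ⟨0, measure_ne_top _ _⟩
    have hlim : atTop.limsup (fun n => nun n F) ≤ lam (⋂ k, FK F k) :=
      ge_of_tendsto hiInter (Eventually.of_forall step1)
    refine hlim.trans ?_
    rw [hlamdef, hnudef, Measure.map_apply hZmeas
        (MeasurableSet.iInter fun k => isClosed_closure.measurableSet),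
      Measure.map_apply hLZmeas hF.measurableSet]
    apply measure_mono
    intro ω' hω'
    exact key F hF (Z ω') (hZD0 ω') (fun k => Set.mem_iInter.mp hω' k)
  have hopenR : ∀ G : Set ℝ, IsOpen G →
      nu G ≤ atTop.liminf (fun n => nun n G) := by
    intro G hG
    exact le_measure_liminf_of_limsup_measure_compl_le hG.measurableSet
      (hclosedR Gᶜ (isClosed_compl_iff.mpr hG))
  set Nn : ℕ → ProbabilityMeasure ℝ := fun n => ⟨nun n, hnunP n⟩ with hNndef
  set N : ProbabilityMeasure ℝ := ⟨nu, hnuP⟩ with hNdef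
  have hNtendsto : Tendsto Nn atTop (𝓝 N) := by
    apply tendsto_of_forall_isOpen_le_liminf
    intro G hG
    have hbase := hopenR G hG
    have aux : (ENNReal.ofNNReal (atTop.liminf fun n => Nn n G)) =
        atTop.liminf (fun n => ENNReal.ofNNReal (Nn n G)) := by
      refine Monotone.map_liminf_of_continuousAt (F := atTop) ENNReal.coe_mono
        (fun n => Nn n G) ?_ ?_ ?_
      · exact ENNReal.continuous_coe.continuousAt
      · exact IsBoundedUnder.isCoboundedUnder_ge ⟨1, by simp⟩
      · exact ⟨0, by simp⟩
    rw [← ENNReal.coe_le_coe, aux]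
    simp only [ProbabilityMeasure.ennreal_coeFn_eq_coeFn_toMeasure]
    exact hbase
  intro f
  have h1 : ∀ n, ∫ x, f x ∂(Nn n : Measure ℝ) = ∫ ω, f (Yn n ω) ∂μ := fun n =>
    integral_map (hYmeas n).aemeasurable f.continuous.measurable.aestronglyMeasurable
  have h2 : ∫ x, f x ∂(N : Measure ℝ) = ∫ ω', f (L (Z ω')) ∂μ' :=
    integral_map hLZmeas.aemeasurable f.continuous.measurable.aestronglyMeasurable
  have := ProbabilityMeasure.tendsto_iff_forall_integral_tendsto.mp hNtendsto f
  rw [h2] at this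
  simp only [h1] at this
  exact this
end

section
/- Fix −∞ < u < v < ∞ and β ∈ ℝ. Let θ : [u,v] → ℝ be nondecreasing, differentiable on [u,v] with continuous, bounded, strictly positive derivative θ', and suppose there is ξ ∈ (u,v] with θ(ξ−) ≤ β ≤ θ(ξ); set φ(F) = inf{x ∈ [u,v] : F(x) ≥ β} for any nondecreasing bounded F : [u,v] → ℝ crossing β. Then for every sequence (θ_n) of nondecreasing functions on [u,v] crossing β, each differentiable on [u,v] with derivative θ_n', such that sup_{[u,v]} |θ_n − θ| → 0 and sup_{[u,v]} |θ_n' − θ'| → 0; every real sequence t_n → 0 with t_n ≠ 0; and every sequence (h_n) of bounded functions on [u,v] with sup_{[u,v]} |h_n − h| → 0 for some continuous h : [u,v] → ℝ, such that θ_n + t_n h_n is nondecreasing and crosses β for every n, one has (φ(θ_n + t_n h_n) − φ(θ_n))/t_n → −h(ξ)/θ'(ξ). -/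
open Filter Topology

/-- Uniform Hadamard differentiability of the first-crossing (inverse) map
`φ(F) = inf{x ∈ [u,v] : F(x) ≥ β}` at a nondecreasing differentiable `θ` with
continuous bounded positive derivative, crossing `β` at `ξ`:
for nondecreasing `θ_n` crossing `β` with `θ_n → θ` and `θ_n' → θ'` uniformly on `[u,v]`,
`t_n → 0`, `t_n ≠ 0`, bounded `h_n → h` uniformly with `h` continuous, and
`θ_n + t_n h_n` nondecreasing and crossing `β`, one has
`(φ(θ_n + t_n h_n) − φ(θ_n))/t_n → −h(ξ)/θ'(ξ)`. -/
theorem stmt2 (u v β : ℝ) (huv : u < v)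
    (θ θ' : ℝ → ℝ)
    (hmono : MonotoneOn θ (Set.Icc u v))
    (hderiv : ∀ x ∈ Set.Icc u v, HasDerivWithinAt θ (θ' x) (Set.Icc u v) x)
    (hcont : ContinuousOn θ' (Set.Icc u v))
    (hbdd : ∃ C, ∀ x ∈ Set.Icc u v, θ' x ≤ C)
    (hpos : ∀ x ∈ Set.Icc u v, 0 < θ' x)
    (ξ : ℝ) (hξmem : ξ ∈ Set.Ioc u v)
    (hξcross : Function.leftLim θ ξ ≤ β ∧ β ≤ θ ξ)
    (θn : ℕ → ℝ → ℝ) (θn' : ℕ → ℝ → ℝ)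
    (hθnmono : ∀ n, MonotoneOn (θn n) (Set.Icc u v))
    (hθncross : ∀ n, ∃ x ∈ Set.Ioc u v, Function.leftLim (θn n) x ≤ β ∧ β ≤ θn n x)
    (hθnderiv : ∀ n, ∀ x ∈ Set.Icc u v, HasDerivWithinAt (θn n) (θn' n x) (Set.Icc u v) x)
    (hθnconv : TendstoUniformlyOn θn θ atTop (Set.Icc u v))
    (hθn'conv : TendstoUniformlyOn θn' θ' atTop (Set.Icc u v))
    (tn : ℕ → ℝ) (htn : Tendsto tn atTop (𝓝 0)) (htn0 : ∀ n, tn n ≠ 0)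
    (hn : ℕ → ℝ → ℝ) (h : ℝ → ℝ)
    (hhnbdd : ∀ n, ∃ C, ∀ x ∈ Set.Icc u v, |hn n x| ≤ C)
    (hhcont : ContinuousOn h (Set.Icc u v))
    (hhconv : TendstoUniformlyOn hn h atTop (Set.Icc u v))
    (hsummono : ∀ n, MonotoneOn (fun x => θn n x + tn n * hn n x) (Set.Icc u v))
    (hsumcross : ∀ n, ∃ x ∈ Set.Ioc u v,
      Function.leftLim (fun y => θn n y + tn n * hn n y) x ≤ β ∧
        β ≤ θn n x + tn n * hn n x) :
    Tendsto (fun n =>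
        (sInf {x | x ∈ Set.Icc u v ∧ β ≤ θn n x + tn n * hn n x} -
          sInf {x | x ∈ Set.Icc u v ∧ β ≤ θn n x}) / tn n)
      atTop (𝓝 (-h ξ / θ' ξ)) := by
  have hξI : ξ ∈ Set.Icc u v := Set.Ioc_subset_Icc_self hξmem
  -- continuity of θ and θn
  have hθcont : ContinuousOn θ (Set.Icc u v) := fun x hx => (hderiv x hx).continuousWithinAt
  have hθncont : ∀ n, ContinuousOn (θn n) (Set.Icc u v) :=
    fun n x hx => (hθnderiv n x hx).continuousWithinAt
  -- left limits of continuous functions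
  have hleftLim : ∀ (F : ℝ → ℝ), ContinuousOn F (Set.Icc u v) → ∀ x₀ ∈ Set.Ioc u v,
      Function.leftLim F x₀ = F x₀ := by
    intro F hF x₀ hx₀
    have hx₀I : x₀ ∈ Set.Icc u v := Set.Ioc_subset_Icc_self hx₀
    have h1 : Tendsto F (𝓝[<] x₀) (𝓝 (F x₀)) := by
      refine (hF x₀ hx₀I).tendsto.mono_left ?_
      rw [← nhdsWithin_Ioo_eq_nhdsLT hx₀.1]
      exact nhdsWithin_mono _ (fun y hy => ⟨hy.1.le, hy.2.le.trans hx₀.2⟩)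
    exact leftLim_eq_of_tendsto h1
  have hθξ : θ ξ = β :=
    le_antisymm (by rw [← hleftLim θ hθcont ξ hξmem]; exact hξcross.1) hξcross.2
  have hθsm : StrictMonoOn θ (Set.Icc u v) :=
    strictMonoOn_of_hasDerivWithinAt_pos (convex_Icc u v) hθcont
      (fun x hx => ((hderiv x (interior_subset hx)).mono interior_subset))
      (fun x hx => hpos x (interior_subset hx))
  -- the two first-crossing sequences
  set a : ℕ → ℝ := fun n => sInf {x | x ∈ Set.Icc u v ∧ β ≤ θn n x} with hadef
  set b : ℕ → ℝ := fun n => sInf {x | x ∈ Set.Icc u v ∧ β ≤ θn n x + tn n * hn n x} with hbdef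
  -- properties of a
  have hSa : ∀ n, a n ∈ Set.Icc u v ∧ θn n (a n) = β := by
    intro n
    obtain ⟨x₀, hx₀, hl, hr⟩ := hθncross n
    have hx₀I : x₀ ∈ Set.Icc u v := Set.Ioc_subset_Icc_self hx₀
    have hx₀S : x₀ ∈ {x | x ∈ Set.Icc u v ∧ β ≤ θn n x} := ⟨hx₀I, hr⟩
    have hne : Set.Nonempty {x | x ∈ Set.Icc u v ∧ β ≤ θn n x} := ⟨x₀, hx₀S⟩
    have hbb : BddBelow {x | x ∈ Set.Icc u v ∧ β ≤ θn n x} := ⟨u, fun y hy => hy.1.1⟩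
    have hclosed : IsClosed {x | x ∈ Set.Icc u v ∧ β ≤ θn n x} :=
      (hθncont n).preimage_isClosed_of_isClosed isClosed_Icc isClosed_Ici
    have hmem := hclosed.csInf_mem hne hbb
    have hx₀β : θn n x₀ = β :=
      le_antisymm (by rw [← hleftLim _ (hθncont n) x₀ hx₀]; exact hl) hr
    refine ⟨hmem.1, le_antisymm ?_ hmem.2⟩
    calc θn n (a n) ≤ θn n x₀ := hθnmono n hmem.1 hx₀I (csInf_le hbb hx₀S)
      _ = β := hx₀β
  have haI : ∀ n, a n ∈ Set.Icc u v := fun n => (hSa n).1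
  have haβ : ∀ n, θn n (a n) = β := fun n => (hSa n).2
  -- properties of b
  have hSbbdd : ∀ n, BddBelow {x | x ∈ Set.Icc u v ∧ β ≤ θn n x + tn n * hn n x} :=
    fun n => ⟨u, fun y hy => hy.1.1⟩
  have hSbne : ∀ n, ∃ x₁ ∈ Set.Ioc u v,
      x₁ ∈ {x | x ∈ Set.Icc u v ∧ β ≤ θn n x + tn n * hn n x} := by
    intro n
    obtain ⟨x₁, hx₁, _, hr⟩ := hsumcross n
    exact ⟨x₁, hx₁, ⟨Set.Ioc_subset_Icc_self hx₁, hr⟩⟩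
  have hbI : ∀ n, b n ∈ Set.Icc u v := by
    intro n
    obtain ⟨x₁, hx₁, hx₁S⟩ := hSbne n
    refine ⟨le_csInf ⟨x₁, hx₁S⟩ (fun y hy => hy.1.1), le_trans (csInf_le (hSbbdd n) hx₁S) hx₁.2⟩
  have hblt : ∀ n, ∀ x ∈ Set.Icc u v, x < b n → θn n x + tn n * hn n x < β := by
    intro n x hx hlt
    by_contra hc
    push_neg at hc
    exact absurd (csInf_le (hSbbdd n) ⟨hx, hc⟩) (not_le.2 hlt)
  have hbgt : ∀ n, ∀ x ∈ Set.Icc u v, b n < x → β ≤ θn n x + tn n * hn n x := by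
    intro n x hx hlt
    obtain ⟨x₁, _, hx₁S⟩ := hSbne n
    obtain ⟨y, hyS, hyx⟩ := exists_lt_of_csInf_lt ⟨x₁, hx₁S⟩ hlt
    exact hyS.2.trans (hsummono n hyS.1 hx hyx.le)
  have hbv : ∀ n, b n = v → β ≤ θn n v + tn n * hn n v := by
    intro n hv
    obtain ⟨x₁, hx₁, hx₁S⟩ := hSbne n
    have h1 : b n ≤ x₁ := csInf_le (hSbbdd n) hx₁S
    have h2 : x₁ = v := le_antisymm hx₁.2 (hv ▸ h1)
    rw [← h2]; exact hx₁S.2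
  -- the convergence criterion
  have hconvcrit : ∀ (c : ℕ → ℝ), (∀ n, c n ∈ Set.Icc u v) →
      (∀ η > (0:ℝ), ∀ᶠ n in atTop,
        (∀ x ∈ Set.Icc u v, x < c n → θ x ≤ β + η) ∧
        (∀ x ∈ Set.Icc u v, c n < x → β - η ≤ θ x)) →
      Tendsto c atTop (𝓝 ξ) := by
    intro c hcI hc
    rw [Metric.tendsto_nhds]
    intro δ hδ
    have hub : ∀ᶠ n in atTop, c n < ξ + δ := by
      rcases le_or_gt (ξ + δ/2) v with hcase | hcase
      · have hxI : ξ + δ/2 ∈ Set.Icc u v := ⟨by linarith [hξmem.1], hcase⟩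
        have hgt : β < θ (ξ + δ/2) := by
          rw [← hθξ]; exact hθsm hξI hxI (by linarith)
        have hη : (0:ℝ) < (θ (ξ + δ/2) - β)/2 := by linarith
        filter_upwards [hc _ hη] with n hnc
        by_contra hcn
        push_neg at hcn
        have := hnc.1 (ξ + δ/2) hxI (by linarith)
        linarith
      · filter_upwards with n
        have := (hcI n).2
        linarith
    have hlb : ∀ᶠ n in atTop, ξ - δ < c n := by
      rcases le_or_gt u (ξ - δ) with hcase | hcase
      · have hxI : ξ - δ/2 ∈ Set.Icc u v := ⟨by linarith, by linarith [hξmem.2]⟩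
        have hlt : θ (ξ - δ/2) < β := by
          rw [← hθξ]; exact hθsm hxI hξI (by linarith)
        have hη : (0:ℝ) < (β - θ (ξ - δ/2))/2 := by linarith
        filter_upwards [hc _ hη] with n hnc
        by_contra hcn
        push_neg at hcn
        have := hnc.2 (ξ - δ/2) hxI (by linarith)
        linarith
      · filter_upwards with n
        have := (hcI n).1
        linarith
    filter_upwards [hub, hlb] with n h1 h2
    rw [Real.dist_eq, abs_lt]
    constructor <;> linarith
  -- convergence of a
  have haconv : Tendsto a atTop (𝓝 ξ) := by
    refine hconvcrit a haI ?_
    intro η hη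
    filter_upwards [Metric.tendstoUniformlyOn_iff.1 hθnconv η hη] with n hnu
    constructor
    · intro x hx hlt
      have h1 : θn n x ≤ β := by rw [← haβ n]; exact hθnmono n hx (haI n) hlt.le
      have h2 := hnu x hx
      rw [Real.dist_eq] at h2
      have h3 : θ x - θn n x < η := lt_of_le_of_lt (le_abs_self _) h2
      linarith
    · intro x hx hlt
      have h1 : β ≤ θn n x := by rw [← haβ n]; exact hθnmono n (haI n) hx hlt.le
      have h2 := hnu x hx
      rw [Real.dist_eq] at h2
      have h3 : θn n x - θ x < η := (abs_sub_lt_iff.1 h2).2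
      linarith
  -- a bound for h
  obtain ⟨M, hM⟩ : ∃ M, ∀ x ∈ Set.Icc u v, |h x| ≤ M := by
    obtain ⟨M, hM⟩ := isCompact_Icc.exists_bound_of_continuousOn hhcont
    exact ⟨M, fun x hx => by simpa [Real.norm_eq_abs] using hM x hx⟩
  have hMnn : 0 ≤ M := le_trans (abs_nonneg _) (hM ξ hξI)
  -- convergence of b
  have hbconv : Tendsto b atTop (𝓝 ξ) := by
    refine hconvcrit b hbI ?_
    intro η hη
    have E1 := Metric.tendstoUniformlyOn_iff.1 hθnconv (η/2) (by linarith)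
    have E2 := Metric.tendstoUniformlyOn_iff.1 hhconv 1 one_pos
    have E3 : ∀ᶠ n in atTop, |tn n| * (M + 1) < η/2 := by
      have h0 : Tendsto (fun n => |tn n| * (M + 1)) atTop (𝓝 0) := by
        simpa using htn.abs.mul_const (M + 1)
      exact h0.eventually (eventually_lt_nhds (by linarith))
    filter_upwards [E1, E2, E3] with n h1 h2 h3
    have key : ∀ x ∈ Set.Icc u v, |tn n * hn n x| ≤ |tn n| * (M + 1) := by
      intro x hx
      have e1 : |h x - hn n x| < 1 := by
        have := h2 x hx; rwa [Real.dist_eq] at this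
      have e2 : |hn n x| ≤ M + 1 := by
        have e3 : |hn n x| - |h x| ≤ |hn n x - h x| := abs_sub_abs_le_abs_sub _ _
        rw [abs_sub_comm] at e3
        have := hM x hx
        linarith
      rw [abs_mul]
      exact mul_le_mul_of_nonneg_left e2 (abs_nonneg _)
    constructor
    · intro x hx hlt
      have hG := hblt n x hx hlt
      have hk := key x hx
      have hd := h1 x hx
      rw [Real.dist_eq] at hd
      have h4 : θ x - θn n x < η/2 := lt_of_le_of_lt (le_abs_self _) hd
      have h5 : -(tn n * hn n x) ≤ |tn n| * (M + 1) := le_trans (neg_le_abs _) hk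
      linarith
    · intro x hx hlt
      have hG := hbgt n x hx hlt
      have hk := key x hx
      have hd := h1 x hx
      rw [Real.dist_eq] at hd
      have h4 : θn n x - θ x < η/2 := (abs_sub_lt_iff.1 hd).2
      have h6 : tn n * hn n x ≤ |tn n| * (M + 1) := le_trans (le_abs_self _) hk
      linarith
  -- mean value theorem: choice of intermediate points
  have hMVT : ∀ n, ∃ c, c ∈ Set.Icc u v ∧ min (a n) (b n) ≤ c ∧ c ≤ max (a n) (b n) ∧
      θn n (b n) - θn n (a n) = θn' n c * (b n - a n) := by
    intro n
    have key : ∀ p q : ℝ, p ∈ Set.Icc u v → q ∈ Set.Icc u v → p < q →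
        ∃ c ∈ Set.Icc p q, θn n q - θn n p = θn' n c * (q - p) := by
      intro p q hp hq hpq
      have hsub : Set.Icc p q ⊆ Set.Icc u v := Set.Icc_subset_Icc hp.1 hq.2
      have hc : ContinuousOn (θn n) (Set.Icc p q) := (hθncont n).mono hsub
      have hd : ∀ x ∈ Set.Ioo p q, HasDerivAt (θn n) (θn' n x) x := by
        intro x hx
        have hxI : x ∈ Set.Ioo u v := ⟨lt_of_le_of_lt hp.1 hx.1, lt_of_lt_of_le hx.2 hq.2⟩
        exact (hθnderiv n x (Set.Ioo_subset_Icc_self hxI)).hasDerivAt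
          (Icc_mem_nhds hxI.1 hxI.2)
      obtain ⟨c, hc1, hc2⟩ := exists_hasDerivAt_eq_slope (θn n) (θn' n) hpq hc hd
      refine ⟨c, Set.Ioo_subset_Icc_self hc1, ?_⟩
      rw [hc2, div_mul_cancel₀ _ (sub_ne_zero.2 hpq.ne')]
    rcases lt_trichotomy (a n) (b n) with hab | hab | hab
    · obtain ⟨c, hcI, hceq⟩ := key (a n) (b n) (haI n) (hbI n) hab
      exact ⟨c, Set.Icc_subset_Icc (haI n).1 (hbI n).2 hcI,
        le_trans (min_le_left _ _) hcI.1, le_trans hcI.2 (le_max_right _ _), hceq⟩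
    · exact ⟨a n, haI n, le_trans (min_le_left _ _) le_rfl, le_max_left _ _,
        by rw [hab]; ring⟩
    · obtain ⟨c, hcI, hceq⟩ := key (b n) (a n) (hbI n) (haI n) hab
      refine ⟨c, Set.Icc_subset_Icc (hbI n).1 (haI n).2 hcI,
        le_trans (min_le_right _ _) hcI.1, le_trans hcI.2 (le_max_left _ _), by linarith [hceq]⟩
  choose c hcI hc1 hc2 hceq using hMVT
  have hcconv : Tendsto c atTop (𝓝 ξ) := by
    have h1 : Tendsto (fun n => min (a n) (b n)) atTop (𝓝 ξ) := by
      simpa using haconv.min hbconv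
    have h2 : Tendsto (fun n => max (a n) (b n)) atTop (𝓝 ξ) := by
      simpa using haconv.max hbconv
    exact tendsto_of_tendsto_of_tendsto_of_le_of_le h1 h2 hc1 hc2
  have hθ'c : Tendsto (fun n => θn' n (c n)) atTop (𝓝 (θ' ξ)) :=
    hθn'conv.tendsto_comp (hcont ξ hξI)
      (tendsto_nhdsWithin_iff.2 ⟨hcconv, Eventually.of_forall hcI⟩)
  have hhb : Tendsto (fun n => h (b n)) atTop (𝓝 (h ξ)) :=
    (hhcont ξ hξI).tendsto.comp
      (tendsto_nhdsWithin_iff.2 ⟨hbconv, Eventually.of_forall hbI⟩)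
  have hθ'ξpos : 0 < θ' ξ := hpos ξ hξI
  -- the error term
  set e : ℕ → ℝ := fun n => (θn n (b n) + tn n * h (b n) - β) / tn n with hedef
  have he : Tendsto e atTop (𝓝 0) := by
    rw [Metric.tendsto_nhds]
    intro ε hε
    have E2 := Metric.tendstoUniformlyOn_iff.1 hhconv (ε/2) (by linarith)
    have E4 : ∀ᶠ n in atTop, u < b n := hbconv.eventually (eventually_gt_nhds hξmem.1)
    filter_upwards [E2, E4] with n h2 h4
    have hbn : b n ∈ Set.Icc u v := hbI n
    have hbnI : b n ∈ Set.Icc u v := hbn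
    -- uniform bound on |tn (h - hn)|
    have hkey : ∀ x ∈ Set.Icc u v, |tn n * (h x - hn n x)| ≤ |tn n| * (ε/2) := by
      intro x hx
      have e1 : |h x - hn n x| < ε/2 := by
        have := h2 x hx; rwa [Real.dist_eq] at this
      rw [abs_mul]
      exact mul_le_mul_of_nonneg_left e1.le (abs_nonneg _)
    have hFcont : ContinuousOn (fun x => θn n x + tn n * h x) (Set.Icc u v) :=
      (hθncont n).add (continuousOn_const.mul hhcont)
    have hup : θn n (b n) + tn n * h (b n) ≤ β + |tn n| * (ε/2) := by
      have htend : Tendsto (fun x => θn n x + tn n * h x) (𝓝[<] b n)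
          (𝓝 (θn n (b n) + tn n * h (b n))) := by
        refine (hFcont (b n) hbnI).tendsto.mono_left ?_
        rw [← nhdsWithin_Ioo_eq_nhdsLT h4]
        exact nhdsWithin_mono _ (fun y hy => ⟨hy.1.le, hy.2.le.trans hbn.2⟩)
      refine le_of_tendsto htend ?_
      filter_upwards [Ioo_mem_nhdsLT_of_mem (⟨h4, le_refl (b n)⟩ : b n ∈ Set.Ioc u (b n))]
        with x hx
      have hxI : x ∈ Set.Icc u v := ⟨hx.1.le, hx.2.le.trans hbn.2⟩
      have hG := hblt n x hxI hx.2
      have hk := hkey x hxI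
      have h5 : tn n * (h x - hn n x) ≤ |tn n| * (ε/2) := le_trans (le_abs_self _) hk
      linarith
    have hlow : β - |tn n| * (ε/2) ≤ θn n (b n) + tn n * h (b n) := by
      rcases lt_or_eq_of_le hbn.2 with hv | hv
      · have htend : Tendsto (fun x => θn n x + tn n * h x) (𝓝[>] b n)
            (𝓝 (θn n (b n) + tn n * h (b n))) := by
          refine (hFcont (b n) hbnI).tendsto.mono_left ?_
          rw [← nhdsWithin_Ioo_eq_nhdsGT hv]
          exact nhdsWithin_mono _ (fun y hy => ⟨hbn.1.trans hy.1.le, hy.2.le⟩)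
        refine ge_of_tendsto htend ?_
        filter_upwards [Ioo_mem_nhdsGT_of_mem (⟨le_refl (b n), hv⟩ : b n ∈ Set.Ico (b n) v)]
          with x hx
        have hxI : x ∈ Set.Icc u v := ⟨hbn.1.trans hx.1.le, hx.2.le⟩
        have hG := hbgt n x hxI hx.1
        have hk := hkey x hxI
        have h5 : -(tn n * (h x - hn n x)) ≤ |tn n| * (ε/2) := le_trans (neg_le_abs _) hk
        linarith
      · have hG := hbv n hv
        have hk := hkey (b n) hbnI
        have h5 : -(tn n * (h (b n) - hn n (b n))) ≤ |tn n| * (ε/2) := le_trans (neg_le_abs _) hk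
        rw [hv] at h5 ⊢
        linarith
    have habs : |θn n (b n) + tn n * h (b n) - β| ≤ |tn n| * (ε/2) :=
      abs_le.2 ⟨by linarith, by linarith⟩
    rw [Real.dist_eq, sub_zero, hedef]
    have htnpos : 0 < |tn n| := abs_pos.2 (htn0 n)
    calc |(θn n (b n) + tn n * h (b n) - β) / tn n|
        = |θn n (b n) + tn n * h (b n) - β| / |tn n| := abs_div _ _
      _ ≤ (|tn n| * (ε/2)) / |tn n| := (div_le_div_iff_of_pos_right htnpos).2 habs
      _ = ε/2 := mul_div_cancel_left₀ _ htnpos.ne'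
      _ < ε := by linarith
  -- final assembly
  have hne : ∀ᶠ n in atTop, θn' n (c n) ≠ 0 := by
    filter_upwards [hθ'c.eventually (eventually_gt_nhds (half_lt_self hθ'ξpos))] with n hn0
    have : (0:ℝ) < θ' ξ / 2 := by linarith
    linarith [hn0]
  have hfinal : Tendsto (fun n => (-h (b n) + e n) / θn' n (c n)) atTop
      (𝓝 ((-h ξ + 0) / θ' ξ)) :=
    Tendsto.div (hhb.neg.add he) hθ'c hθ'ξpos.ne'
  rw [add_zero] at hfinal
  refine hfinal.congr' ?_
  filter_upwards [hne] with n hn0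
  have h1 : θn n (b n) - θn n (a n) = θn' n (c n) * (b n - a n) := hceq n
  have h2 : θn n (a n) = β := haβ n
  have h3 : e n * tn n = θn n (b n) + tn n * h (b n) - β := by
    simp only [hedef]
    exact div_mul_cancel₀ _ (htn0 n)
  show (-h (b n) + e n) / θn' n (c n) = (b n - a n) / tn n
  rw [div_eq_div_iff hn0 (htn0 n)]
  linear_combination h3 + h1 + h2
end

section
/- Fix T ∈ ℕ, T ≥ 1. For a cumulative distribution function G on ℝ, define φ(G)(c) = ∫_{ℝ^T} 1(m(y) ≥ c) dG(y_1)⋯dG(y_T) for c ∈ ℝ. Let F be a cumulative distribution function on ℝ, and for H ∈ D_0 define φ'(F)(H)(c) = −∑_{i=1}^T ∫_ℝ H(z) dλ_{i,c}(z), where λ_{i,c} is the Lebesgue–Stieltjes measure of the nondecreasing bounded function z ↦ ∫_{ℝ^{T−1}} 1(m(y_1,…,y_{i−1},z,y_{i+1},…,y_T) ≥ c) ∏_{j≠i} dF(y_j). Then for every sequence of cumulative distribution functions F_n with sup_ℝ |F_n − F| → 0, every real sequence t_n → 0 with t_n ≠ 0, and every sequence of functions H_n with sup_ℝ |H_n −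 H| → 0 for some H ∈ D_0, such that F_n + t_n H_n is a cumulative distribution function for every n, one has sup_{c ∈ ℝ} |(φ(F_n + t_n H_n)(c) − φ(F_n)(c))/t_n − φ'(F)(H)(c)| → 0 as n → ∞. -/
open MeasureTheory Filter Topology Finset

/-- Partial sum `S_k(y) = ∑_{j=1}^k y_j` (0-indexed vector `y`). -/
noncomputable def cS {T : ℕ} (y : Fin T → ℝ) (k : ℕ) : ℝ :=
  ∑ j ∈ Finset.univ.filter (fun j : Fin T => (j : ℕ) < k), y j

/-- `R_i(y) = S_i(y) − min_{0≤k≤i} S_k(y)`. -/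
noncomputable def cR {T : ℕ} (y : Fin T → ℝ) (i : ℕ) : ℝ :=
  cS y i - (Finset.range (i + 1)).inf'
    (Finset.nonempty_range_iff.mpr (Nat.succ_ne_zero i)) (cS y)

/-- `m(y) = max_{1≤i≤T} R_i(y)`. -/
noncomputable def cM {T : ℕ} (hT : 1 ≤ T) (y : Fin T → ℝ) : ℝ :=
  (Finset.Icc 1 T).sup' (Finset.nonempty_Icc.mpr hT) (cR y)

/-- `F` is a cumulative distribution function on `ℝ`. -/
def IsCDF (F : ℝ → ℝ) : Prop :=
  Monotone F ∧ (∀ x, ContinuousWithinAt F (Set.Ici x) x) ∧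
  Filter.Tendsto F Filter.atBot (𝓝 0) ∧ Filter.Tendsto F Filter.atTop (𝓝 1)

/-- The Lebesgue–Stieltjes (probability) measure associated with a cdf. -/
noncomputable def cdfMeasure (F : ℝ → ℝ) (h1 : Monotone F)
    (h2 : ∀ x, ContinuousWithinAt F (Set.Ici x) x) : Measure ℝ :=
  StieltjesFunction.measure ⟨F, h1, h2⟩

/-- `φ(G)(c) = ∫ 1(m(y) ≥ c) dG(y_1)⋯dG(y_T)`. -/
noncomputable def hitProb (T : ℕ) (hT : 1 ≤ T) (G : ℝ → ℝ) (hG : IsCDF G) (c : ℝ) : ℝ :=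
  ((Measure.pi fun _ : Fin T => cdfMeasure G hG.1 hG.2.1) {y | c ≤ cM hT y}).toReal

namespace Stmt3Aux

open Set
open scoped ENNReal

/-- closed upper sets -/
def Good {d : ℕ} (s : Set (Fin d → ℝ)) : Prop :=
  IsClosed s ∧ ∀ ⦃y y' : Fin d → ℝ⦄, y ≤ y' → y ∈ s → y' ∈ s

lemma cS_continuous {T : ℕ} (k : ℕ) : Continuous fun y : Fin T → ℝ => cS y k := by
  unfold cS
  exact continuous_finset_sum _ fun j _ => continuous_apply j

lemma cR_continuous {T : ℕ} (i : ℕ) : Continuous fun y : Fin T → ℝ => cR y i := by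
  unfold cR
  apply Continuous.sub (cS_continuous i)
  apply Continuous.finset_inf'_apply
  intro k _
  exact cS_continuous k

lemma cM_continuous {T : ℕ} (hT : 1 ≤ T) : Continuous (cM hT) := by
  unfold cM
  apply Continuous.finset_sup'_apply
  intro i _
  exact cR_continuous i

lemma cS_mono {T : ℕ} {y y' : Fin T → ℝ} (h : y ≤ y') (i k : ℕ) (hki : k ≤ i) :
    cS y i - cS y k ≤ cS y' i - cS y' k := by
  have hdisj : Disjoint (Finset.univ.filter (fun j : Fin T => k ≤ (j : ℕ) ∧ (j : ℕ) < i))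
      (Finset.univ.filter (fun j : Fin T => (j : ℕ) < k)) := by
    rw [Finset.disjoint_left]
    intro j hj hj'
    simp only [Finset.mem_filter, Finset.mem_univ, true_and] at hj hj'
    omega
  have hsplit : ∀ z : Fin T → ℝ, cS z i =
      (∑ j ∈ Finset.univ.filter (fun j : Fin T => k ≤ (j : ℕ) ∧ (j : ℕ) < i), z j) + cS z k := by
    intro z
    unfold cS
    rw [← Finset.sum_union hdisj]
    congr 1
    ext j
    simp only [Finset.mem_union, Finset.mem_filter, Finset.mem_univ, true_and]
    omega
  have hle := Finset.sum_le_sum (f := y)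
    (g := y') (s := Finset.univ.filter (fun j : Fin T => k ≤ (j : ℕ) ∧ (j : ℕ) < i))
    (fun j _ => h j)
  rw [hsplit y, hsplit y']
  linarith

lemma cM_mono {T : ℕ} (hT : 1 ≤ T) : Monotone (cM hT) := by
  intro y y' h
  unfold cM
  apply Finset.sup'_le
  intro i hi
  obtain ⟨k, hk, hkeq⟩ := Finset.exists_mem_eq_inf' (Finset.nonempty_range_iff.mpr (Nat.succ_ne_zero i)) (cS y)
  have hki : k ≤ i := Nat.lt_succ_iff.mp (Finset.mem_range.mp hk)
  have h1 : (Finset.range (i + 1)).inf'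
      (Finset.nonempty_range_iff.mpr (Nat.succ_ne_zero i)) (cS y') ≤ cS y' k :=
    Finset.inf'_le (cS y') hk
  have h2 := cS_mono h i k hki
  calc cR y i = cS y i - cS y k := by rw [cR, hkeq]
    _ ≤ cS y' i - cS y' k := h2
    _ ≤ cR y' i := by rw [cR]; linarith
    _ ≤ _ := Finset.le_sup' (cR y') hi

lemma good_cM {T : ℕ} (hT : 1 ≤ T) (c : ℝ) : Good {y | c ≤ cM hT y} := by
  constructor
  · exact isClosed_le continuous_const (cM_continuous hT)
  · intro y y' h hy
    exact le_trans hy (cM_mono hT h)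


variable {d : ℕ}

lemma insertNth_le_insertNth {i : Fin (d + 1)} {z z' : ℝ} {w w' : Fin d → ℝ}
    (hz : z ≤ z') (hw : w ≤ w') :
    (i.insertNth z w : Fin (d + 1) → ℝ) ≤ i.insertNth z' w' := by
  rw [Fin.insertNth_le_iff]
  constructor
  · rw [Fin.insertNth_apply_same]; exact hz
  · intro j
    dsimp only
    rw [Fin.insertNth_apply_succAbove]
    exact hw j

/-- section of a set at slot `i`, value `z` -/
def sec (i : Fin (d + 1)) (s : Set (Fin (d + 1) → ℝ)) (z : ℝ) : Set (Fin d → ℝ) :=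
  {w | i.insertNth z w ∈ s}

lemma good_sec {i : Fin (d + 1)} {s : Set (Fin (d + 1) → ℝ)} (hs : Good s) (z : ℝ) :
    Good (sec i s z) := by
  constructor
  · exact hs.1.preimage (Continuous.finInsertNth i continuous_const continuous_id)
  · intro w w' hww' hw
    exact hs.2 (insertNth_le_insertNth le_rfl hww') hw

lemma sec_mono {i : Fin (d + 1)} {s : Set (Fin (d + 1) → ℝ)} (hs : Good s) {z z' : ℝ}
    (h : z ≤ z') : sec i s z ⊆ sec i s z' := by
  intro w hw
  exact hs.2 (insertNth_le_insertNth h le_rfl) hw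

lemma measurableSet_sec {i : Fin (d + 1)} {s : Set (Fin (d + 1) → ℝ)} (hs : Good s) (z : ℝ) :
    MeasurableSet (sec i s z) := (good_sec hs z).1.measurableSet

/-- the section function `z ↦ ρ(sec i s z)` -/
noncomputable def secFun (ρ : Measure (Fin d → ℝ)) (i : Fin (d + 1)) (s : Set (Fin (d + 1) → ℝ))
    (z : ℝ) : ℝ := (ρ (sec i s z)).toReal

lemma secFun_nonneg (ρ : Measure (Fin d → ℝ)) (i : Fin (d + 1)) (s : Set (Fin (d + 1) → ℝ))
    (z : ℝ) : 0 ≤ secFun ρ i s z := ENNReal.toReal_nonneg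

lemma secFun_le_one (ρ : Measure (Fin d → ℝ)) [IsProbabilityMeasure ρ] (i : Fin (d + 1))
    (s : Set (Fin (d + 1) → ℝ)) (z : ℝ) : secFun ρ i s z ≤ 1 := by
  rw [secFun, ← ENNReal.toReal_one]
  exact ENNReal.toReal_mono ENNReal.one_ne_top prob_le_one

lemma secFun_mono (ρ : Measure (Fin d → ℝ)) [IsFiniteMeasure ρ] (i : Fin (d + 1))
    {s : Set (Fin (d + 1) → ℝ)} (hs : Good s) : Monotone (secFun ρ i s) := by
  intro z z' h
  exact ENNReal.toReal_mono (measure_ne_top ρ _) (measure_mono (sec_mono hs h))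

lemma secFun_rightCont (ρ : Measure (Fin d → ℝ)) [IsFiniteMeasure ρ] (i : Fin (d + 1))
    {s : Set (Fin (d + 1) → ℝ)} (hs : Good s) (x : ℝ) :
    ContinuousWithinAt (secFun ρ i s) (Set.Ici x) x := by
  rw [← continuousWithinAt_Ioi_iff_Ici]
  have hmono := secFun_mono ρ i hs
  have htendsto := hmono.tendsto_nhdsGT x
  have hInter : ⋂ n : ℕ, sec i s (x + 1 / (n + 1)) = sec i s x := by
    apply Set.Subset.antisymm
    · intro w hw
      simp only [Set.mem_iInter] at hw
      have hlim : Filter.Tendsto (fun n : ℕ => (i.insertNth (x + 1 / (n + 1)) w : Fin (d + 1) → ℝ))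
          Filter.atTop (𝓝 (i.insertNth x w)) := by
        apply Filter.Tendsto.finInsertNth
        · have : Filter.Tendsto (fun n : ℕ => x + 1 / ((n : ℝ) + 1)) Filter.atTop (𝓝 (x + 0)) :=
            Filter.Tendsto.const_add _ tendsto_one_div_add_atTop_nhds_zero_nat
          simpa using this
        · exact tendsto_const_nhds
      exact hs.1.mem_of_tendsto hlim (Filter.Eventually.of_forall fun n => hw n)
    · intro w hw
      simp only [Set.mem_iInter]
      intro n
      exact sec_mono hs (le_add_of_nonneg_right (by positivity)) hw
  have hmeas : Filter.Tendsto (fun n : ℕ => ρ (sec i s (x + 1 / (n + 1)))) Filter.atTop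
      (𝓝 (ρ (sec i s x))) := by
    rw [← hInter]
    apply MeasureTheory.tendsto_measure_iInter_atTop (fun n => (measurableSet_sec hs _).nullMeasurableSet)
    · intro m n hmn
      apply sec_mono hs
      have : (1 : ℝ) / (n + 1) ≤ 1 / (m + 1) := by
        apply one_div_le_one_div_of_le (by positivity)
        exact_mod_cast by omega
      linarith
    · exact ⟨0, measure_ne_top ρ _⟩
  have hreal : Filter.Tendsto (fun n : ℕ => secFun ρ i s (x + 1 / (n + 1))) Filter.atTop
      (𝓝 (secFun ρ i s x)) :=
    (ENNReal.tendsto_toReal (measure_ne_top ρ _)).comp hmeas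
  -- identify the limit: sInf (secFun '' Ioi x) = secFun x
  have hbdd : BddBelow (secFun ρ i s '' Set.Ioi x) :=
    ⟨secFun ρ i s x, by rintro - ⟨z, hz, rfl⟩; exact hmono (le_of_lt hz)⟩
  have heq : sInf (secFun ρ i s '' Set.Ioi x) = secFun ρ i s x := by
    apply le_antisymm
    · apply ge_of_tendsto hreal
      apply Filter.Eventually.of_forall
      intro n
      apply csInf_le hbdd
      exact ⟨x + 1 / (n + 1), by simp; positivity, rfl⟩
    · refine le_csInf ⟨secFun ρ i s (x + 1), ⟨x + 1, by simp, rfl⟩⟩ ?_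
      rintro - ⟨z, hz, rfl⟩
      exact hmono (le_of_lt hz)
  rw [ContinuousWithinAt, ← heq]
  exact htendsto

/-- the section function as a Stieltjes function -/
noncomputable def secStj (ρ : Measure (Fin d → ℝ)) [IsFiniteMeasure ρ] (i : Fin (d + 1))
    (s : Set (Fin (d + 1) → ℝ)) (hs : Good s) : StieltjesFunction ℝ where
  toFun := secFun ρ i s
  mono' := secFun_mono ρ i hs
  right_continuous' := secFun_rightCont ρ i hs


/-! pairing / integration by parts -/

lemma integrable_of_bounded {f : ℝ → ℝ} (μ : Measure ℝ) [IsFiniteMeasure μ]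
    (hf : Measurable f) {C : ℝ} (h : ∀ x, |f x| ≤ C) : Integrable f μ :=
  ⟨hf.aestronglyMeasurable, HasFiniteIntegral.of_bounded (C := C)
    (Filter.Eventually.of_forall fun x => by simpa using h x)⟩

lemma le_of_tendsto_atBot {g : ℝ → ℝ} (hg : Monotone g) {l : ℝ}
    (hgl : Tendsto g atBot (𝓝 l)) (z : ℝ) : l ≤ g z :=
  le_of_tendsto hgl ((Filter.eventually_le_atBot z).mono fun y hy => hg hy)

lemma ge_of_tendsto_atTop {g : ℝ → ℝ} (hg : Monotone g) {u : ℝ}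
    (hgu : Tendsto g atTop (𝓝 u)) (z : ℝ) : g z ≤ u :=
  ge_of_tendsto hgu ((Filter.eventually_ge_atTop z).mono fun y hy => hg hy)

lemma abs_leftLim_sub_le {A B : ℝ → ℝ} (hA : Monotone A) (hB : Monotone B) {δ : ℝ}
    (h : ∀ x, |A x - B x| ≤ δ) (x : ℝ) :
    |Function.leftLim A x - Function.leftLim B x| ≤ δ := by
  have hlim : Tendsto (fun y => |A y - B y|) (𝓝[<] x)
      (𝓝 |Function.leftLim A x - Function.leftLim B x|) :=
    ((hA.tendsto_leftLim x).sub (hB.tendsto_leftLim x)).abs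
  exact le_of_tendsto hlim (Filter.Eventually.of_forall fun y => h y)

/-- `∫ g dμ_A = l + ∫ (1 − leftLim A) dλ_g` -/
lemma integral_stieltjes_eq (A : StieltjesFunction ℝ) (hA0 : Tendsto A atBot (𝓝 0))
    (hA1 : Tendsto A atTop (𝓝 1)) (g : StieltjesFunction ℝ) {l u : ℝ}
    (hgl : Tendsto g atBot (𝓝 l)) (hgu : Tendsto g atTop (𝓝 u)) :
    ∫ z, g z ∂A.measure = l + ∫ x, (1 - Function.leftLim A x) ∂g.measure := by
  haveI : IsProbabilityMeasure A.measure := A.isProbabilityMeasure hA0 hA1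
  haveI : IsFiniteMeasure g.measure := g.isFiniteMeasure hgl hgu
  have hgz : ∀ z, l ≤ g z := le_of_tendsto_atBot g.mono hgl
  have hgu' : ∀ z, g z ≤ u := ge_of_tendsto_atTop g.mono hgu
  have hAle : ∀ x, A x ≤ 1 := ge_of_tendsto_atTop A.mono hA1
  have hA0' : ∀ x, 0 ≤ A x := le_of_tendsto_atBot A.mono hA0
  have hll1 : ∀ x, Function.leftLim A x ≤ 1 :=
    fun x => le_trans (Monotone.leftLim_le A.mono le_rfl) (hAle x)
  have hll0 : ∀ x, 0 ≤ Function.leftLim A x := by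
    intro x
    have := Monotone.le_leftLim A.mono (show x - 1 < x by linarith)
    exact le_trans (hA0' (x - 1)) this
  have hllmeas : Measurable (Function.leftLim A) := (Monotone.leftLim A.mono).measurable
  -- step 1 : g z = l + (g.measure (Iic z)).toReal
  have hg_eq : ∀ z, g z = l + (g.measure (Set.Iic z)).toReal := by
    intro z
    rw [g.measure_Iic hgl, ENNReal.toReal_ofReal (by linarith [hgz z])]
    ring
  -- step 2 : lintegral swap
  have hswap : ∫⁻ z, g.measure (Set.Iic z) ∂A.measure
      = ∫⁻ x, A.measure (Set.Ici x) ∂g.measure := by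
    set T : Set (ℝ × ℝ) := {p : ℝ × ℝ | p.2 ≤ p.1} with hT
    have hTmeas : MeasurableSet T := measurableSet_le measurable_snd measurable_fst
    set ind : ℝ × ℝ → ℝ≥0∞ := T.indicator (fun _ => 1) with hind
    have hmeas : Measurable ind := measurable_const.indicator hTmeas
    have h1 : ∀ z, ∫⁻ x, ind (z, x) ∂g.measure = g.measure (Set.Iic z) := by
      intro z
      have he : (fun x => ind (z, x)) = (Set.Iic z).indicator (fun _ => 1) := by
        funext x
        by_cases h : x ≤ z <;> simp [hind, hT, Set.indicator, h]
      rw [he, lintegral_indicator measurableSet_Iic, setLIntegral_one]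
    have h2 : ∀ x, ∫⁻ z, ind (z, x) ∂A.measure = A.measure (Set.Ici x) := by
      intro x
      have he : (fun z => ind (z, x)) = (Set.Ici x).indicator (fun _ => 1) := by
        funext z
        by_cases h : x ≤ z <;> simp [hind, hT, Set.indicator, h]
      rw [he, lintegral_indicator measurableSet_Ici, setLIntegral_one]
    calc ∫⁻ z, g.measure (Set.Iic z) ∂A.measure
        = ∫⁻ z, ∫⁻ x, ind (z, x) ∂g.measure ∂A.measure := by
          apply lintegral_congr; intro z; rw [h1]
      _ = ∫⁻ x, ∫⁻ z, ind (z, x) ∂A.measure ∂g.measure := by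
          apply lintegral_lintegral_swap
          exact (hmeas.comp measurable_id).aemeasurable
      _ = ∫⁻ x, A.measure (Set.Ici x) ∂g.measure := by
          apply lintegral_congr; intro x; rw [h2]
  -- step 3 : convert to real integrals
  have hIic_meas : Measurable fun z => g.measure (Set.Iic z) := by
    have : (fun z => g.measure (Set.Iic z)) = fun z => ENNReal.ofReal (g z - l) := by
      funext z; rw [g.measure_Iic hgl]
    rw [this]
    exact ENNReal.measurable_ofReal.comp (g.mono.measurable.sub measurable_const)
  have hlhs : ∫ z, g z ∂A.measure
      = l + (∫⁻ z, g.measure (Set.Iic z) ∂A.measure).toReal := by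
    rw [show (fun z => g z) = fun z => l + (g.measure (Set.Iic z)).toReal from funext hg_eq]
    rw [integral_add (integrable_const l)]
    · congr 1
      · simp
      · exact integral_toReal hIic_meas.aemeasurable
          (Filter.Eventually.of_forall fun z => measure_lt_top _ _)
    · apply integrable_of_bounded _ hIic_meas.ennreal_toReal (C := u - l)
      intro z
      have h1 : (g.measure (Set.Iic z)).toReal = g z - l := by
        rw [g.measure_Iic hgl, ENNReal.toReal_ofReal (by linarith [hgz z])]
      rw [h1, abs_of_nonneg (by linarith [hgz z])]
      linarith [hgu' z]
  have hrhs : (∫⁻ x, A.measure (Set.Ici x) ∂g.measure).toReal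
      = ∫ x, (1 - Function.leftLim A x) ∂g.measure := by
    have h1 : (fun x => A.measure (Set.Ici x))
        = fun x => ENNReal.ofReal (1 - Function.leftLim A x) := by
      funext x; rw [A.measure_Ici hA1]
    rw [h1, ← integral_toReal]
    · apply integral_congr_ae
      apply Filter.Eventually.of_forall
      intro x
      dsimp only
      rw [ENNReal.toReal_ofReal (by linarith [hll1 x])]
    · exact (ENNReal.measurable_ofReal.comp
        ((measurable_const.sub hllmeas))).aemeasurable
    · exact Filter.Eventually.of_forall fun x => ENNReal.ofReal_lt_top
  rw [hlhs, hswap, hrhs]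

lemma pairing (A B : StieltjesFunction ℝ) (hA0 : Tendsto A atBot (𝓝 0))
    (hA1 : Tendsto A atTop (𝓝 1)) (hB0 : Tendsto B atBot (𝓝 0))
    (hB1 : Tendsto B atTop (𝓝 1)) (g : StieltjesFunction ℝ) {l u : ℝ}
    (hgl : Tendsto g atBot (𝓝 l)) (hgu : Tendsto g atTop (𝓝 u)) :
    (∫ z, g z ∂B.measure) - (∫ z, g z ∂A.measure)
      = ∫ x, (Function.leftLim A x - Function.leftLim B x) ∂g.measure := by
  haveI : IsFiniteMeasure g.measure := g.isFiniteMeasure hgl hgu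
  rw [integral_stieltjes_eq A hA0 hA1 g hgl hgu, integral_stieltjes_eq B hB0 hB1 g hgl hgu]
  have hintA : Integrable (fun x => 1 - Function.leftLim A x) g.measure := by
    apply integrable_of_bounded _ (measurable_const.sub (Monotone.leftLim A.mono).measurable)
      (C := 1)
    intro x
    have h1 : Function.leftLim A x ≤ 1 := le_trans (Monotone.leftLim_le A.mono le_rfl)
      (ge_of_tendsto_atTop A.mono hA1 x)
    have h0 : 0 ≤ Function.leftLim A x := le_trans (le_of_tendsto_atBot A.mono hA0 (x - 1))
      (Monotone.le_leftLim A.mono (show x - 1 < x by linarith))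
    show |1 - Function.leftLim A x| ≤ 1
    rw [abs_of_nonneg (by linarith)]
    linarith
  have hintB : Integrable (fun x => 1 - Function.leftLim B x) g.measure := by
    apply integrable_of_bounded _ (measurable_const.sub (Monotone.leftLim B.mono).measurable)
      (C := 1)
    intro x
    have h1 : Function.leftLim B x ≤ 1 := le_trans (Monotone.leftLim_le B.mono le_rfl)
      (ge_of_tendsto_atTop B.mono hB1 x)
    have h0 : 0 ≤ Function.leftLim B x := le_trans (le_of_tendsto_atBot B.mono hB0 (x - 1))
      (Monotone.le_leftLim B.mono (show x - 1 < x by linarith))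
    show |1 - Function.leftLim B x| ≤ 1
    rw [abs_of_nonneg (by linarith)]
    linarith
  have hsub := integral_sub hintB hintA
  have heq : (fun x => (1 - Function.leftLim (B : ℝ → ℝ) x) - (1 - Function.leftLim (A : ℝ → ℝ) x))
      = fun x => Function.leftLim (A : ℝ → ℝ) x - Function.leftLim (B : ℝ → ℝ) x :=
    funext fun x => by ring
  rw [heq] at hsub
  linarith [hsub]

lemma pairing_bound (A B : StieltjesFunction ℝ) (hA0 : Tendsto A atBot (𝓝 0))
    (hA1 : Tendsto A atTop (𝓝 1)) (hB0 : Tendsto B atBot (𝓝 0))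
    (hB1 : Tendsto B atTop (𝓝 1)) (g : StieltjesFunction ℝ) {l u : ℝ}
    (hgl : Tendsto g atBot (𝓝 l)) (hgu : Tendsto g atTop (𝓝 u)) {δ : ℝ}
    (hAB : ∀ x, |A x - B x| ≤ δ) :
    |(∫ z, g z ∂B.measure) - (∫ z, g z ∂A.measure)| ≤ δ * (g.measure Set.univ).toReal := by
  haveI : IsFiniteMeasure g.measure := g.isFiniteMeasure hgl hgu
  rw [pairing A B hA0 hA1 hB0 hB1 g hgl hgu]
  have := norm_integral_le_of_norm_le_const (μ := g.measure)
    (f := fun x => Function.leftLim A x - Function.leftLim B x) (C := δ)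
    (Filter.Eventually.of_forall fun x => by
      rw [Real.norm_eq_abs]; exact abs_leftLim_sub_le A.mono B.mono hAB x)
  rw [Real.norm_eq_abs] at this
  exact this


/-! limits of the section function -/

noncomputable def secL (ρ : Measure (Fin d → ℝ)) (i : Fin (d + 1)) (s : Set (Fin (d + 1) → ℝ)) :
    ℝ := ⨅ z, secFun ρ i s z

noncomputable def secU (ρ : Measure (Fin d → ℝ)) (i : Fin (d + 1)) (s : Set (Fin (d + 1) → ℝ)) :
    ℝ := ⨆ z, secFun ρ i s z

lemma secFun_bddAbove (ρ : Measure (Fin d → ℝ)) [IsProbabilityMeasure ρ] (i : Fin (d + 1))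
    (s : Set (Fin (d + 1) → ℝ)) : BddAbove (Set.range (secFun ρ i s)) :=
  ⟨1, by rintro - ⟨z, rfl⟩; exact secFun_le_one ρ i s z⟩

lemma secFun_bddBelow (ρ : Measure (Fin d → ℝ)) (i : Fin (d + 1))
    (s : Set (Fin (d + 1) → ℝ)) : BddBelow (Set.range (secFun ρ i s)) :=
  ⟨0, by rintro - ⟨z, rfl⟩; exact secFun_nonneg ρ i s z⟩

lemma secFun_tendsto_atBot (ρ : Measure (Fin d → ℝ)) [IsProbabilityMeasure ρ] (i : Fin (d + 1))
    {s : Set (Fin (d + 1) → ℝ)} (hs : Good s) :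
    Tendsto (secFun ρ i s) atBot (𝓝 (secL ρ i s)) :=
  tendsto_atBot_ciInf (secFun_mono ρ i hs) (secFun_bddBelow ρ i s)

lemma secFun_tendsto_atTop (ρ : Measure (Fin d → ℝ)) [IsProbabilityMeasure ρ] (i : Fin (d + 1))
    {s : Set (Fin (d + 1) → ℝ)} (hs : Good s) :
    Tendsto (secFun ρ i s) atTop (𝓝 (secU ρ i s)) :=
  tendsto_atTop_ciSup (secFun_mono ρ i hs) (secFun_bddAbove ρ i s)

lemma secL_nonneg (ρ : Measure (Fin d → ℝ)) [IsProbabilityMeasure ρ] (i : Fin (d + 1))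
    (s : Set (Fin (d + 1) → ℝ)) : 0 ≤ secL ρ i s :=
  le_ciInf fun z => secFun_nonneg ρ i s z

lemma secU_le_one (ρ : Measure (Fin d → ℝ)) [IsProbabilityMeasure ρ] (i : Fin (d + 1))
    (s : Set (Fin (d + 1) → ℝ)) : secU ρ i s ≤ 1 :=
  ciSup_le fun z => secFun_le_one ρ i s z

lemma secL_le_secU (ρ : Measure (Fin d → ℝ)) [IsProbabilityMeasure ρ] (i : Fin (d + 1))
    (s : Set (Fin (d + 1) → ℝ)) : secL ρ i s ≤ secU ρ i s :=
  le_trans (ciInf_le (secFun_bddBelow ρ i s) 0) (le_ciSup (secFun_bddAbove ρ i s) 0)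

lemma secStj_mass_le_one (ρ : Measure (Fin d → ℝ)) [IsProbabilityMeasure ρ] (i : Fin (d + 1))
    {s : Set (Fin (d + 1) → ℝ)} (hs : Good s) :
    ((secStj ρ i s hs).measure Set.univ).toReal ≤ 1 := by
  rw [(secStj ρ i s hs).measure_univ (secFun_tendsto_atBot ρ i hs) (secFun_tendsto_atTop ρ i hs)]
  rw [ENNReal.toReal_ofReal (by linarith [secL_le_secU ρ i s])]
  linarith [secU_le_one ρ i s, secL_nonneg ρ i s]

instance secStj_finite (ρ : Measure (Fin d → ℝ)) [IsProbabilityMeasure ρ] (i : Fin (d + 1))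
    (s : Set (Fin (d + 1) → ℝ)) (hs : Good s) : IsFiniteMeasure (secStj ρ i s hs).measure :=
  (secStj ρ i s hs).isFiniteMeasure (secFun_tendsto_atBot ρ i hs) (secFun_tendsto_atTop ρ i hs)

/-! marginalization -/

lemma pi_apply (μ : Fin (d + 1) → Measure ℝ) [∀ j, IsProbabilityMeasure (μ j)] (i : Fin (d + 1))
    {s : Set (Fin (d + 1) → ℝ)} (hs : MeasurableSet s) :
    Measure.pi μ s = ∫⁻ z, (Measure.pi fun j => μ (i.succAbove j)) (sec i s z) ∂(μ i) := by
  have hmp := measurePreserving_piFinSuccAbove μ i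
  set e := MeasurableEquiv.piFinSuccAbove (fun _ : Fin (d + 1) => ℝ) i with he
  have hsymm : MeasurableSet (e.symm ⁻¹' s) := e.symm.measurable hs
  have h1 : Measure.pi μ s = ((μ i).prod (Measure.pi fun j => μ (i.succAbove j)))
      (e.symm ⁻¹' s) := by
    rw [← hmp.map_eq, MeasurableEquiv.map_apply]
    congr 1
    ext y
    simp
  rw [h1, Measure.prod_apply hsymm]
  apply lintegral_congr
  intro z
  have hset : Prod.mk z ⁻¹' (e.symm ⁻¹' s) = sec i s z := by
    ext w
    simp [sec, he, MeasurableEquiv.piFinSuccAbove, Fin.insertNthEquiv]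
  rw [hset]

lemma pi_apply_toReal (μ : Fin (d + 1) → Measure ℝ) [∀ j, IsProbabilityMeasure (μ j)]
    (i : Fin (d + 1)) {s : Set (Fin (d + 1) → ℝ)} (hs : Good s) :
    (Measure.pi μ s).toReal
      = ∫ z, secFun (Measure.pi fun j => μ (i.succAbove j)) i s z ∂(μ i) := by
  set ρ := Measure.pi fun j => μ (i.succAbove j) with hρ
  haveI : IsProbabilityMeasure ρ := by rw [hρ]; infer_instance
  have h1 : Measure.pi μ s = ∫⁻ z, ρ (sec i s z) ∂(μ i) := pi_apply μ i hs.1.measurableSet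
  have h2 : ∀ z, ρ (sec i s z) = ENNReal.ofReal (secFun ρ i s z) := by
    intro z
    rw [secFun, ENNReal.ofReal_toReal (measure_ne_top ρ _)]
  have hint : Integrable (secFun ρ i s) (μ i) := by
    apply integrable_of_bounded _ (secFun_mono ρ i hs).measurable (C := 1)
    intro z
    rw [abs_of_nonneg (secFun_nonneg ρ i s z)]
    exact secFun_le_one ρ i s z
  have h3 : Measure.pi μ s = ENNReal.ofReal (∫ z, secFun ρ i s z ∂(μ i)) := by
    rw [h1, ofReal_integral_eq_lintegral_ofReal hint
      (Filter.Eventually.of_forall fun z => secFun_nonneg ρ i s z)]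
    apply lintegral_congr
    intro z
    rw [h2]
  rw [h3, ENNReal.toReal_ofReal (integral_nonneg fun z => secFun_nonneg ρ i s z)]

/-! uniform bound on the difference of product measures of a good set -/

lemma pi_good_dist : ∀ (d : ℕ) (A B : Fin d → StieltjesFunction ℝ)
    (_ : ∀ j, Tendsto (A j) atBot (𝓝 0)) (_ : ∀ j, Tendsto (A j) atTop (𝓝 1))
    (_ : ∀ j, Tendsto (B j) atBot (𝓝 0)) (_ : ∀ j, Tendsto (B j) atTop (𝓝 1))
    {δ : ℝ} (_ : 0 ≤ δ) (_ : ∀ j x, |A j x - B j x| ≤ δ)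
    {s : Set (Fin d → ℝ)} (_ : Good s),
    |((Measure.pi fun j => (A j).measure) s).toReal
      - ((Measure.pi fun j => (B j).measure) s).toReal| ≤ d * δ := by
  intro d
  induction d with
  | zero =>
    intro A B hA0 hA1 hB0 hB1 δ hδ hAB s hs
    haveI : ∀ j : Fin 0, IsProbabilityMeasure (A j).measure :=
      fun j => (A j).isProbabilityMeasure (hA0 j) (hA1 j)
    haveI : ∀ j : Fin 0, IsProbabilityMeasure (B j).measure :=
      fun j => (B j).isProbabilityMeasure (hB0 j) (hB1 j)
    rcases Set.eq_empty_or_nonempty s with h | h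
    · subst h; simp
    · have huniv : s = Set.univ := by
        apply Set.eq_univ_of_forall
        intro y
        obtain ⟨x, hx⟩ := h
        rwa [Subsingleton.elim y x]
      subst huniv
      simp
  | succ e ih =>
    intro A B hA0 hA1 hB0 hB1 δ hδ hAB s hs
    haveI hPA : ∀ j, IsProbabilityMeasure (A j).measure :=
      fun j => (A j).isProbabilityMeasure (hA0 j) (hA1 j)
    haveI hPB : ∀ j, IsProbabilityMeasure (B j).measure :=
      fun j => (B j).isProbabilityMeasure (hB0 j) (hB1 j)
    set i : Fin (e + 1) := 0 with hi
    set ρA := Measure.pi fun j => (A (i.succAbove j)).measure with hρA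
    set ρB := Measure.pi fun j => (B (i.succAbove j)).measure with hρB
    haveI : IsProbabilityMeasure ρA := by rw [hρA]; infer_instance
    haveI : IsProbabilityMeasure ρB := by rw [hρB]; infer_instance
    have h1 : ((Measure.pi fun j => (A j).measure) s).toReal
        = ∫ z, secFun ρA i s z ∂(A i).measure := pi_apply_toReal _ i hs
    have h2 : ((Measure.pi fun j => (B j).measure) s).toReal
        = ∫ z, secFun ρB i s z ∂(B i).measure := pi_apply_toReal _ i hs
    rw [h1, h2]
    have hbound1 : |(∫ z, secFun ρA i s z ∂(A i).measure)
        - (∫ z, secFun ρA i s z ∂(B i).measure)| ≤ δ := by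
      have := pairing_bound (B i) (A i) (hB0 i) (hB1 i) (hA0 i) (hA1 i)
        (secStj ρA i s hs) (secFun_tendsto_atBot ρA i hs) (secFun_tendsto_atTop ρA i hs)
        (δ := δ) (fun x => by rw [abs_sub_comm]; exact hAB i x)
      calc |(∫ z, secFun ρA i s z ∂(A i).measure)
          - (∫ z, secFun ρA i s z ∂(B i).measure)|
          ≤ δ * ((secStj ρA i s hs).measure Set.univ).toReal := this
        _ ≤ δ * 1 := by
            apply mul_le_mul_of_nonneg_left (secStj_mass_le_one ρA i hs) hδ
        _ = δ := mul_one δ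
    have hsec : ∀ z, |secFun ρA i s z - secFun ρB i s z| ≤ e * δ := by
      intro z
      exact ih (fun j => A (i.succAbove j)) (fun j => B (i.succAbove j))
        (fun j => hA0 _) (fun j => hA1 _) (fun j => hB0 _) (fun j => hB1 _)
        hδ (fun j x => hAB _ x) (good_sec hs z)
    have hbound2 : |(∫ z, secFun ρA i s z ∂(B i).measure)
        - (∫ z, secFun ρB i s z ∂(B i).measure)| ≤ e * δ := by
      have hintA : Integrable (secFun ρA i s) (B i).measure := by
        apply integrable_of_bounded _ (secFun_mono ρA i hs).measurable (C := 1)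
        intro z
        rw [abs_of_nonneg (secFun_nonneg ρA i s z)]
        exact secFun_le_one ρA i s z
      have hintB : Integrable (secFun ρB i s) (B i).measure := by
        apply integrable_of_bounded _ (secFun_mono ρB i hs).measurable (C := 1)
        intro z
        rw [abs_of_nonneg (secFun_nonneg ρB i s z)]
        exact secFun_le_one ρB i s z
      rw [← integral_sub hintA hintB]
      have := norm_integral_le_of_norm_le_const (μ := (B i).measure)
        (f := fun z => secFun ρA i s z - secFun ρB i s z) (C := e * δ)
        (Filter.Eventually.of_forall fun z => by rw [Real.norm_eq_abs]; exact hsec z)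
      rw [Real.norm_eq_abs] at this
      simpa using this
    calc |(∫ z, secFun ρA i s z ∂(A i).measure) - (∫ z, secFun ρB i s z ∂(B i).measure)|
        ≤ |(∫ z, secFun ρA i s z ∂(A i).measure) - (∫ z, secFun ρA i s z ∂(B i).measure)|
          + |(∫ z, secFun ρA i s z ∂(B i).measure)
            - (∫ z, secFun ρB i s z ∂(B i).measure)| := abs_sub_le _ _ _
      _ ≤ δ + e * δ := add_le_add hbound1 hbound2
      _ = (e + 1 : ℕ) * δ := by push_cast; ring


/-! update vs insertNth -/

lemma update_insertNth (i : Fin (d + 1)) (t z : ℝ) (w : Fin d → ℝ) :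
    Function.update (i.insertNth t w : Fin (d + 1) → ℝ) i z = i.insertNth z w := by
  funext j
  rcases eq_or_ne j i with rfl | hj
  · rw [Function.update_self, Fin.insertNth_apply_same]
  · obtain ⟨j', rfl⟩ := Fin.exists_succAbove_eq hj
    rw [Function.update_of_ne (Fin.succAbove_ne i j'), Fin.insertNth_apply_succAbove,
      Fin.insertNth_apply_succAbove]

lemma update_marginal (μ : Measure ℝ) [IsProbabilityMeasure μ] (i : Fin (d + 1))
    {s : Set (Fin (d + 1) → ℝ)} (hs : Good s) (z : ℝ) :
    ((Measure.pi fun _ : Fin (d + 1) => μ) {y | Function.update y i z ∈ s}).toReal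
      = secFun (Measure.pi fun _ : Fin d => μ) i s z := by
  have hs' : MeasurableSet {y : Fin (d + 1) → ℝ | Function.update y i z ∈ s} := by
    have hcont : Continuous fun y : Fin (d + 1) → ℝ => Function.update y i z :=
      continuous_id.update i continuous_const
    exact (hs.1.preimage hcont).measurableSet
  rw [pi_apply (fun _ => μ) i hs']
  have hsec : ∀ t : ℝ, sec i {y : Fin (d + 1) → ℝ | Function.update y i z ∈ s} t
      = sec i s z := by
    intro t
    ext w
    simp only [sec, Set.mem_setOf_eq, update_insertNth]
  have : (fun t => (Measure.pi fun _ : Fin d => μ)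
      (sec i {y : Fin (d + 1) → ℝ | Function.update y i z ∈ s} t))
      = fun _ => (Measure.pi fun _ : Fin d => μ) (sec i s z) := by
    funext t; rw [hsec]
  rw [this, lintegral_const, measure_univ, mul_one, secFun]

/-! the mixed family for telescoping -/

noncomputable def mixFam (P Q : StieltjesFunction ℝ) (i : ℕ) : Fin (d + 1) → StieltjesFunction ℝ :=
  fun j => if (j : ℕ) < i then Q else P

lemma mixFam_tendsto_atBot {P Q : StieltjesFunction ℝ} (hP : Tendsto P atBot (𝓝 0))
    (hQ : Tendsto Q atBot (𝓝 0)) (i : ℕ) (j : Fin (d + 1)) :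
    Tendsto (mixFam P Q i j) atBot (𝓝 0) := by
  unfold mixFam; split <;> assumption

lemma mixFam_tendsto_atTop {P Q : StieltjesFunction ℝ} (hP : Tendsto P atTop (𝓝 1))
    (hQ : Tendsto Q atTop (𝓝 1)) (i : ℕ) (j : Fin (d + 1)) :
    Tendsto (mixFam P Q i j) atTop (𝓝 1) := by
  unfold mixFam; split <;> assumption

/-- the family of "other slots" measures at telescoping step `i` -/
noncomputable def telRho (P Q : StieltjesFunction ℝ) (i : Fin (d + 1)) : Measure (Fin d → ℝ) :=
  Measure.pi fun j => (mixFam P Q (i : ℕ) (i.succAbove j)).measure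

lemma telRho_prob (P Q : StieltjesFunction ℝ) (hP0 : Tendsto P atBot (𝓝 0))
    (hP1 : Tendsto P atTop (𝓝 1)) (hQ0 : Tendsto Q atBot (𝓝 0))
    (hQ1 : Tendsto Q atTop (𝓝 1)) (i : Fin (d + 1)) :
    IsProbabilityMeasure (telRho P Q i) := by
  haveI : ∀ j : Fin d, IsProbabilityMeasure ((mixFam P Q (i : ℕ)
      (i.succAbove j) : StieltjesFunction ℝ)).measure := fun j =>
    StieltjesFunction.isProbabilityMeasure _ (mixFam_tendsto_atBot hP0 hQ0 _ _)
      (mixFam_tendsto_atTop hP1 hQ1 _ _)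
  exact MeasureTheory.Measure.pi.instIsProbabilityMeasure _

/-- telescoping step -/
lemma telescope_step (P Q : StieltjesFunction ℝ) (hP0 : Tendsto P atBot (𝓝 0))
    (hP1 : Tendsto P atTop (𝓝 1)) (hQ0 : Tendsto Q atBot (𝓝 0))
    (hQ1 : Tendsto Q atTop (𝓝 1)) (i : Fin (d + 1)) {s : Set (Fin (d + 1) → ℝ)}
    (hs : Good s) :
    ((Measure.pi fun j => (mixFam P Q ((i : ℕ) + 1) j).measure) s).toReal
      - ((Measure.pi fun j => (mixFam P Q (i : ℕ) j).measure) s).toReal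
    = (∫ z, secFun (telRho P Q i) i s z ∂Q.measure)
      - ∫ z, secFun (telRho P Q i) i s z ∂P.measure := by
  haveI : ∀ (m : ℕ) (j : Fin (d + 1)), IsProbabilityMeasure ((mixFam P Q m j
      : StieltjesFunction ℝ)).measure := fun m j =>
    StieltjesFunction.isProbabilityMeasure _ (mixFam_tendsto_atBot hP0 hQ0 _ _)
      (mixFam_tendsto_atTop hP1 hQ1 _ _)
  have hothers : ∀ j : Fin d, mixFam P Q ((i : ℕ) + 1) (i.succAbove j)
      = (mixFam P Q (i : ℕ) (i.succAbove j) : StieltjesFunction ℝ) := by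
    intro j
    have hne : ((i.succAbove j : Fin (d + 1)) : ℕ) ≠ (i : ℕ) :=
      fun h => Fin.succAbove_ne i j (Fin.ext h)
    unfold mixFam
    rcases lt_or_ge ((i.succAbove j : Fin (d + 1)) : ℕ) (i : ℕ) with h | h
    · rw [if_pos h, if_pos (by omega)]
    · rw [if_neg (by omega), if_neg (by omega)]
  have h1 : ((Measure.pi fun j => (mixFam P Q ((i : ℕ) + 1) j
      : StieltjesFunction ℝ).measure) s).toReal
      = ∫ z, secFun (telRho P Q i) i s z ∂Q.measure := by
    rw [pi_apply_toReal _ i hs]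
    have hslot : (mixFam P Q ((i : ℕ) + 1) i : StieltjesFunction ℝ) = Q := by
      unfold mixFam; rw [if_pos (by omega)]
    have hρ : (Measure.pi fun j => (mixFam P Q ((i : ℕ) + 1) (i.succAbove j)
        : StieltjesFunction ℝ).measure) = telRho P Q i := by
      unfold telRho
      congr 1
      funext j
      rw [hothers j]
    rw [hρ, hslot]
  have h2 : ((Measure.pi fun j => (mixFam P Q (i : ℕ) j
      : StieltjesFunction ℝ).measure) s).toReal
      = ∫ z, secFun (telRho P Q i) i s z ∂P.measure := by
    rw [pi_apply_toReal _ i hs]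
    have hslot : (mixFam P Q (i : ℕ) i : StieltjesFunction ℝ) = P := by
      unfold mixFam; rw [if_neg (by omega)]
    rw [hslot]
    rfl
  rw [h1, h2]

/-! pointwise bound on the left-limit difference quotient -/

lemma hatH_bound {P Q : StieltjesFunction ℝ} {t : ℝ} (ht : t ≠ 0) {Hn H : ℝ → ℝ}
    (hQ : ∀ x, Q x = P x + t * Hn x) (hHcont : Continuous H) {δ : ℝ}
    (hδ : ∀ x, |Hn x - H x| ≤ δ) (x : ℝ) :
    |(Function.leftLim (Q : ℝ → ℝ) x - Function.leftLim (P : ℝ → ℝ) x) / t - H x| ≤ δ := by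
  have h1 : Tendsto Hn (𝓝[<] x)
      (𝓝 ((Function.leftLim (Q : ℝ → ℝ) x - Function.leftLim (P : ℝ → ℝ) x) / t)) := by
    have heq : Hn = fun y => ((Q : ℝ → ℝ) y - (P : ℝ → ℝ) y) / t := by
      funext y
      rw [hQ y]
      field_simp
      ring
    rw [heq]
    exact ((Q.mono.tendsto_leftLim x).sub (P.mono.tendsto_leftLim x)).div_const t
  have h2 : Tendsto H (𝓝[<] x) (𝓝 (H x)) :=
    (hHcont.tendsto x).mono_left nhdsWithin_le_nhds
  exact le_of_tendsto (h1.sub h2).abs (Filter.Eventually.of_forall fun y => hδ y)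

/-! step function approximation -/

lemma step_approx {H : ℝ → ℝ} (hHcont : Continuous H) (htop : Tendsto H atTop (𝓝 0))
    (hbot : Tendsto H atBot (𝓝 0)) {ε : ℝ} (hε : 0 < ε) :
    ∃ (K : ℕ) (p a : ℕ → ℝ), (∀ m n, m ≤ n → p m ≤ p n) ∧
      ∀ u, |H u - ∑ j ∈ Finset.range K,
        (Set.Ioc (p j) (p (j + 1))).indicator (fun _ => a j) u| ≤ ε := by
  -- uniform continuity
  have hcocompact : Tendsto H (cocompact ℝ) (𝓝 0) := by
    rw [cocompact_eq_atBot_atTop]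
    exact Tendsto.sup hbot htop
  have hUC : UniformContinuous H := hHcont.uniformContinuous_of_tendsto_cocompact hcocompact
  obtain ⟨δ, hδpos, hδ⟩ := Metric.uniformContinuous_iff.mp hUC ε hε
  -- tails
  obtain ⟨btop, hbtop⟩ : ∃ b, ∀ u ≥ b, |H u| ≤ ε := by
    have := (Metric.tendsto_nhds.mp htop ε hε).exists_forall_of_atTop
    obtain ⟨b, hb⟩ := this
    exact ⟨b, fun u hu => by simpa [Real.dist_eq] using (hb u hu).le⟩
  obtain ⟨bbot, hbbot⟩ : ∃ b, ∀ u ≤ b, |H u| ≤ ε := by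
    have := (Metric.tendsto_nhds.mp hbot ε hε).exists_forall_of_atBot
    obtain ⟨b, hb⟩ := this
    exact ⟨b, fun u hu => by simpa [Real.dist_eq] using (hb u hu).le⟩
  set lo := min bbot btop - 1 with hlo
  set hi := max bbot btop + 1 with hhi
  have hlohi : lo < hi := by
    have h1 : min bbot btop ≤ max bbot btop := le_trans (min_le_left _ _) (le_max_left _ _)
    simp only [hlo, hhi]
    linarith
  set K := ⌈(hi - lo) / δ⌉₊ with hK
  have hKpos : 0 < K := by
    apply Nat.ceil_pos.mpr
    exact div_pos (by linarith) hδpos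
  set η := (hi - lo) / K with hη
  have hηpos : 0 < η := by
    apply div_pos (by linarith)
    exact_mod_cast hKpos
  have hηδ : η ≤ δ := by
    rw [hη, div_le_iff₀ (by exact_mod_cast hKpos)]
    have := Nat.le_ceil ((hi - lo) / δ)
    rw [← hK] at this
    calc hi - lo = ((hi - lo) / δ) * δ := by field_simp
      _ ≤ (K : ℝ) * δ := by
          apply mul_le_mul_of_nonneg_right this (le_of_lt hδpos)
      _ = δ * K := by ring
  set p : ℕ → ℝ := fun k => lo + k * η with hp
  have hpmono : ∀ m n : ℕ, m ≤ n → p m ≤ p n := by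
    intro m n hmn
    simp only [hp]
    have : (m : ℝ) ≤ n := by exact_mod_cast hmn
    nlinarith
  have hpK : p K = hi := by
    simp only [hp, hη]
    field_simp
    ring
  refine ⟨K, p, fun k => H (p (k + 1)), hpmono, ?_⟩
  intro u
  rcases le_or_gt u (p 0) with hu | hu
  · -- left tail : all indicators vanish
    have hzero : ∀ j ∈ Finset.range K, (Set.Ioc (p j) (p (j + 1))).indicator
        (fun _ => H (p (j + 1))) u = 0 := by
      intro j _
      apply Set.indicator_of_notMem
      intro hmem
      exact absurd hmem.1 (not_lt.mpr (le_trans hu (hpmono 0 j (Nat.zero_le j))))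
    rw [Finset.sum_congr rfl hzero, Finset.sum_const, smul_zero, sub_zero]
    apply hbbot
    have : p 0 = lo := by simp [hp]
    rw [this] at hu
    have : lo ≤ bbot := by
      simp only [hlo]
      linarith [min_le_left bbot btop]
    linarith
  · rcases le_or_gt u (p K) with hu2 | hu2
    · -- middle : find the interval
      set tt := (u - lo) / η with htt
      have httpos : 0 < tt := by
        apply div_pos _ hηpos
        have : p 0 = lo := by simp [hp]
        rw [this] at hu
        linarith
      set k1 := ⌈tt⌉₊ with hk1
      have hk1pos : 1 ≤ k1 := Nat.one_le_iff_ne_zero.mpr (Nat.ceil_pos.mpr httpos).ne'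
      have hk1K : k1 ≤ K := by
        apply Nat.ceil_le.mpr
        rw [htt, div_le_iff₀ hηpos]
        rw [hpK] at hu2
        simp only [hη]
        calc u - lo ≤ hi - lo := by linarith
          _ = K * ((hi - lo) / K) := by field_simp
      set k0 := k1 - 1 with hk0
      have hk0K : k0 < K := by omega
      have hk01 : k0 + 1 = k1 := by omega
      have hcast : (k0 : ℝ) = (k1 : ℝ) - 1 := by
        have h0 : ((k0 : ℕ) : ℝ) = ((k1 - 1 : ℕ) : ℝ) := by rw [hk0]
        rw [h0, Nat.cast_sub hk1pos]
        simp
      have hlt : p k0 < u := by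
        have h1 : (k0 : ℝ) < tt := by
          have h2 := Nat.ceil_lt_add_one (le_of_lt httpos)
          rw [← hk1] at h2
          rw [hcast]
          linarith
        have h2 : (k0 : ℝ) * η < u - lo := by
          have h3 := mul_lt_mul_of_pos_right h1 hηpos
          rwa [htt, div_mul_cancel₀ _ (ne_of_gt hηpos)] at h3
        simp only [hp]
        linarith
      have hle : u ≤ p (k0 + 1) := by
        have h1 : tt ≤ (k1 : ℝ) := Nat.le_ceil tt
        have h2 : u - lo ≤ (k1 : ℝ) * η := by
          have h3 := mul_le_mul_of_nonneg_right h1 (le_of_lt hηpos)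
          rwa [htt, div_mul_cancel₀ _ (ne_of_gt hηpos)] at h3
        have hc : ((k0 + 1 : ℕ) : ℝ) = (k1 : ℝ) := by exact_mod_cast congrArg Nat.cast hk01
        simp only [hp]
        rw [hc]
        linarith
      -- sum reduces to the single term k0
      have hsum : ∑ j ∈ Finset.range K, (Set.Ioc (p j) (p (j + 1))).indicator
          (fun _ => H (p (j + 1))) u = H (p (k0 + 1)) := by
        rw [Finset.sum_eq_single_of_mem k0 (Finset.mem_range.mpr hk0K)]
        · rw [Set.indicator_of_mem (Set.mem_Ioc.mpr ⟨hlt, hle⟩)]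
        · intro j _ hj
          apply Set.indicator_of_notMem
          intro hmem
          rcases lt_or_gt_of_ne hj with h | h
          · exact absurd (le_trans hmem.2 (hpmono (j + 1) k0 h)) (not_le.mpr hlt)
          · exact absurd (lt_of_le_of_lt (hpmono (k0 + 1) j h) hmem.1) (not_lt.mpr hle)
      rw [hsum]
      have hdist : dist u (p (k0 + 1)) < δ := by
        rw [Real.dist_eq, abs_sub_lt_iff]
        constructor
        · linarith
        · have : p (k0 + 1) - p k0 = η := by simp only [hp]; push_cast; ring
          linarith
      exact (le_of_lt (by simpa [Real.dist_eq] using hδ hdist))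
    · -- right tail
      have hzero : ∀ j ∈ Finset.range K, (Set.Ioc (p j) (p (j + 1))).indicator
          (fun _ => H (p (j + 1))) u = 0 := by
        intro j hj
        apply Set.indicator_of_notMem
        intro hmem
        have : j + 1 ≤ K := Finset.mem_range.mp hj
        exact absurd hmem.2 (not_le.mpr (lt_of_le_of_lt (hpmono (j + 1) K this) hu2))
      rw [Finset.sum_congr rfl hzero, Finset.sum_const, smul_zero, sub_zero]
      apply hbtop
      rw [hpK] at hu2
      have : btop ≤ hi := by
        simp only [hhi]
        linarith [le_max_right bbot btop]
      linarith

/-- integral of a step function against a Stieltjes measure -/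
lemma integral_step (g : StieltjesFunction ℝ) {l u : ℝ} (hgl : Tendsto g atBot (𝓝 l))
    (hgu : Tendsto g atTop (𝓝 u)) (K : ℕ) (p a : ℕ → ℝ) (hp : ∀ m n, m ≤ n → p m ≤ p n) :
    ∫ x, (∑ j ∈ Finset.range K, (Set.Ioc (p j) (p (j + 1))).indicator (fun _ => a j) x)
      ∂g.measure = ∑ j ∈ Finset.range K, (g (p (j + 1)) - g (p j)) * a j := by
  haveI : IsFiniteMeasure g.measure := g.isFiniteMeasure hgl hgu
  rw [integral_finset_sum]
  · apply Finset.sum_congr rfl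
    intro j _
    rw [integral_indicator_const (a j) measurableSet_Ioc, measureReal_def, StieltjesFunction.measure_Ioc,
      ENNReal.toReal_ofReal (by linarith [g.mono (hp j (j + 1) (by omega))])]
    simp [smul_eq_mul]
  · intro j _
    exact (integrable_const (a j)).indicator measurableSet_Ioc

/-- boundedness of a continuous function vanishing at infinity -/
lemma bounded_of_tendsto_zero {H : ℝ → ℝ} (hHcont : Continuous H)
    (htop : Tendsto H atTop (𝓝 0)) (hbot : Tendsto H atBot (𝓝 0)) :
    ∃ C : ℝ, 0 ≤ C ∧ ∀ x, |H x| ≤ C := by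
  obtain ⟨btop, hbtop⟩ : ∃ b, ∀ u ≥ b, |H u| ≤ 1 := by
    have := (Metric.tendsto_nhds.mp htop 1 one_pos).exists_forall_of_atTop
    obtain ⟨b, hb⟩ := this
    exact ⟨b, fun u hu => by simpa [Real.dist_eq] using (hb u hu).le⟩
  obtain ⟨bbot, hbbot⟩ : ∃ b, ∀ u ≤ b, |H u| ≤ 1 := by
    have := (Metric.tendsto_nhds.mp hbot 1 one_pos).exists_forall_of_atBot
    obtain ⟨b, hb⟩ := this
    exact ⟨b, fun u hu => by simpa [Real.dist_eq] using (hb u hu).le⟩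
  obtain ⟨C, hC⟩ := (isCompact_Icc (a := bbot) (b := btop)).exists_bound_of_continuousOn
    hHcont.continuousOn
  refine ⟨max C 1, le_trans zero_le_one (le_max_right _ _), fun x => ?_⟩
  rcases le_or_gt x bbot with h | h
  · exact le_trans (hbbot x h) (le_max_right _ _)
  rcases le_or_gt btop x with h2 | h2
  · exact le_trans (hbtop x h2) (le_max_right _ _)
  · have := hC x ⟨le_of_lt h, le_of_lt h2⟩
    rw [Real.norm_eq_abs] at this
    exact le_trans this (le_max_left _ _)


lemma probFin {α : Type*} [MeasurableSpace α] (μ : Measure α) (h : IsProbabilityMeasure μ) :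
    IsFiniteMeasure μ := by
  haveI := h
  infer_instance

/-- exact telescoping identity for the difference of hitting probabilities -/
lemma quot_eq (k : ℕ) (P Q : StieltjesFunction ℝ)
    (hP0 : Tendsto P atBot (𝓝 0)) (hP1 : Tendsto P atTop (𝓝 1))
    (hQ0 : Tendsto Q atBot (𝓝 0)) (hQ1 : Tendsto Q atTop (𝓝 1))
    {s : Set (Fin (k + 1) → ℝ)} (hs : Good s) :
    ((Measure.pi fun _ : Fin (k + 1) => Q.measure) s).toReal
      - ((Measure.pi fun _ : Fin (k + 1) => P.measure) s).toReal
    = ∑ i : Fin (k + 1), ∫ x, (Function.leftLim (P : ℝ → ℝ) x - Function.leftLim (Q : ℝ → ℝ) x)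
        ∂(@secStj k (telRho P Q i) (probFin _ (telRho_prob P Q hP0 hP1 hQ0 hQ1 i)) i
            s hs).measure := by
  haveI : ∀ (m : ℕ) (j : Fin (k + 1)), IsProbabilityMeasure ((mixFam P Q m j
      : StieltjesFunction ℝ)).measure := fun m j =>
    StieltjesFunction.isProbabilityMeasure _ (mixFam_tendsto_atBot hP0 hQ0 _ _)
      (mixFam_tendsto_atTop hP1 hQ1 _ _)
  set Φ : ℕ → ℝ := fun m =>
    ((Measure.pi fun j => (mixFam P Q m j : StieltjesFunction ℝ).measure) s).toReal with hΦ
  have htop : Φ (k + 1) = ((Measure.pi fun _ : Fin (k + 1) => Q.measure) s).toReal := by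
    have hfam : (fun j : Fin (k + 1) => (mixFam P Q (k + 1) j : StieltjesFunction ℝ).measure)
        = fun _ => Q.measure := by
      funext j
      unfold mixFam
      rw [if_pos j.isLt]
    simp only [hΦ, hfam]
  have hbot : Φ 0 = ((Measure.pi fun _ : Fin (k + 1) => P.measure) s).toReal := by
    have hfam : (fun j : Fin (k + 1) => (mixFam P Q 0 j : StieltjesFunction ℝ).measure)
        = fun _ => P.measure := by
      funext j
      unfold mixFam
      rw [if_neg (by omega)]
    simp only [hΦ, hfam]
  have htel : ∑ m ∈ Finset.range (k + 1), (Φ (m + 1) - Φ m) = Φ (k + 1) - Φ 0 :=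
    Finset.sum_range_sub Φ (k + 1)
  have hfin : ∑ i : Fin (k + 1), (Φ ((i : ℕ) + 1) - Φ (i : ℕ))
      = ∑ m ∈ Finset.range (k + 1), (Φ (m + 1) - Φ m) :=
    Fin.sum_univ_eq_sum_range (fun m => Φ (m + 1) - Φ m) (k + 1)
  rw [← htop, ← hbot, ← htel, ← hfin]
  apply Finset.sum_congr rfl
  intro i _
  haveI hρP : IsProbabilityMeasure (telRho P Q i) := telRho_prob P Q hP0 hP1 hQ0 hQ1 i
  have hstep := telescope_step P Q hP0 hP1 hQ0 hQ1 i hs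
  rw [hΦ, hstep]
  exact pairing P Q hP0 hP1 hQ0 hQ1
    (@secStj k (telRho P Q i) (probFin _ (telRho_prob P Q hP0 hP1 hQ0 hQ1 i)) i s hs)
    (secFun_tendsto_atBot _ i hs) (secFun_tendsto_atTop _ i hs)

end Stmt3Aux

open Stmt3Aux in
/-- Uniform (in `c`) Hadamard differentiability of the hitting probability with
respect to the update distribution: the difference quotients
`(φ(F_n + t_n H_n)(c) − φ(F_n)(c))/t_n` converge uniformly in `c` to
`φ'(F)(H)(c) = −∑_{i=1}^T ∫ H dλ_{i,c}`, where `λ_{i,c}` is the Lebesgue–Stieltjes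
measure of `z ↦ ∫ 1(m(y_1,…,z,…,y_T) ≥ c) ∏_{j≠i} dF(y_j)` (characterized here on
half-open intervals). -/
theorem stmt3 (T : ℕ) (hT : 1 ≤ T)
    (F : ℝ → ℝ) (hF : IsCDF F)
    (H : ℝ → ℝ) (hHcont : Continuous H)
    (hHtop : Tendsto H atTop (𝓝 0)) (hHbot : Tendsto H atBot (𝓝 0))
    (lam : Fin T → ℝ → Measure ℝ)
    (hlamfin : ∀ i c, IsFiniteMeasure (lam i c))
    (hlam : ∀ (i : Fin T) (c a b : ℝ), a ≤ b →
      lam i c (Set.Ioc a b) = ENNReal.ofReal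
        (((Measure.pi fun _ : Fin T => cdfMeasure F hF.1 hF.2.1)
            {y | c ≤ cM hT (Function.update y i b)}).toReal -
          ((Measure.pi fun _ : Fin T => cdfMeasure F hF.1 hF.2.1)
            {y | c ≤ cM hT (Function.update y i a)}).toReal))
    (Fn : ℕ → ℝ → ℝ) (hFn : ∀ n, IsCDF (Fn n))
    (hFnconv : TendstoUniformly Fn F atTop)
    (tn : ℕ → ℝ) (htn : Tendsto tn atTop (𝓝 0)) (htn0 : ∀ n, tn n ≠ 0)
    (Hn : ℕ → ℝ → ℝ) (hHnconv : TendstoUniformly Hn H atTop)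
    (hsum : ∀ n, IsCDF (fun x => Fn n x + tn n * Hn n x)) :
    TendstoUniformly
      (fun n c =>
        (hitProb T hT (fun x => Fn n x + tn n * Hn n x) (hsum n) c -
          hitProb T hT (Fn n) (hFn n) c) / tn n)
      (fun c => -∑ i : Fin T, ∫ z, H z ∂(lam i c))
      atTop := by
  classical
  obtain ⟨k, rfl⟩ : ∃ k, T = k + 1 := ⟨T - 1, by omega⟩
  set sF : StieltjesFunction ℝ := ⟨F, hF.1, hF.2.1⟩ with hsFdef
  have hsF0 : Tendsto (sF : ℝ → ℝ) atBot (𝓝 0) := hF.2.2.1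
  have hsF1 : Tendsto (sF : ℝ → ℝ) atTop (𝓝 1) := hF.2.2.2
  set sFn : ℕ → StieltjesFunction ℝ := fun n => ⟨Fn n, (hFn n).1, (hFn n).2.1⟩ with hsFndef
  set sGn : ℕ → StieltjesFunction ℝ := fun n =>
    ⟨fun x => Fn n x + tn n * Hn n x, (hsum n).1, (hsum n).2.1⟩ with hsGndef
  have hsFn0 : ∀ n, Tendsto (sFn n : ℝ → ℝ) atBot (𝓝 0) := fun n => (hFn n).2.2.1
  have hsFn1 : ∀ n, Tendsto (sFn n : ℝ → ℝ) atTop (𝓝 1) := fun n => (hFn n).2.2.2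
  have hsGn0 : ∀ n, Tendsto (sGn n : ℝ → ℝ) atBot (𝓝 0) := fun n => (hsum n).2.2.1
  have hsGn1 : ∀ n, Tendsto (sGn n : ℝ → ℝ) atTop (𝓝 1) := fun n => (hsum n).2.2.2
  haveI hprobF : IsProbabilityMeasure sF.measure := sF.isProbabilityMeasure hsF0 hsF1
  set sc : ℝ → Set (Fin (k + 1) → ℝ) := fun c => {y | c ≤ cM hT y} with hscdef
  have hgood : ∀ c, Good (sc c) := fun c => good_cM hT c
  set ρF : Measure (Fin k → ℝ) := Measure.pi fun _ : Fin k => sF.measure with hρFdef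
  haveI hprobρF : IsProbabilityMeasure ρF := MeasureTheory.Measure.pi.instIsProbabilityMeasure _
  -- identification of the limit measures
  have hlamEq : ∀ (i : Fin (k + 1)) (c : ℝ), lam i c
      = (@secStj k ρF (probFin _ hprobρF) i (sc c) (hgood c)).measure := by
    intro i c
    haveI := hlamfin i c
    refine MeasureTheory.Measure.ext_of_Ioc _ _ (fun a b hab => ?_)
    rw [hlam i c a b hab.le, StieltjesFunction.measure_Ioc]
    have hb : ((Measure.pi fun _ : Fin (k + 1) => cdfMeasure F hF.1 hF.2.1)
        {y | c ≤ cM hT (Function.update y i b)}).toReal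
        = secFun ρF i (sc c) b := update_marginal sF.measure i (hgood c) b
    have ha : ((Measure.pi fun _ : Fin (k + 1) => cdfMeasure F hF.1 hF.2.1)
        {y | c ≤ cM hT (Function.update y i a)}).toReal
        = secFun ρF i (sc c) a := update_marginal sF.measure i (hgood c) a
    rw [hb, ha]
    rfl
  -- the difference quotient
  set hatH : ℕ → ℝ → ℝ := fun n x =>
    (Function.leftLim (sGn n : ℝ → ℝ) x - Function.leftLim (sFn n : ℝ → ℝ) x) / tn n
    with hhatHdef
  have hquot : ∀ n c,
      (hitProb (k + 1) hT (fun x => Fn n x + tn n * Hn n x) (hsum n) c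
        - hitProb (k + 1) hT (Fn n) (hFn n) c) / tn n
      = -∑ i : Fin (k + 1), ∫ x, hatH n x
          ∂(@secStj k (telRho (sFn n) (sGn n) i)
            (probFin _ (telRho_prob _ _ (hsFn0 n) (hsFn1 n) (hsGn0 n) (hsGn1 n) i)) i
            (sc c) (hgood c)).measure := by
    intro n c
    have hG : hitProb (k + 1) hT (fun x => Fn n x + tn n * Hn n x) (hsum n) c
        = ((Measure.pi fun _ : Fin (k + 1) => (sGn n).measure) (sc c)).toReal := rfl
    have hF' : hitProb (k + 1) hT (Fn n) (hFn n) c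
        = ((Measure.pi fun _ : Fin (k + 1) => (sFn n).measure) (sc c)).toReal := rfl
    have h0 := quot_eq k (sFn n) (sGn n) (hsFn0 n) (hsFn1 n) (hsGn0 n) (hsGn1 n) (hgood c)
    rw [hG, hF', h0, Finset.sum_div, ← Finset.sum_neg_distrib]
    apply Finset.sum_congr rfl
    intro i _
    have hll : (fun x => Function.leftLim (sFn n : ℝ → ℝ) x
        - Function.leftLim (sGn n : ℝ → ℝ) x) = fun x => -(tn n * hatH n x) := by
      funext x
      simp only [hhatHdef]
      field_simp [htn0 n]
      ring
    rw [hll, integral_neg, integral_const_mul, neg_div,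
      mul_div_cancel_left₀ _ (htn0 n)]
  -- the limit function
  have htarget : ∀ c, (-∑ i : Fin (k + 1), ∫ z, H z ∂(lam i c))
      = -∑ i : Fin (k + 1), ∫ z, H z
          ∂(@secStj k ρF (probFin _ hprobρF) i (sc c) (hgood c)).measure := by
    intro c
    congr 1
    apply Finset.sum_congr rfl
    intro i _
    rw [hlamEq i c]
  -- now the ε-argument
  rw [Metric.tendstoUniformly_iff]
  intro ε hε
  obtain ⟨CH, hCH0, hCH⟩ := bounded_of_tendsto_zero hHcont hHtop hHbot
  set ε1 := ε / (8 * ((k : ℝ) + 1)) with hε1def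
  have hε1pos : 0 < ε1 := by positivity
  obtain ⟨K, p, a, hpmono, happrox⟩ := step_approx hHcont hHtop hHbot hε1pos
  set Csum := ∑ j ∈ Finset.range K, |a j| with hCsumdef
  have hCsum0 : 0 ≤ Csum := Finset.sum_nonneg fun j _ => abs_nonneg _
  set D := 2 * (k : ℝ) * Csum + 1 with hDdef
  have hDpos : 0 < D := by positivity
  set b2 := ε / (8 * ((k : ℝ) + 1) * D) with hb2def
  have hb2pos : 0 < b2 := by positivity
  set b1 := min ε1 1 with hb1def
  have hb1pos : 0 < b1 := lt_min hε1pos one_pos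
  have hb1le1 : b1 ≤ 1 := min_le_right _ _
  have hb1leε1 : b1 ≤ ε1 := min_le_left _ _
  have hev1 : ∀ᶠ n in atTop, ∀ x, |Hn n x - H x| ≤ b1 := by
    filter_upwards [Metric.tendstoUniformly_iff.mp hHnconv b1 hb1pos] with n hn x
    have := hn x
    rw [Real.dist_eq] at this
    rw [abs_sub_comm]
    exact this.le
  have hev2 : ∀ᶠ n in atTop, ∀ x, |Fn n x - F x| ≤ b2 / 2 := by
    filter_upwards [Metric.tendstoUniformly_iff.mp hFnconv (b2 / 2) (by positivity)] with n hn x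
    have := hn x
    rw [Real.dist_eq] at this
    rw [abs_sub_comm]
    exact this.le
  have hev3 : ∀ᶠ n in atTop, |tn n| * (CH + 1) ≤ b2 / 2 := by
    have h4 : 0 < b2 / 2 / (CH + 1) := by positivity
    filter_upwards [Metric.tendsto_nhds.mp htn _ h4] with n hn
    rw [Real.dist_eq, sub_zero] at hn
    calc |tn n| * (CH + 1) ≤ b2 / 2 / (CH + 1) * (CH + 1) :=
          mul_le_mul_of_nonneg_right hn.le (by positivity)
      _ = b2 / 2 := by field_simp
  filter_upwards [hev1, hev2, hev3] with n hn1 hn2 hn3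
  intro c
  rw [Real.dist_eq, hquot n c, htarget c]
  -- abbreviations
  haveI hprobTel : ∀ i : Fin (k + 1), IsProbabilityMeasure (telRho (sFn n) (sGn n) i) :=
    fun i => telRho_prob _ _ (hsFn0 n) (hsFn1 n) (hsGn0 n) (hsGn1 n) i
  -- per-slot cdf distance
  have hGnF : ∀ x, |(sGn n : ℝ → ℝ) x - (sF : ℝ → ℝ) x| ≤ b2 := by
    intro x
    have h1 : (sGn n : ℝ → ℝ) x - (sF : ℝ → ℝ) x
        = (Fn n x - F x) + tn n * Hn n x := by
      show Fn n x + tn n * Hn n x - F x = Fn n x - F x + tn n * Hn n x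
      ring
    rw [h1]
    have h2 : |Hn n x| ≤ CH + 1 := by
      calc |Hn n x| ≤ |Hn n x - H x| + |H x| := by
            have := abs_add_le (Hn n x - H x) (H x)
            simpa using this
        _ ≤ b1 + CH := add_le_add (hn1 x) (hCH x)
        _ ≤ CH + 1 := by linarith
    calc |Fn n x - F x + tn n * Hn n x| ≤ |Fn n x - F x| + |tn n * Hn n x| := abs_add_le _ _
      _ ≤ b2 / 2 + |tn n| * (CH + 1) := by
          apply add_le_add (hn2 x)
          rw [abs_mul]
          exact mul_le_mul_of_nonneg_left h2 (abs_nonneg _)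
      _ ≤ b2 / 2 + b2 / 2 := by linarith [hn3]
      _ = b2 := by ring
  have hFnF : ∀ x, |(sFn n : ℝ → ℝ) x - (sF : ℝ → ℝ) x| ≤ b2 := by
    intro x
    have := hn2 x
    show |Fn n x - F x| ≤ b2
    linarith [this]
  have hmixF : ∀ (i : Fin (k + 1)) (j : Fin k) (x : ℝ),
      |(mixFam (sFn n) (sGn n) (i : ℕ) (i.succAbove j) : StieltjesFunction ℝ) x
        - (sF : ℝ → ℝ) x| ≤ b2 := by
    intro i j x
    unfold mixFam
    split
    · exact hGnF x
    · exact hFnF x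
  -- uniform bound on the section function distance
  have hgd : ∀ (i : Fin (k + 1)) (z : ℝ),
      |secFun (telRho (sFn n) (sGn n) i) i (sc c) z - secFun ρF i (sc c) z|
        ≤ (k : ℝ) * b2 := by
    intro i z
    exact pi_good_dist k (fun j => mixFam (sFn n) (sGn n) (i : ℕ) (i.succAbove j))
      (fun _ => sF)
      (fun j => mixFam_tendsto_atBot (hsFn0 n) (hsGn0 n) _ _)
      (fun j => mixFam_tendsto_atTop (hsFn1 n) (hsGn1 n) _ _)
      (fun j => hsF0) (fun j => hsF1) (le_of_lt hb2pos)
      (fun j x => hmixF i j x) (good_sec (hgood c) z)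
  -- per-term estimate
  have hterm : ∀ i : Fin (k + 1),
      |(∫ z, H z ∂(@secStj k ρF (probFin _ hprobρF) i (sc c) (hgood c)).measure)
        - ∫ x, hatH n x ∂(@secStj k (telRho (sFn n) (sGn n) i)
            (probFin _ (telRho_prob _ _ (hsFn0 n) (hsFn1 n) (hsGn0 n) (hsGn1 n) i)) i
            (sc c) (hgood c)).measure|
      ≤ b1 + 2 * ε1 + 2 * (k : ℝ) * b2 * Csum := by
    intro i
    haveI := hprobTel i
    set gn := @secStj k (telRho (sFn n) (sGn n) i)
      (probFin _ (telRho_prob _ _ (hsFn0 n) (hsFn1 n) (hsGn0 n) (hsGn1 n) i)) i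
      (sc c) (hgood c) with hgndef
    set gF := @secStj k ρF (probFin _ hprobρF) i (sc c) (hgood c) with hgFdef
    haveI hfinn : IsFiniteMeasure gn.measure :=
      gn.isFiniteMeasure (secFun_tendsto_atBot _ i (hgood c)) (secFun_tendsto_atTop _ i (hgood c))
    haveI hfinF : IsFiniteMeasure gF.measure :=
      gF.isFiniteMeasure (secFun_tendsto_atBot _ i (hgood c)) (secFun_tendsto_atTop _ i (hgood c))
    have hmassn : (gn.measure Set.univ).toReal ≤ 1 := secStj_mass_le_one _ i (hgood c)
    have hmassF : (gF.measure Set.univ).toReal ≤ 1 := secStj_mass_le_one _ i (hgood c)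
    -- part A : |∫ hatH dλn - ∫ H dλn| ≤ b1
    have hpt : ∀ x, |hatH n x - H x| ≤ b1 := by
      intro x
      exact hatH_bound (htn0 n) (fun y => rfl) hHcont hn1 x
    have hmeasHat : Measurable (hatH n) :=
      ((Monotone.leftLim (sGn n).mono).measurable.sub
        (Monotone.leftLim (sFn n).mono).measurable).div_const _
    have hintHat : Integrable (hatH n) gn.measure := by
      apply integrable_of_bounded _ hmeasHat (C := b1 + CH)
      intro x
      calc |hatH n x| ≤ |hatH n x - H x| + |H x| := by
            have := abs_add_le (hatH n x - H x) (H x)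
            simpa using this
        _ ≤ b1 + CH := add_le_add (hpt x) (hCH x)
    have hintH : Integrable H gn.measure := integrable_of_bounded _ hHcont.measurable hCH
    have hintHF : Integrable H gF.measure := integrable_of_bounded _ hHcont.measurable hCH
    have hA : |(∫ x, hatH n x ∂gn.measure) - ∫ x, H x ∂gn.measure| ≤ b1 := by
      rw [← integral_sub hintHat hintH]
      have := norm_integral_le_of_norm_le_const (μ := gn.measure)
        (f := fun x => hatH n x - H x) (C := b1)
        (Filter.Eventually.of_forall fun x => by rw [Real.norm_eq_abs]; exact hpt x)
      rw [Real.norm_eq_abs] at this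
      calc |∫ x, (hatH n x - H x) ∂gn.measure| ≤ b1 * (gn.measure Set.univ).toReal := this
        _ ≤ b1 * 1 := mul_le_mul_of_nonneg_left hmassn (le_of_lt hb1pos)
        _ = b1 := mul_one b1
    -- part B : |∫ H dλn - ∫ H dΛ| ≤ 2 ε1 + 2 k b2 Csum
    set step : ℝ → ℝ := fun u => ∑ j ∈ Finset.range K,
      (Set.Ioc (p j) (p (j + 1))).indicator (fun _ => a j) u with hstepdef
    have hintstep : ∀ (μ : Measure ℝ) [IsFiniteMeasure μ], Integrable step μ := by
      intro μ hμ
      apply integrable_finset_sum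
      intro j _
      exact (integrable_const (a j)).indicator measurableSet_Ioc
    have hHstep : ∀ (μ : Measure ℝ) [IsFiniteMeasure μ], (μ Set.univ).toReal ≤ 1 →
        |(∫ x, H x ∂μ) - ∫ x, step x ∂μ| ≤ ε1 := by
      intro μ hμ hmass
      rw [← integral_sub (integrable_of_bounded _ hHcont.measurable hCH) (hintstep μ)]
      have := norm_integral_le_of_norm_le_const (μ := μ)
        (f := fun x => H x - step x) (C := ε1)
        (Filter.Eventually.of_forall fun x => by rw [Real.norm_eq_abs]; exact happrox x)
      rw [Real.norm_eq_abs] at this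
      calc |∫ x, (H x - step x) ∂μ| ≤ ε1 * (μ Set.univ).toReal := this
        _ ≤ ε1 * 1 := mul_le_mul_of_nonneg_left hmass (le_of_lt hε1pos)
        _ = ε1 := mul_one ε1
    have hstepn : ∫ x, step x ∂gn.measure
        = ∑ j ∈ Finset.range K, ((gn : ℝ → ℝ) (p (j + 1)) - (gn : ℝ → ℝ) (p j)) * a j :=
      integral_step gn (secFun_tendsto_atBot _ i (hgood c))
        (secFun_tendsto_atTop _ i (hgood c)) K p a hpmono
    have hstepF : ∫ x, step x ∂gF.measure
        = ∑ j ∈ Finset.range K, ((gF : ℝ → ℝ) (p (j + 1)) - (gF : ℝ → ℝ) (p j)) * a j :=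
      integral_step gF (secFun_tendsto_atBot _ i (hgood c))
        (secFun_tendsto_atTop _ i (hgood c)) K p a hpmono
    have hgnz : ∀ z, |(gn : ℝ → ℝ) z - (gF : ℝ → ℝ) z| ≤ (k : ℝ) * b2 := fun z => hgd i z
    have hB2 : |(∫ x, step x ∂gn.measure) - ∫ x, step x ∂gF.measure|
        ≤ 2 * (k : ℝ) * b2 * Csum := by
      rw [hstepn, hstepF, ← Finset.sum_sub_distrib]
      calc |∑ j ∈ Finset.range K, (((gn : ℝ → ℝ) (p (j + 1)) - (gn : ℝ → ℝ) (p j)) * a j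
            - ((gF : ℝ → ℝ) (p (j + 1)) - (gF : ℝ → ℝ) (p j)) * a j)|
          ≤ ∑ j ∈ Finset.range K, |((gn : ℝ → ℝ) (p (j + 1)) - (gn : ℝ → ℝ) (p j)) * a j
            - ((gF : ℝ → ℝ) (p (j + 1)) - (gF : ℝ → ℝ) (p j)) * a j| :=
            Finset.abs_sum_le_sum_abs _ _
        _ ≤ ∑ j ∈ Finset.range K, 2 * (k : ℝ) * b2 * |a j| := by
            apply Finset.sum_le_sum
            intro j _
            have h1 : ((gn : ℝ → ℝ) (p (j + 1)) - (gn : ℝ → ℝ) (p j)) * a j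
                - ((gF : ℝ → ℝ) (p (j + 1)) - (gF : ℝ → ℝ) (p j)) * a j
                = (((gn : ℝ → ℝ) (p (j + 1)) - (gF : ℝ → ℝ) (p (j + 1)))
                  - ((gn : ℝ → ℝ) (p j) - (gF : ℝ → ℝ) (p j))) * a j := by ring
            rw [h1, abs_mul]
            apply mul_le_mul_of_nonneg_right _ (abs_nonneg (a j))
            calc |((gn : ℝ → ℝ) (p (j + 1)) - (gF : ℝ → ℝ) (p (j + 1)))
                - ((gn : ℝ → ℝ) (p j) - (gF : ℝ → ℝ) (p j))|
                ≤ |(gn : ℝ → ℝ) (p (j + 1)) - (gF : ℝ → ℝ) (p (j + 1))|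
                  + |(gn : ℝ → ℝ) (p j) - (gF : ℝ → ℝ) (p j)| := abs_sub _ _
              _ ≤ (k : ℝ) * b2 + (k : ℝ) * b2 := add_le_add (hgnz _) (hgnz _)
              _ = 2 * (k : ℝ) * b2 := by ring
        _ = 2 * (k : ℝ) * b2 * Csum := by
            rw [hCsumdef, Finset.mul_sum]
    -- combine
    have hB : |(∫ x, H x ∂gn.measure) - ∫ x, H x ∂gF.measure|
        ≤ 2 * ε1 + 2 * (k : ℝ) * b2 * Csum := by
      calc |(∫ x, H x ∂gn.measure) - ∫ x, H x ∂gF.measure|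
          ≤ |(∫ x, H x ∂gn.measure) - ∫ x, step x ∂gn.measure|
            + |(∫ x, step x ∂gn.measure) - ∫ x, step x ∂gF.measure|
            + |(∫ x, step x ∂gF.measure) - ∫ x, H x ∂gF.measure| := by
            have e1 := abs_sub_le (∫ x, H x ∂gn.measure) (∫ x, step x ∂gn.measure)
              (∫ x, H x ∂gF.measure)
            have e2 := abs_sub_le (∫ x, step x ∂gn.measure) (∫ x, step x ∂gF.measure)
              (∫ x, H x ∂gF.measure)
            linarith
        _ ≤ ε1 + 2 * (k : ℝ) * b2 * Csum + ε1 := by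
            apply add_le_add (add_le_add (hHstep _ hmassn) hB2)
            rw [abs_sub_comm]
            exact hHstep _ hmassF
        _ = 2 * ε1 + 2 * (k : ℝ) * b2 * Csum := by ring
    calc |(∫ z, H z ∂gF.measure) - ∫ x, hatH n x ∂gn.measure|
        ≤ |(∫ z, H z ∂gF.measure) - ∫ x, H x ∂gn.measure|
          + |(∫ x, H x ∂gn.measure) - ∫ x, hatH n x ∂gn.measure| := abs_sub_le _ _ _
      _ ≤ (2 * ε1 + 2 * (k : ℝ) * b2 * Csum) + b1 := by
          apply add_le_add
          · rw [abs_sub_comm] at hB ⊢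
            rw [abs_sub_comm]
            exact hB
          · rw [abs_sub_comm]
            exact hA
      _ = b1 + 2 * ε1 + 2 * (k : ℝ) * b2 * Csum := by ring
  -- sum the per-term estimates
  have hsum' : |(-∑ i : Fin (k + 1), ∫ z, H z
        ∂(@secStj k ρF (probFin _ hprobρF) i (sc c) (hgood c)).measure)
      - (-∑ i : Fin (k + 1), ∫ x, hatH n x
          ∂(@secStj k (telRho (sFn n) (sGn n) i)
            (probFin _ (telRho_prob _ _ (hsFn0 n) (hsFn1 n) (hsGn0 n) (hsGn1 n) i)) i
            (sc c) (hgood c)).measure)|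
      ≤ ((k : ℝ) + 1) * (b1 + 2 * ε1 + 2 * (k : ℝ) * b2 * Csum) := by
    rw [neg_sub_neg, ← Finset.sum_sub_distrib]
    calc |∑ i : Fin (k + 1), ((∫ x, hatH n x ∂_) - _)| ≤ _ := Finset.abs_sum_le_sum_abs _ _
      _ ≤ ∑ i : Fin (k + 1), (b1 + 2 * ε1 + 2 * (k : ℝ) * b2 * Csum) := by
          apply Finset.sum_le_sum
          intro i _
          rw [abs_sub_comm]
          exact hterm i
      _ = ((k : ℝ) + 1) * (b1 + 2 * ε1 + 2 * (k : ℝ) * b2 * Csum) := by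
          rw [Finset.sum_const, Finset.card_univ, Fintype.card_fin]
          push_cast
          ring
  -- numeric conclusion
  have hnum : ((k : ℝ) + 1) * (b1 + 2 * ε1 + 2 * (k : ℝ) * b2 * Csum) < ε := by
    have hk1 : (0 : ℝ) < (k : ℝ) + 1 := by positivity
    have h1 : ((k : ℝ) + 1) * ε1 = ε / 8 := by
      rw [hε1def]
      field_simp
    have h3 : ((k : ℝ) + 1) * (2 * (k : ℝ) * b2 * Csum) ≤ ε / 8 := by
      have hb2eq : ((k : ℝ) + 1) * b2 = ε / (8 * D) := by
        rw [hb2def]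
        field_simp
      have h4 : ((k : ℝ) + 1) * (2 * (k : ℝ) * b2 * Csum)
          = (2 * (k : ℝ) * Csum) * (((k : ℝ) + 1) * b2) := by ring
      rw [h4, hb2eq]
      have h5 : 2 * (k : ℝ) * Csum ≤ D := by
        rw [hDdef]
        linarith
      calc (2 * (k : ℝ) * Csum) * (ε / (8 * D)) ≤ D * (ε / (8 * D)) := by
            apply mul_le_mul_of_nonneg_right h5 (by positivity)
        _ = ε / 8 := by field_simp
    have h2 : ((k : ℝ) + 1) * b1 ≤ ε / 8 := by
      calc ((k : ℝ) + 1) * b1 ≤ ((k : ℝ) + 1) * ε1 :=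
            mul_le_mul_of_nonneg_left hb1leε1 (le_of_lt hk1)
        _ = ε / 8 := h1
    nlinarith [h1, h2, h3]
  exact lt_of_le_of_lt hsum' hnum
end

section
/- Let T ∈ ℕ, T ≥ 1, and let f be a continuous, bounded, strictly positive probability density on ℝ. Let Y = (Y_1,…,Y_T) where Y_1,…,Y_T are independent random variables each with density f. Then the function c ↦ P(m(Y) ≤ c) is continuously differentiable on (0,∞). -/
set_option linter.unusedSectionVars false

open MeasureTheory ProbabilityTheory Filter Topology Finset
open scoped ENNReal NNReal

noncomputable def dmu (f : ℝ → ℝ) : Measure ℝ :=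
  (volume : Measure ℝ).withDensity fun x => ENNReal.ofReal (f x)

noncomputable def rhoM (m : ℕ) (f : ℝ → ℝ) : Measure (Fin m → ℝ) :=
  Measure.pi fun _ => dmu f

def Lf {m : ℕ} {ι : Type*} (w : ι → Fin m → ℝ) (α : ι) (y : Fin m → ℝ) : ℝ :=
  ∑ j, w α j * y j

lemma Lf_continuous {m : ℕ} {ι : Type*} (w : ι → Fin m → ℝ) (α : ι) :
    Continuous (Lf w α) :=
  continuous_finset_sum _ fun j _ => continuous_const.mul (continuous_apply j)

lemma dmu_prob {f : ℝ → ℝ} (hf0 : ∀ x, 0 ≤ f x) (hfi : Integrable f)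
    (hf1 : ∫ x, f x = 1) : IsProbabilityMeasure (dmu f) := by
  constructor
  rw [dmu, withDensity_apply _ MeasurableSet.univ, Measure.restrict_univ,
    ← ofReal_integral_eq_lintegral_ofReal hfi (Eventually.of_forall hf0), hf1]
  simp

lemma dmu_singleton (f : ℝ → ℝ) (x : ℝ) : dmu f {x} = 0 := by
  rw [dmu, withDensity_apply _ (measurableSet_singleton x),
    Measure.restrict_eq_zero.mpr (Real.volume_singleton), lintegral_zero_measure]

lemma hyperplane_null (f : ℝ → ℝ) (hP : IsProbabilityMeasure (dmu f)) {m : ℕ}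
    (v : Fin m → ℝ) (j : Fin m) (hvj : v j ≠ 0) (c : ℝ) :
    rhoM m f {y | ∑ i, v i * y i = c} = 0 := by
  haveI := hP
  obtain ⟨n, rfl⟩ : ∃ n, m = n + 1 :=
    Nat.exists_eq_succ_of_ne_zero (by rintro rfl; exact j.elim0)
  set S : Set (Fin (n+1) → ℝ) := {y | ∑ i, v i * y i = c} with hSdef
  have hS : MeasurableSet S := by
    have : Measurable fun y : Fin (n+1) → ℝ => ∑ i, v i * y i :=
      (Lf_continuous (fun _ : Unit => v) ()).measurable
    exact this (measurableSet_singleton c)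
  set e := MeasurableEquiv.piFinSuccAbove (fun _ : Fin (n+1) => ℝ) j with he
  have mp : MeasurePreserving e (rhoM (n+1) f)
      ((dmu f).prod (Measure.pi fun _ : Fin n => dmu f)) :=
    measurePreserving_piFinSuccAbove (fun _ => dmu f) j
  have hco : Measurable (S.indicator (1 : (Fin (n+1) → ℝ) → ℝ≥0∞)) :=
    measurable_one.indicator hS
  have key : rhoM (n+1) f S = ∫⁻ p : ℝ × (Fin n → ℝ),
      S.indicator (1 : (Fin (n+1) → ℝ) → ℝ≥0∞) (e.symm p)
      ∂((dmu f).prod (Measure.pi fun _ : Fin n => dmu f)) := by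
    rw [← lintegral_indicator_one hS]
    exact ((mp.symm e).lintegral_comp hco).symm
  rw [key, lintegral_prod_symm
    (fun p : ℝ × (Fin n → ℝ) => S.indicator (1 : (Fin (n+1) → ℝ) → ℝ≥0∞) (e.symm p))
    ((hco.comp e.symm.measurable).aemeasurable)]
  have inner0 : ∀ y' : Fin n → ℝ,
      (∫⁻ x, S.indicator (1 : (Fin (n+1) → ℝ) → ℝ≥0∞) (e.symm (x, y')) ∂(dmu f)) = 0 := by
    intro y'
    have hset : (fun x => S.indicator (1 : (Fin (n+1) → ℝ) → ℝ≥0∞) (e.symm (x, y')))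
        = fun x => ({(c - ∑ i, v (j.succAbove i) * y' i)/(v j)} : Set ℝ).indicator
            (1 : ℝ → ℝ≥0∞) x := by
      funext x
      have hmem : e.symm (x, y') ∈ S ↔ x = (c - ∑ i, v (j.succAbove i) * y' i)/(v j) := by
        have hx : e.symm (x, y') = Fin.insertNth j x y' := by
          simp [he, MeasurableEquiv.piFinSuccAbove, Fin.insertNthEquiv]
        rw [hx]
        simp only [hSdef, Set.mem_setOf_eq]
        rw [Fin.sum_univ_succAbove (fun i => v i * Fin.insertNth (α := fun _ => ℝ) j x y' i) j]
        simp only [Fin.insertNth_apply_same, Fin.insertNth_apply_succAbove]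
        rw [eq_div_iff hvj]
        constructor <;> intro h <;> [skip; skip] <;> nlinarith [h]
      by_cases h : e.symm (x, y') ∈ S
      · rw [Set.indicator_of_mem h, Set.indicator_of_mem (by simpa using hmem.mp h)]; rfl
      · rw [Set.indicator_of_notMem h, Set.indicator_of_notMem (by simpa using hmem.not.mp h)]
    rw [hset, lintegral_indicator_one (measurableSet_singleton _), dmu_singleton]
  simp [inner0]

section LA

variable {n : ℕ} {ι : Type*} [Fintype ι] [Nonempty ι]

noncomputable def auxL (w : ι → Fin (n+1) → ℝ) (j : Fin (n+1)) (β : ι)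
    (y' : Fin n → ℝ) : ℝ :=
  Lf w β (Fin.insertNth j 0 y')

noncomputable def subv (w : ι → Fin (n+1) → ℝ) (jj : ι → Fin (n+1)) (α : ι) (t : ℝ)
    (y' : Fin n → ℝ) : Fin (n+1) → ℝ :=
  Fin.insertNth (jj α) (t - auxL w (jj α) α y') y'

def QQ (w : ι → Fin (n+1) → ℝ) (jj : ι → Fin (n+1)) (α : ι) (t : ℝ) : Set (Fin n → ℝ) :=
  {y' | ∀ β, β ≠ α → Lf w β (subv w jj α t y') < t}

noncomputable def HH (f : ℝ → ℝ) (w : ι → Fin (n+1) → ℝ) (jj : ι → Fin (n+1)) (α : ι)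
    (t : ℝ) : ℝ≥0∞ :=
  ∫⁻ y' in QQ w jj α t, ENNReal.ofReal (f (t - auxL w (jj α) α y')) ∂(rhoM n f)

noncomputable def hr (f : ℝ → ℝ) (w : ι → Fin (n+1) → ℝ) (jj : ι → Fin (n+1)) (α : ι)
    (t : ℝ) : ℝ :=
  ∫ y' in QQ w jj α t, f (t - auxL w (jj α) α y') ∂(rhoM n f)

lemma Lf_insertNth (w : ι → Fin (n+1) → ℝ) (β : ι) (j : Fin (n+1)) (x : ℝ)
    (y' : Fin n → ℝ) :
    Lf w β (Fin.insertNth j x y') = w β j * x + auxL w j β y' := by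
  unfold Lf auxL Lf
  rw [Fin.sum_univ_succAbove (fun i => w β i * Fin.insertNth (α := fun _ => ℝ) j x y' i) j,
      Fin.sum_univ_succAbove (fun i => w β i * Fin.insertNth (α := fun _ => ℝ) j 0 y' i) j]
  simp [Fin.insertNth_apply_same, Fin.insertNth_apply_succAbove]

lemma auxL_eq_sum (w : ι → Fin (n+1) → ℝ) (j : Fin (n+1)) (β : ι) (y' : Fin n → ℝ) :
    auxL w j β y' = ∑ i : Fin n, w β (j.succAbove i) * y' i := by
  unfold auxL Lf
  rw [Fin.sum_univ_succAbove (fun i => w β i * Fin.insertNth (α := fun _ => ℝ) j 0 y' i) j]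
  simp [Fin.insertNth_apply_same, Fin.insertNth_apply_succAbove]

lemma Lf_subv (w : ι → Fin (n+1) → ℝ) (jj : ι → Fin (n+1)) (α β : ι) (t : ℝ)
    (y' : Fin n → ℝ) :
    Lf w β (subv w jj α t y')
      = w β (jj α) * (t - auxL w (jj α) α y') + auxL w (jj α) β y' := by
  rw [subv, Lf_insertNth]

lemma Lf_subv_self (w : ι → Fin (n+1) → ℝ) (jj : ι → Fin (n+1)) (α : ι)
    (hw1 : w α (jj α) = 1) (t : ℝ) (y' : Fin n → ℝ) :
    Lf w α (subv w jj α t y') = t := by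
  rw [Lf_subv, hw1]; ring

lemma continuous_auxL (w : ι → Fin (n+1) → ℝ) (j : Fin (n+1)) (β : ι) :
    Continuous (auxL w j β) := by
  simp only [funext (auxL_eq_sum w j β)]
  exact continuous_finset_sum _ fun i _ => continuous_const.mul (continuous_apply i)

lemma continuous_subv (w : ι → Fin (n+1) → ℝ) (jj : ι → Fin (n+1)) (α : ι) :
    Continuous fun p : ℝ × (Fin n → ℝ) => subv w jj α p.1 p.2 := by
  unfold subv
  exact Continuous.finInsertNth (A := fun _ => ℝ) (jj α)
    (continuous_fst.sub ((continuous_auxL w (jj α) α).comp continuous_snd)) continuous_snd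

lemma measurableSet_QQ (w : ι → Fin (n+1) → ℝ) (jj : ι → Fin (n+1)) (α : ι) (t : ℝ) :
    MeasurableSet (QQ w jj α t) := by
  have : QQ w jj α t = ⋂ β, {y' | β ≠ α → Lf w β (subv w jj α t y') < t} := by
    ext y'; simp [QQ]
  rw [this]
  refine MeasurableSet.iInter fun β => ?_
  by_cases hβ : β = α
  · simp [hβ]
  · have : {y' : Fin n → ℝ | β ≠ α → Lf w β (subv w jj α t y') < t}
        = {y' | Lf w β (subv w jj α t y') < t} := by ext y'; simp [hβ]
    rw [this]
    exact measurableSet_lt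
      (((Lf_continuous w β).comp ((continuous_subv w jj α).comp
        (Continuous.prodMk_right t))).measurable) measurable_const

lemma measurableSet_SP (w : ι → Fin (n+1) → ℝ) (jj : ι → Fin (n+1)) (α : ι)
    {B : Set ℝ} (hB : MeasurableSet B) :
    MeasurableSet {p : ℝ × (Fin n → ℝ) | p.1 ∈ B ∧ p.2 ∈ QQ w jj α p.1} := by
  refine MeasurableSet.inter (measurable_fst hB) ?_
  show MeasurableSet {p : ℝ × (Fin n → ℝ) | p.2 ∈ QQ w jj α p.1}
  have : {p : ℝ × (Fin n → ℝ) | p.2 ∈ QQ w jj α p.1}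
      = ⋂ β, {p : ℝ × (Fin n → ℝ) | β ≠ α → Lf w β (subv w jj α p.1 p.2) < p.1} := by
    ext p; simp [QQ]
  rw [this]
  refine MeasurableSet.iInter fun β => ?_
  by_cases hβ : β = α
  · simp [hβ]
  · have : {p : ℝ × (Fin n → ℝ) | β ≠ α → Lf w β (subv w jj α p.1 p.2) < p.1}
        = {p | Lf w β (subv w jj α p.1 p.2) < p.1} := by ext p; simp [hβ]
    rw [this]
    exact measurableSet_lt
      ((Lf_continuous w β).comp (continuous_subv w jj α)).measurable
      continuous_fst.measurable

end LA

theorem slice_eq {n : ℕ} {f : ℝ → ℝ} (hfc : Continuous f)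
    (hP : IsProbabilityMeasure (dmu f))
    {ι : Type*} [Fintype ι] [Nonempty ι] (w : ι → Fin (n+1) → ℝ) (jj : ι → Fin (n+1))
    (α : ι) (hw1 : w α (jj α) = 1) {B : Set ℝ} (hB : MeasurableSet B) :
    rhoM (n+1) f {y | Lf w α y ∈ B ∧ ∀ β, β ≠ α → Lf w β y < Lf w α y}
      = ∫⁻ t in B, HH f w jj α t := by
  haveI := hP
  haveI : IsProbabilityMeasure (rhoM n f) := by unfold rhoM; infer_instance
  set S : Set (Fin (n+1) → ℝ) :=
    {y | Lf w α y ∈ B ∧ ∀ β, β ≠ α → Lf w β y < Lf w α y} with hSdef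
  have hS : MeasurableSet S := by
    refine MeasurableSet.inter ((Lf_continuous w α).measurable hB) ?_
    show MeasurableSet {y : Fin (n+1) → ℝ | ∀ β, β ≠ α → Lf w β y < Lf w α y}
    have : {y : Fin (n+1) → ℝ | ∀ β, β ≠ α → Lf w β y < Lf w α y}
        = ⋂ β, {y | β ≠ α → Lf w β y < Lf w α y} := by ext y; simp
    rw [this]
    refine MeasurableSet.iInter fun β => ?_
    by_cases hβ : β = α
    · simp [hβ]
    · have : {y : Fin (n+1) → ℝ | β ≠ α → Lf w β y < Lf w α y}
          = {y | Lf w β y < Lf w α y} := by ext y; simp [hβ]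
      rw [this]
      exact measurableSet_lt (Lf_continuous w β).measurable (Lf_continuous w α).measurable
  set e := MeasurableEquiv.piFinSuccAbove (fun _ : Fin (n+1) => ℝ) (jj α) with he
  have mp : MeasurePreserving e (rhoM (n+1) f) ((dmu f).prod (rhoM n f)) :=
    measurePreserving_piFinSuccAbove (fun _ => dmu f) (jj α)
  have hco : Measurable (S.indicator (1 : (Fin (n+1) → ℝ) → ℝ≥0∞)) :=
    measurable_one.indicator hS
  have key : rhoM (n+1) f S = ∫⁻ p : ℝ × (Fin n → ℝ),
      S.indicator (1 : (Fin (n+1) → ℝ) → ℝ≥0∞) (e.symm p) ∂((dmu f).prod (rhoM n f)) := by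
    rw [← lintegral_indicator_one hS]
    exact ((mp.symm e).lintegral_comp hco).symm
  rw [key, lintegral_prod_symm
    (fun p : ℝ × (Fin n → ℝ) => S.indicator (1 : (Fin (n+1) → ℝ) → ℝ≥0∞) (e.symm p))
    ((hco.comp e.symm.measurable).aemeasurable)]
  set Φ : ℝ × (Fin n → ℝ) → ℝ≥0∞ := fun p =>
    Set.indicator {q : ℝ × (Fin n → ℝ) | q.1 ∈ B ∧ q.2 ∈ QQ w jj α q.1}
      (fun q => ENNReal.ofReal (f (q.1 - auxL w (jj α) α q.2))) p with hΦ
  have hΦm : Measurable Φ := by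
    refine Measurable.indicator ?_ (measurableSet_SP w jj α hB)
    exact (hfc.comp (continuous_fst.sub
      ((continuous_auxL w (jj α) α).comp continuous_snd))).measurable.ennreal_ofReal
  have hins : ∀ (x : ℝ) (y' : Fin n → ℝ), e.symm (x, y') = Fin.insertNth (jj α) x y' := by
    intro x y'
    simp [he, MeasurableEquiv.piFinSuccAbove, Fin.insertNthEquiv]
  have inner_eq : ∀ y' : Fin n → ℝ,
      (∫⁻ x, S.indicator (1 : (Fin (n+1) → ℝ) → ℝ≥0∞) (e.symm (x, y')) ∂(dmu f))
        = ∫⁻ t, Φ (t, y') := by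
    intro y'
    have hm1 : Measurable fun x : ℝ => ENNReal.ofReal (f x) :=
      hfc.measurable.ennreal_ofReal
    have hm2 : Measurable fun x : ℝ =>
        S.indicator (1 : (Fin (n+1) → ℝ) → ℝ≥0∞) (e.symm (x, y')) :=
      hco.comp (e.symm.measurable.comp (measurable_id.prodMk measurable_const))
    rw [dmu, lintegral_withDensity_eq_lintegral_mul volume hm1 hm2]
    simp only [Pi.mul_apply]
    rw [← lintegral_add_right_eq_self
      (fun x => ENNReal.ofReal (f x) * S.indicator (1 : (Fin (n+1) → ℝ) → ℝ≥0∞)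
        (e.symm (x, y'))) (- auxL w (jj α) α y')]
    refine lintegral_congr fun t => ?_
    have hsubv : e.symm (t + - auxL w (jj α) α y', y') = subv w jj α t y' := by
      rw [hins, subv, sub_eq_add_neg]
    have hmem : subv w jj α t y' ∈ S ↔ (t ∈ B ∧ y' ∈ QQ w jj α t) := by
      simp only [hSdef, Set.mem_setOf_eq, Lf_subv_self w jj α hw1]
      exact Iff.rfl
    show ENNReal.ofReal (f (t + - auxL w (jj α) α y'))
        * S.indicator (1 : (Fin (n+1) → ℝ) → ℝ≥0∞) (e.symm (t + - auxL w (jj α) α y', y'))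
        = Φ (t, y')
    rw [hsubv]
    have hq : (t, y') ∈ {q : ℝ × (Fin n → ℝ) | q.1 ∈ B ∧ q.2 ∈ QQ w jj α q.1}
        ↔ (t ∈ B ∧ y' ∈ QQ w jj α t) := Iff.rfl
    by_cases h1 : t ∈ B ∧ y' ∈ QQ w jj α t
    · rw [Set.indicator_of_mem (hmem.mpr h1)]
      simp only [hΦ]
      rw [Set.indicator_of_mem (hq.mpr h1)]
      simp [sub_eq_add_neg]
    · rw [Set.indicator_of_notMem (fun hc => h1 (hmem.mp hc))]
      simp only [hΦ]
      rw [Set.indicator_of_notMem (fun hc => h1 (hq.mp hc)), mul_zero]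
  rw [lintegral_congr inner_eq]
  rw [lintegral_lintegral_swap (f := fun (y' : Fin n → ℝ) (t : ℝ) => Φ (t, y'))
    (Measurable.aemeasurable (hΦm.comp measurable_swap))]
  have final : ∀ t, (∫⁻ y', Φ (t, y') ∂(rhoM n f)) = B.indicator (HH f w jj α) t := by
    intro t
    by_cases ht : t ∈ B
    · have hpt : ∀ y', Φ (t, y') = (QQ w jj α t).indicator
          (fun y'' => ENNReal.ofReal (f (t - auxL w (jj α) α y''))) y' := by
        intro y'
        by_cases hy : y' ∈ QQ w jj α t
        · have hq : (t, y') ∈ {q : ℝ × (Fin n → ℝ) | q.1 ∈ B ∧ q.2 ∈ QQ w jj α q.1} :=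
            ⟨ht, hy⟩
          simp only [hΦ]
          rw [Set.indicator_of_mem hq, Set.indicator_of_mem hy]
        · simp only [hΦ]
          rw [Set.indicator_of_notMem (fun hc => hy hc.2), Set.indicator_of_notMem hy]
      rw [lintegral_congr hpt, lintegral_indicator (measurableSet_QQ w jj α t),
        Set.indicator_of_mem ht]
      rfl
    · have hpt : ∀ y' : Fin n → ℝ, Φ (t, y') = 0 := by
        intro y'
        simp only [hΦ]
        rw [Set.indicator_of_notMem (fun hc => ht hc.1)]
      rw [lintegral_congr hpt, lintegral_zero, Set.indicator_of_notMem ht]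
  rw [lintegral_congr final, lintegral_indicator hB]

section LB

variable {n : ℕ} {f : ℝ → ℝ} {ι : Type*} [Fintype ι] [Nonempty ι]

lemma FI_integrable (hfc : Continuous f) (hf0 : ∀ x, 0 ≤ f x) {C : ℝ} (hfC : ∀ x, f x ≤ C)
    (hP : IsProbabilityMeasure (dmu f)) (w : ι → Fin (n+1) → ℝ) (jj : ι → Fin (n+1))
    (α : ι) (t : ℝ) :
    Integrable (fun y' : Fin n → ℝ => f (t - auxL w (jj α) α y')) (rhoM n f) := by
  haveI := hP
  haveI : IsProbabilityMeasure (rhoM n f) := by unfold rhoM; infer_instance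
  refine (integrable_const C).mono'
    ((hfc.comp (continuous_const.sub (continuous_auxL w (jj α) α))).aestronglyMeasurable) ?_
  refine Eventually.of_forall fun y' => ?_
  rw [Real.norm_eq_abs, abs_of_nonneg (hf0 _)]
  exact hfC _

lemma HH_eq_ofReal_hr (hfc : Continuous f) (hf0 : ∀ x, 0 ≤ f x) {C : ℝ} (hfC : ∀ x, f x ≤ C)
    (hP : IsProbabilityMeasure (dmu f)) (w : ι → Fin (n+1) → ℝ) (jj : ι → Fin (n+1))
    (α : ι) (t : ℝ) :
    HH f w jj α t = ENNReal.ofReal (hr f w jj α t) := by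
  rw [hr, ofReal_integral_eq_lintegral_ofReal
    ((FI_integrable hfc hf0 hfC hP w jj α t).restrict)
    (Eventually.of_forall fun y' => hf0 _)]
  rfl

lemma hr_nonneg (hf0 : ∀ x, 0 ≤ f x) (w : ι → Fin (n+1) → ℝ) (jj : ι → Fin (n+1))
    (α : ι) (t : ℝ) : 0 ≤ hr f w jj α t :=
  setIntegral_nonneg (measurableSet_QQ w jj α t) fun y' _ => hf0 _

lemma hr_le (hfc : Continuous f) (hf0 : ∀ x, 0 ≤ f x) {C : ℝ} (hfC : ∀ x, f x ≤ C)
    (hP : IsProbabilityMeasure (dmu f)) (w : ι → Fin (n+1) → ℝ) (jj : ι → Fin (n+1))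
    (α : ι) (t : ℝ) : hr f w jj α t ≤ C := by
  haveI := hP
  haveI hPn : IsProbabilityMeasure (rhoM n f) := by unfold rhoM; infer_instance
  have hC0 : (0:ℝ) ≤ C := le_trans (hf0 0) (hfC 0)
  have h1 : hr f w jj α t ≤ ∫ _ in QQ w jj α t, C ∂(rhoM n f) :=
    setIntegral_mono_on ((FI_integrable hfc hf0 hfC hP w jj α t).restrict)
      ((integrable_const C).restrict) (measurableSet_QQ w jj α t) fun y' _ => hfC _
  refine le_trans h1 ?_
  rw [setIntegral_const, smul_eq_mul]
  have hle : ((rhoM n f) (QQ w jj α t)).toReal ≤ 1 := by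
    have := prob_le_one (μ := rhoM n f) (s := QQ w jj α t)
    exact ENNReal.toReal_le_of_le_ofReal (by norm_num) (by simpa using this)
  have hle' : (rhoM n f).real (QQ w jj α t) ≤ 1 := hle
  nlinarith [hle']

lemma measurable_HH (hfc : Continuous f) (hP : IsProbabilityMeasure (dmu f))
    (w : ι → Fin (n+1) → ℝ) (jj : ι → Fin (n+1))
    (α : ι) : Measurable (HH f w jj α) := by
  haveI := hP
  haveI : IsProbabilityMeasure (rhoM n f) := by unfold rhoM; infer_instance
  set Ψ : ℝ × (Fin n → ℝ) → ℝ≥0∞ := fun p =>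
    Set.indicator {q : ℝ × (Fin n → ℝ) | q.1 ∈ (Set.univ : Set ℝ) ∧ q.2 ∈ QQ w jj α q.1}
      (fun q => ENNReal.ofReal (f (q.1 - auxL w (jj α) α q.2))) p with hΨ
  have hΨm : Measurable Ψ := by
    refine Measurable.indicator ?_ (measurableSet_SP w jj α MeasurableSet.univ)
    exact (hfc.comp (continuous_fst.sub
      ((continuous_auxL w (jj α) α).comp continuous_snd))).measurable.ennreal_ofReal
  have : HH f w jj α = fun t => ∫⁻ y', Ψ (t, y') ∂(rhoM n f) := by
    funext t
    rw [HH, ← lintegral_indicator (measurableSet_QQ w jj α t)]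
    refine lintegral_congr fun y' => ?_
    by_cases hy : y' ∈ QQ w jj α t
    · rw [Set.indicator_of_mem hy]
      simp only [hΨ]
      rw [Set.indicator_of_mem (show (t, y') ∈ {q : ℝ × (Fin n → ℝ) |
        q.1 ∈ (Set.univ : Set ℝ) ∧ q.2 ∈ QQ w jj α q.1} from ⟨Set.mem_univ t, hy⟩)]
    · rw [Set.indicator_of_notMem hy]
      simp only [hΨ]
      rw [Set.indicator_of_notMem (fun hc => hy hc.2)]
  rw [this]
  exact hΨm.lintegral_prod_right'

lemma hr_continuous (hfc : Continuous f) (hf0 : ∀ x, 0 ≤ f x) {C : ℝ} (hfC : ∀ x, f x ≤ C)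
    (hP : IsProbabilityMeasure (dmu f)) (w : ι → Fin (n+1) → ℝ) (jj : ι → Fin (n+1))
    (hw1 : ∀ α, w α (jj α) = 1) (hw : ∀ α β (c : ℝ), w β = c • w α → β = α)
    (α : ι) : Continuous (hr f w jj α) := by
  haveI := hP
  haveI : IsProbabilityMeasure (rhoM n f) := by unfold rhoM; infer_instance
  rw [continuous_iff_continuousAt]
  intro t0
  have hC0 : (0:ℝ) ≤ C := le_trans (hf0 0) (hfC 0)
  set FI : ℝ → (Fin n → ℝ) → ℝ :=
    fun t y' => (QQ w jj α t).indicator (fun y'' => f (t - auxL w (jj α) α y'')) y' with hFI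
  have hrFI : ∀ t, hr f w jj α t = ∫ y', FI t y' ∂(rhoM n f) := fun t =>
    (integral_indicator (measurableSet_QQ w jj α t)).symm
  refine ContinuousAt.congr ?_ (Eventually.of_forall fun t => (hrFI t).symm)
  -- continuity of subv in t for fixed y'
  have hsubc : ∀ (β : ι) (y' : Fin n → ℝ),
      Continuous fun t => Lf w β (subv w jj α t y') :=
    fun β y' => (Lf_continuous w β).comp
      ((continuous_subv w jj α).comp (continuous_id.prodMk continuous_const))
  -- the null bad set
  have hnull : ∀ β, β ≠ α →
      (rhoM n f) {y' | Lf w β (subv w jj α t0 y') = t0} = 0 := by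
    intro β hβ
    set b := w β (jj α) with hb
    have hvne : ∃ i, w β ((jj α).succAbove i) - b * w α ((jj α).succAbove i) ≠ 0 := by
      by_contra hcon
      push_neg at hcon
      refine hβ (hw α β b ?_)
      refine funext fun j => ?_
      have hall : ∀ j, w β j = (b • w α) j := by
        rw [Fin.forall_iff_succAbove (jj α)]
        constructor
        · simp [hw1 α, hb]
        · intro i
          have := hcon i
          simp only [Pi.smul_apply, smul_eq_mul]
          linarith
      exact hall j
    obtain ⟨i0, hi0⟩ := hvne
    have hset : {y' : Fin n → ℝ | Lf w β (subv w jj α t0 y') = t0}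
        = {y' | ∑ i, (w β ((jj α).succAbove i) - b * w α ((jj α).succAbove i)) * y' i
            = t0 * (1 - b)} := by
      ext y'
      rw [Set.mem_setOf_eq, Set.mem_setOf_eq, Lf_subv, auxL_eq_sum, auxL_eq_sum]
      have h1 : ∑ i, (w β ((jj α).succAbove i) - b * w α ((jj α).succAbove i)) * y' i
          = (∑ i, w β ((jj α).succAbove i) * y' i)
            - b * ∑ i, w α ((jj α).succAbove i) * y' i := by
        rw [Finset.mul_sum, ← Finset.sum_sub_distrib]
        refine Finset.sum_congr rfl fun i _ => by ring
      rw [h1]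
      constructor <;> intro h <;> nlinarith [h]
    rw [hset]
    exact hyperplane_null f hP _ i0 hi0 _
  have hNnull : (rhoM n f)
      (⋃ β : ι, {y' | β ≠ α ∧ Lf w β (subv w jj α t0 y') = t0}) = 0 := by
    refine measure_iUnion_null fun β => ?_
    by_cases hβ : β = α
    · have : {y' : Fin n → ℝ | β ≠ α ∧ Lf w β (subv w jj α t0 y') = t0} = ∅ := by
        ext y'; simp [hβ]
      simp [this]
    · refine measure_mono_null (fun y' hy' => hy'.2) (hnull β hβ)
  have hae := measure_eq_zero_iff_ae_notMem.mp hNnull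
  refine continuousAt_of_dominated (bound := fun _ => C) ?_ ?_ ?_ ?_
  · exact Eventually.of_forall fun t =>
      (Measurable.indicator
        ((hfc.comp (continuous_const.sub (continuous_auxL w (jj α) α))).measurable)
        (measurableSet_QQ w jj α t)).aestronglyMeasurable
  · refine Eventually.of_forall fun t => Eventually.of_forall fun y' => ?_
    show ‖(QQ w jj α t).indicator (fun y'' => f (t - auxL w (jj α) α y'')) y'‖ ≤ C
    rw [Real.norm_eq_abs]
    by_cases hy : y' ∈ QQ w jj α t
    · rw [Set.indicator_of_mem hy, abs_of_nonneg (hf0 _)]; exact hfC _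
    · rw [Set.indicator_of_notMem hy, abs_zero]; exact hC0
  · exact integrable_const C
  · filter_upwards [hae] with y' hy'
    have hgood : ∀ β, β ≠ α → Lf w β (subv w jj α t0 y') ≠ t0 := fun β hβ hc =>
      hy' (Set.mem_iUnion.mpr ⟨β, ⟨hβ, hc⟩⟩)
    by_cases hall : ∀ β, β ≠ α → Lf w β (subv w jj α t0 y') < t0
    · have hev : ∀ᶠ t in 𝓝 t0, y' ∈ QQ w jj α t := by
        have hev' : ∀ᶠ t in 𝓝 t0, ∀ β ∈ (Finset.univ : Finset ι),
            (β ≠ α → Lf w β (subv w jj α t y') < t) := by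
          rw [eventually_all_finset]
          intro β _
          by_cases hβ : β = α
          · exact Eventually.of_forall fun t h => absurd hβ h
          · have hco : Continuous fun t => Lf w β (subv w jj α t y') - t :=
              (hsubc β y').sub continuous_id
            have hop : IsOpen {t : ℝ | Lf w β (subv w jj α t y') - t < 0} :=
              isOpen_lt hco continuous_const
            have hmem : t0 ∈ {t : ℝ | Lf w β (subv w jj α t y') - t < 0} := by
              simp only [Set.mem_setOf_eq, sub_neg]
              exact hall β hβ
            exact (hop.eventually_mem hmem).mono fun t ht _ => by
              simpa [sub_neg] using ht
        exact hev'.mono fun t ht β hβ => ht β (Finset.mem_univ β) hβ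
      have heq : (fun t => FI t y') =ᶠ[𝓝 t0]
          fun t => f (t - auxL w (jj α) α y') :=
        hev.mono fun t ht =>
          show (QQ w jj α t).indicator (fun y'' => f (t - auxL w (jj α) α y'')) y' = _ from
            Set.indicator_of_mem ht _
      exact ContinuousAt.congr
        ((hfc.comp (continuous_id.sub continuous_const)).continuousAt) heq.symm
    · push_neg at hall
      obtain ⟨β, hβ, hge⟩ := hall
      have hgt : t0 < Lf w β (subv w jj α t0 y') :=
        lt_of_le_of_ne hge (Ne.symm (hgood β hβ))
      have hco : Continuous fun t => Lf w β (subv w jj α t y') - t :=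
        (hsubc β y').sub continuous_id
      have hop : IsOpen {t : ℝ | 0 < Lf w β (subv w jj α t y') - t} :=
        isOpen_lt continuous_const hco
      have hmem : t0 ∈ {t : ℝ | 0 < Lf w β (subv w jj α t y') - t} := by
        simp only [Set.mem_setOf_eq, sub_pos]
        exact hgt
      have hev : ∀ᶠ t in 𝓝 t0, FI t y' = 0 := by
        refine (hop.eventually_mem hmem).mono fun t ht => ?_
        have : y' ∉ QQ w jj α t := by
          intro hy
          have := hy β hβ
          rw [Set.mem_setOf_eq, sub_pos] at ht
          linarith
        exact Set.indicator_of_notMem this _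
      exact ContinuousAt.congr continuousAt_const (hev.mono fun t ht => ht.symm)

end LB

lemma measurableSet_D {n : ℕ} {ι : Type*} [Fintype ι] (w : ι → Fin (n+1) → ℝ) (α : ι)
    {B : Set ℝ} (hB : MeasurableSet B) :
    MeasurableSet {y : Fin (n+1) → ℝ | Lf w α y ∈ B ∧ ∀ β, β ≠ α → Lf w β y < Lf w α y} := by
  refine MeasurableSet.inter ((Lf_continuous w α).measurable hB) ?_
  show MeasurableSet {y : Fin (n+1) → ℝ | ∀ β, β ≠ α → Lf w β y < Lf w α y}
  have : {y : Fin (n+1) → ℝ | ∀ β, β ≠ α → Lf w β y < Lf w α y}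
      = ⋂ β, {y | β ≠ α → Lf w β y < Lf w α y} := by ext y; simp
  rw [this]
  refine MeasurableSet.iInter fun β => ?_
  by_cases hβ : β = α
  · simp [hβ]
  · have : {y : Fin (n+1) → ℝ | β ≠ α → Lf w β y < Lf w α y}
        = {y | Lf w β y < Lf w α y} := by ext y; simp [hβ]
    rw [this]
    exact measurableSet_lt (Lf_continuous w β).measurable (Lf_continuous w α).measurable

theorem lemA {n : ℕ} {f : ℝ → ℝ} (hfc : Continuous f) (hf0 : ∀ x, 0 ≤ f x)
    {C : ℝ} (hfC : ∀ x, f x ≤ C) (hfi : Integrable f) (hf1 : ∫ x, f x = 1)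
    {ι : Type*} [Fintype ι] [Nonempty ι] (w : ι → Fin (n+1) → ℝ) (jj : ι → Fin (n+1))
    (hw1 : ∀ α, w α (jj α) = 1) (hw : ∀ α β (c : ℝ), w β = c • w α → β = α) :
    ContDiff ℝ 1 fun c => ((rhoM (n+1) f) {y | ∀ α, Lf w α y ≤ c}).toReal := by
  classical
  have hP : IsProbabilityMeasure (dmu f) := dmu_prob hf0 hfi hf1
  haveI := hP
  haveI hPn1 : IsProbabilityMeasure (rhoM (n+1) f) := by unfold rhoM; infer_instance
  set ρ := rhoM (n+1) f with hρ
  set Z : (Fin (n+1) → ℝ) → ℝ :=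
    fun y => Finset.univ.sup' Finset.univ_nonempty (fun α => Lf w α y) with hZ
  have hZset : ∀ c : ℝ, {y : Fin (n+1) → ℝ | ∀ α, Lf w α y ≤ c} = {y | Z y ≤ c} := by
    intro c; ext y; simp [hZ, Finset.sup'_le_iff]
  have hLm : ∀ α, Measurable (Lf w α) := fun α => (Lf_continuous w α).measurable
  have hZm : Measurable Z := by
    have hze : Z = Finset.univ.sup' Finset.univ_nonempty (fun α => Lf w α) := by
      funext y
      rw [hZ, Finset.sup'_apply]
    rw [hze]
    exact Finset.measurable_sup' _ fun α _ => hLm α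
  set D : ι → ℝ → ℝ → Set (Fin (n+1) → ℝ) := fun α a b =>
    {y | Lf w α y ∈ Set.Ioc a b ∧ ∀ β, β ≠ α → Lf w β y < Lf w α y} with hD
  have hDmeas : ∀ α a b, MeasurableSet (D α a b) :=
    fun α a b => measurableSet_D w α measurableSet_Ioc
  -- ties are null
  set TT : Set (Fin (n+1) → ℝ) := {y | ∃ β γ : ι, β ≠ γ ∧ Lf w β y = Lf w γ y} with hTT
  have hties : ρ TT = 0 := by
    have hsub : TT ⊆ ⋃ (β : ι) (γ : ι), {y | β ≠ γ ∧ Lf w β y = Lf w γ y} := by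
      rintro y ⟨β, γ, h⟩
      exact Set.mem_iUnion.mpr ⟨β, Set.mem_iUnion.mpr ⟨γ, h⟩⟩
    refine measure_mono_null hsub
      (measure_iUnion_null fun β => measure_iUnion_null fun γ => ?_)
    by_cases hβγ : β = γ
    · have : {y : Fin (n+1) → ℝ | β ≠ γ ∧ Lf w β y = Lf w γ y} = ∅ := by
        ext y; simp [hβγ]
      simp [this]
    · have hne : ∃ j, w β j - w γ j ≠ 0 := by
        by_contra hcon
        push_neg at hcon
        refine hβγ (hw γ β 1 ?_)
        refine funext fun j => ?_
        have := hcon j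
        simp only [Pi.smul_apply, smul_eq_mul, one_mul]
        linarith
      obtain ⟨j0, hj0⟩ := hne
      refine measure_mono_null (fun y hy => ?_)
        (hyperplane_null f hP (fun j => w β j - w γ j) j0 hj0 0)
      show ∑ j, (w β j - w γ j) * y j = 0
      have h1 : ∑ j, (w β j - w γ j) * y j = Lf w β y - Lf w γ y := by
        rw [Lf, Lf, ← Finset.sum_sub_distrib]
        exact Finset.sum_congr rfl fun j _ => by ring
      rw [h1, hy.2, sub_self]
  -- decomposition of the Ioc layer
  have hEq : ∀ a b : ℝ, ρ {y | Z y ∈ Set.Ioc a b} = ∑ α, ρ (D α a b) := by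
    intro a b
    have hDdisj : Pairwise (Function.onFun Disjoint (fun α => D α a b)) := by
      intro α β hαβ
      rw [Function.onFun, Set.disjoint_left]
      intro y hy1 hy2
      exact lt_asymm (hy1.2 β (Ne.symm hαβ)) (hy2.2 α hαβ)
    have h1 : ρ (⋃ α, D α a b) = ∑ α, ρ (D α a b) := by
      rw [measure_iUnion hDdisj (fun α => hDmeas α a b), tsum_fintype]
    have hDsub : (⋃ α, D α a b) ⊆ {y | Z y ∈ Set.Ioc a b} := by
      intro y hy
      obtain ⟨α, hα⟩ := Set.mem_iUnion.mp hy
      have hZy : Z y = Lf w α y := by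
        refine le_antisymm (Finset.sup'_le _ _ fun β _ => ?_)
          (Finset.le_sup' (fun α => Lf w α y) (Finset.mem_univ α))
        by_cases hβ : β = α
        · rw [hβ]
        · exact le_of_lt (hα.2 β hβ)
      rw [Set.mem_setOf_eq, hZy]
      exact hα.1
    have hsub2 : {y | Z y ∈ Set.Ioc a b} ⊆ (⋃ α, D α a b) ∪ TT := by
      intro y hy
      obtain ⟨α, hmem, hval⟩ := Finset.exists_mem_eq_sup' (Finset.univ_nonempty (α := ι))
        (fun α => Lf w α y)
      by_cases htie : ∃ β, β ≠ α ∧ Lf w β y = Lf w α y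
      · obtain ⟨β, hβ, heq⟩ := htie
        exact Or.inr ⟨β, α, hβ, heq⟩
      · push_neg at htie
        refine Or.inl (Set.mem_iUnion.mpr ⟨α, ⟨?_, ?_⟩⟩)
        · rw [← hval]; exact hy
        · intro β hβ
          refine lt_of_le_of_ne ?_ (htie β hβ)
          rw [← hval]
          exact Finset.le_sup' (fun α => Lf w α y) (Finset.mem_univ β)
    refine le_antisymm ?_ ?_
    · calc ρ {y | Z y ∈ Set.Ioc a b} ≤ ρ ((⋃ α, D α a b) ∪ TT) := measure_mono hsub2
        _ ≤ ρ (⋃ α, D α a b) + ρ TT := measure_union_le _ _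
        _ = ∑ α, ρ (D α a b) := by rw [hties, add_zero, h1]
    · rw [← h1]
      exact measure_mono hDsub
  have hslice : ∀ (α : ι) (a b : ℝ), ρ (D α a b) = ∫⁻ t in Set.Ioc a b, HH f w jj α t :=
    fun α a b => slice_eq hfc hP w jj α (hw1 α) measurableSet_Ioc
  set hh : ℝ → ℝ := fun t => ∑ α, hr f w jj α t with hhh
  have hHHsum : ∀ t, (∑ α, HH f w jj α t) = ENNReal.ofReal (hh t) := by
    intro t
    rw [hhh, ENNReal.ofReal_sum_of_nonneg (fun α _ => hr_nonneg hf0 w jj α t)]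
    exact Finset.sum_congr rfl fun α _ => HH_eq_ofReal_hr hfc hf0 hfC hP w jj α t
  have hhcont : Continuous hh :=
    continuous_finset_sum _ fun α _ => hr_continuous hfc hf0 hfC hP w jj hw1 hw α
  have hhnn : ∀ t, 0 ≤ hh t := fun t =>
    Finset.sum_nonneg fun α _ => hr_nonneg hf0 w jj α t
  set FF : ℝ → ℝ≥0∞ := fun c => ρ {y | Z y ≤ c} with hFF
  have hkey : ∀ a b : ℝ, a ≤ b →
      FF b = FF a + ∫⁻ t in Set.Ioc a b, ENNReal.ofReal (hh t) := by
    intro a b hab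
    have hsplit : {y : Fin (n+1) → ℝ | Z y ≤ b}
        = {y | Z y ≤ a} ∪ {y | Z y ∈ Set.Ioc a b} := by
      ext y
      simp only [Set.mem_setOf_eq, Set.mem_union, Set.mem_Ioc]
      constructor
      · intro h
        rcases le_or_gt (Z y) a with h'|h'
        exacts [Or.inl h', Or.inr ⟨h', h⟩]
      · rintro (h|⟨h1,h2⟩)
        exacts [le_trans h hab, h2]
    have hdisj : Disjoint {y : Fin (n+1) → ℝ | Z y ≤ a} {y | Z y ∈ Set.Ioc a b} := by
      rw [Set.disjoint_left]
      intro y h1 h2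
      exact absurd h2.1 (not_lt.mpr h1)
    show ρ {y | Z y ≤ b} = ρ {y | Z y ≤ a} + _
    rw [hsplit, measure_union hdisj (hZm measurableSet_Ioc)]
    congr 1
    calc ρ {y | Z y ∈ Set.Ioc a b} = ∑ α, ρ (D α a b) := hEq a b
      _ = ∑ α, ∫⁻ t in Set.Ioc a b, HH f w jj α t :=
          Finset.sum_congr rfl fun α _ => hslice α a b
      _ = ∫⁻ t in Set.Ioc a b, (∑ α, HH f w jj α t) :=
          (lintegral_finset_sum _ fun α _ => measurable_HH hfc hP w jj α).symm
      _ = ∫⁻ t in Set.Ioc a b, ENNReal.ofReal (hh t) := lintegral_congr fun t => hHHsum t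
  have hfin : ∀ c, FF c ≠ ⊤ := fun c => measure_ne_top ρ _
  have hIfin : ∀ a b : ℝ, (∫⁻ t in Set.Ioc a b, ENNReal.ofReal (hh t)) ≠ ⊤ := by
    intro a b
    by_cases hab : a ≤ b
    · exact fun hcon => hfin b (by rw [hkey a b hab, hcon]; simp)
    · rw [Set.Ioc_eq_empty (fun hc => hab (le_of_lt hc)), Measure.restrict_empty,
        lintegral_zero_measure]
      exact ENNReal.zero_ne_top
  have hreal : ∀ a b : ℝ, a ≤ b →
      (FF b).toReal = (FF a).toReal + ∫ t in a..b, hh t := by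
    intro a b hab
    have h2 : ∫ t in a..b, hh t
        = ((∫⁻ t in Set.Ioc a b, ENNReal.ofReal (hh t))).toReal := by
      rw [intervalIntegral.integral_of_le hab,
        integral_eq_lintegral_of_nonneg_ae (Eventually.of_forall hhnn)
          hhcont.aestronglyMeasurable.restrict]
    rw [hkey a b hab, ENNReal.toReal_add (hfin a) (hIfin a b), h2]
  have hFFeq : ∀ c : ℝ, (FF c).toReal = (FF 0).toReal + ∫ t in (0:ℝ)..c, hh t := by
    intro c
    rcases le_or_gt 0 c with h|h
    · exact hreal 0 c h
    · have h1 := hreal c 0 (le_of_lt h)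
      have h2 : ∫ t in (0:ℝ)..c, hh t = - ∫ t in c..(0:ℝ), hh t :=
        intervalIntegral.integral_symm c 0
      rw [h2]
      linarith
  have hint : ∀ c : ℝ, IntervalIntegrable hh volume 0 c := fun c =>
    hhcont.intervalIntegrable 0 c
  have hderiv : ∀ c : ℝ, HasDerivAt (fun u => (FF u).toReal) (hh c) c := by
    intro c
    have h1 : HasDerivAt (fun u => ∫ t in (0:ℝ)..u, hh t) (hh c) c :=
      intervalIntegral.integral_hasDerivAt_right (hint c)
        (hhcont.stronglyMeasurableAtFilter _ _) hhcont.continuousAt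
    have h2 : (fun u => (FF u).toReal)
        = fun u => (FF 0).toReal + ∫ t in (0:ℝ)..u, hh t := funext hFFeq
    rw [h2]
    exact h1.const_add _
  have hGoal : (fun c => (ρ {y | ∀ α, Lf w α y ≤ c}).toReal)
      = fun c => (FF c).toReal := funext fun c => by rw [hFF, hZset c]
  rw [hGoal, contDiff_one_iff_deriv]
  refine ⟨fun c => (hderiv c).differentiableAt, ?_⟩
  have hderiveq : deriv (fun u => (FF u).toReal) = hh := funext fun c => (hderiv c).deriv
  rw [hderiveq]
  exact hhcont

lemma measurable_finset_inf' {δ : Type*} [MeasurableSpace δ] {κ : Type*} {s : Finset κ}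
    (hs : s.Nonempty) {g : κ → δ → ℝ} (hg : ∀ k ∈ s, Measurable (g k)) :
    Measurable (s.inf' hs g) :=
  Finset.inf'_induction hs _ (fun f hf g' hg' => hf.inf' hg') hg

/-- If `Y_1,…,Y_T` are i.i.d. with a continuous, bounded, strictly positive
probability density `f` on `ℝ`, then `c ↦ P(m(Y) ≤ c)` is continuously
differentiable on `(0,∞)`. -/
theorem stmt6 {Ω : Type*} [MeasurableSpace Ω] (P : Measure Ω) [IsProbabilityMeasure P]
    (T : ℕ) (hT : 1 ≤ T)
    (f : ℝ → ℝ) (hfcont : Continuous f) (hfbdd : ∃ C, ∀ x, f x ≤ C)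
    (hfpos : ∀ x, 0 < f x) (hfint : ∫ x, f x = 1)
    (Y : Fin T → Ω → ℝ) (hYmeas : ∀ i, Measurable (Y i))
    (hYindep : iIndepFun Y P)
    (hYlaw : ∀ i, Measure.map (Y i) P =
      (volume : Measure ℝ).withDensity (fun x => ENNReal.ofReal (f x))) :
    ContDiffOn ℝ 1 (fun c => (P {ω | cM hT (fun i => Y i ω) ≤ c}).toReal)
      (Set.Ioi (0 : ℝ)) := by
  classical
  obtain ⟨m, rfl⟩ : ∃ m, T = m + 1 := ⟨T - 1, by omega⟩
  have hfi : Integrable f := by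
    by_contra hcon
    rw [integral_undef hcon] at hfint
    exact one_ne_zero hfint.symm
  obtain ⟨C, hfC⟩ := hfbdd
  have hf0 : ∀ x, 0 ≤ f x := fun x => le_of_lt (hfpos x)
  have hP : IsProbabilityMeasure (dmu f) := dmu_prob hf0 hfi hfint
  haveI := hP
  set ι := {p : Fin (m+1) × Fin (m+1) // p.1 ≤ p.2} with hι
  haveI : Nonempty ι := ⟨⟨(0,0), le_refl _⟩⟩
  set w : ι → Fin (m+1) → ℝ := fun α j => if α.1.1 ≤ j ∧ j ≤ α.1.2 then 1 else 0 with hwdef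
  set jj : ι → Fin (m+1) := fun α => α.1.1 with hjj
  have hwval : ∀ (α : ι) (j : Fin (m+1)),
      w α j = if α.1.1 ≤ j ∧ j ≤ α.1.2 then 1 else 0 := fun α j => rfl
  have hw1 : ∀ α, w α (jj α) = 1 := by
    intro α
    rw [hwval]
    exact if_pos ⟨le_refl _, α.2⟩
  have hwmem : ∀ (α : ι) (j : Fin (m+1)), (α.1.1 ≤ j ∧ j ≤ α.1.2) → w α j = 1 :=
    fun α j h => by rw [hwval]; exact if_pos h
  have hw01 : ∀ (α : ι) (j : Fin (m+1)), w α j = 0 ∨ w α j = 1 := by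
    intro α j
    rw [hwval]
    by_cases h : α.1.1 ≤ j ∧ j ≤ α.1.2
    · exact Or.inr (if_pos h)
    · exact Or.inl (if_neg h)
  have hwiff : ∀ (α : ι) (j : Fin (m+1)), w α j = 1 ↔ (α.1.1 ≤ j ∧ j ≤ α.1.2) := by
    intro α j
    constructor
    · intro h
      by_contra hcon
      rw [hwval, if_neg hcon] at h
      norm_num at h
    · exact hwmem α j
  have hw : ∀ α β (c : ℝ), w β = c • w α → β = α := by
    intro α β c hc
    have h1 : w β β.1.1 = 1 := (hwiff β β.1.1).mpr ⟨le_refl _, β.2⟩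
    have h2 := congrFun hc β.1.1
    rw [h1] at h2
    have hc1 : c = 1 := by
      rcases hw01 α β.1.1 with h|h <;> rw [Pi.smul_apply, smul_eq_mul, h] at h2 <;> linarith
    subst hc1
    have heq : ∀ j, w β j = w α j := fun j => by
      have := congrFun hc j
      rwa [Pi.smul_apply, one_smul] at this
    have hba : β.1.1 ≤ α.1.2 ∧ α.1.1 ≤ β.1.1 := by
      have := (hwiff α β.1.1).mp (by rw [← heq]; exact (hwiff β β.1.1).mpr ⟨le_refl _, β.2⟩)
      exact ⟨this.2, this.1⟩
    have hab : α.1.1 ≤ β.1.2 ∧ β.1.1 ≤ α.1.1 := by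
      have := (hwiff β α.1.1).mp (by rw [heq]; exact (hwiff α α.1.1).mpr ⟨le_refl _, α.2⟩)
      exact ⟨this.2, this.1⟩
    have hb2 : α.1.2 ≤ β.1.2 ∧ β.1.2 ≤ α.1.2 := by
      constructor
      · exact ((hwiff β α.1.2).mp (by rw [heq]; exact (hwiff α α.1.2).mpr ⟨α.2, le_refl _⟩)).2
      · exact ((hwiff α β.1.2).mp (by rw [← heq]; exact (hwiff β β.1.2).mpr ⟨β.2, le_refl _⟩)).2
    have e1 : β.1.1 = α.1.1 := le_antisymm hab.2 hba.2
    have e2 : β.1.2 = α.1.2 := le_antisymm hb2.2 hb2.1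
    exact Subtype.ext (Prod.ext e1 e2)
  -- Lf in terms of cS
  have hLS : ∀ (α : ι) (y : Fin (m+1) → ℝ),
      Lf w α y = cS y ((α.1.2 : ℕ) + 1) - cS y (α.1.1 : ℕ) := by
    intro α y
    have hsub : Finset.univ.filter (fun j : Fin (m+1) => (j:ℕ) < (α.1.1:ℕ))
        ⊆ Finset.univ.filter (fun j : Fin (m+1) => (j:ℕ) < (α.1.2:ℕ) + 1) := by
      intro j hj
      simp only [Finset.mem_filter, Finset.mem_univ, true_and] at hj ⊢
      have hle := α.2
      rw [Fin.le_def] at hle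
      omega
    have hdiff : Finset.univ.filter (fun j : Fin (m+1) => (j:ℕ) < (α.1.2:ℕ) + 1)
        \ Finset.univ.filter (fun j : Fin (m+1) => (j:ℕ) < (α.1.1:ℕ))
        = Finset.univ.filter (fun j : Fin (m+1) => α.1.1 ≤ j ∧ j ≤ α.1.2) := by
      ext j
      simp only [Finset.mem_sdiff, Finset.mem_filter, Finset.mem_univ, true_and,
        Fin.le_def]
      omega
    rw [cS, cS, ← Finset.sum_sdiff_eq_sub hsub, hdiff, Lf]
    rw [Finset.sum_filter]
    refine Finset.sum_congr rfl fun j _ => ?_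
    rw [hwval]
    by_cases h : α.1.1 ≤ j ∧ j ≤ α.1.2
    · rw [if_pos h, if_pos h, one_mul]
    · rw [if_neg h, if_neg h, zero_mul]
  -- set equality for c ≥ 0
  have hsetiff : ∀ c : ℝ, 0 ≤ c → ∀ y : Fin (m+1) → ℝ,
      (cM hT y ≤ c ↔ ∀ α : ι, Lf w α y ≤ c) := by
    intro c hc y
    rw [cM, Finset.sup'_le_iff]
    constructor
    · intro h α
      rw [hLS]
      have hib : ((α.1.2 : ℕ) + 1) ∈ Finset.Icc 1 (m+1) := by
        rw [Finset.mem_Icc]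
        have := α.1.2.isLt
        omega
      have hR := h _ hib
      rw [cR] at hR
      have hmem : (α.1.1 : ℕ) ∈ Finset.range ((α.1.2:ℕ) + 1 + 1) := by
        rw [Finset.mem_range]
        have hle := α.2
        rw [Fin.le_def] at hle
        omega
      have hinf := Finset.inf'_le (cS y) hmem
      linarith
    · intro h i hi
      rw [Finset.mem_Icc] at hi
      rw [cR]
      have hall : ∀ k ∈ Finset.range (i+1), cS y i - c ≤ cS y k := by
        intro k hk
        rw [Finset.mem_range] at hk
        by_cases hki : k = i
        · subst hki; linarith
        · have hklt : k < i := by omega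
          have hkm : k < m + 1 := by omega
          have him : i - 1 < m + 1 := by omega
          have hα : (⟨k, hkm⟩ : Fin (m+1)) ≤ ⟨i - 1, him⟩ := by
            rw [Fin.le_def]; simp; omega
          have hLc := h ⟨(⟨k, hkm⟩, ⟨i - 1, him⟩), hα⟩
          rw [hLS] at hLc
          simp only at hLc
          have hieq : (i - 1) + 1 = i := by omega
          rw [hieq] at hLc
          linarith
      have hinf : cS y i - c ≤ (Finset.range (i+1)).inf'
          (Finset.nonempty_range_iff.mpr (Nat.succ_ne_zero i)) (cS y) :=
        (Finset.le_inf'_iff _ _).mpr hall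
      linarith
  -- joint law
  set Yv : Ω → (Fin (m+1) → ℝ) := fun ω i => Y i ω with hYv
  have hYvm : Measurable Yv := measurable_pi_lambda _ hYmeas
  have hmap : Measure.map Yv P = rhoM (m+1) f := by
    rw [rhoM]
    refine (Measure.pi_eq fun s hs => ?_).symm
    rw [Measure.map_apply hYvm (MeasurableSet.univ_pi hs)]
    have hpre : Yv ⁻¹' (Set.univ.pi s)
        = ⋂ i ∈ (Finset.univ : Finset (Fin (m+1))), Y i ⁻¹' s i := by
      ext ω
      simp [hYv, Set.mem_univ_pi]
    rw [hpre, iIndepFun_iff_measure_inter_preimage_eq_mul.mp hYindep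
      Finset.univ (fun i _ => hs i)]
    exact Finset.prod_congr rfl fun i _ => by
      rw [← Measure.map_apply (hYmeas i) (hs i), hYlaw i]; rfl
  -- measurability of cM
  have hcSm : ∀ k, Measurable fun y : Fin (m+1) → ℝ => cS y k := fun k =>
    Finset.measurable_sum _ fun j _ => measurable_pi_apply j
  have hcRm : ∀ i, Measurable fun y : Fin (m+1) → ℝ => cR y i := by
    intro i
    refine (hcSm i).sub ?_
    have hinfm : (fun y : Fin (m+1) → ℝ => (Finset.range (i+1)).inf'
        (Finset.nonempty_range_iff.mpr (Nat.succ_ne_zero i)) (cS y))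
        = (Finset.range (i+1)).inf' (Finset.nonempty_range_iff.mpr (Nat.succ_ne_zero i))
            (fun k => fun y : Fin (m+1) → ℝ => cS y k) := by
      funext y
      rw [Finset.inf'_apply]
    rw [hinfm]
    exact measurable_finset_inf' _ fun k _ => hcSm k
  have hcMm : Measurable (cM hT) := by
    have : cM hT = (Finset.Icc 1 (m+1)).sup' (Finset.nonempty_Icc.mpr hT)
        (fun i => fun y : Fin (m+1) → ℝ => cR y i) := by
      funext y
      rw [cM, Finset.sup'_apply]
    rw [this]
    exact Finset.measurable_sup' _ fun i _ => hcRm i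
  -- conclude
  have hG := lemA hfcont hf0 hfC hfi hfint w jj hw1 hw
  refine hG.contDiffOn.congr ?_
  intro c hc
  have hcpos : (0:ℝ) < c := hc
  have hmeasset : MeasurableSet {y : Fin (m+1) → ℝ | cM hT y ≤ c} :=
    hcMm measurableSet_Iic
  have hpre : {ω | cM hT (fun i => Y i ω) ≤ c} = Yv ⁻¹' {y | cM hT y ≤ c} := rfl
  have hseteq : {y : Fin (m+1) → ℝ | cM hT y ≤ c} = {y | ∀ α : ι, Lf w α y ≤ c} := by
    ext y
    exact hsetiff c (le_of_lt hcpos) y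
  rw [hpre, ← Measure.map_apply hYvm hmeasset, hmap, hseteq]
end

section
/- Let T ∈ ℕ, T ≥ 1, and let f be a continuous, bounded, strictly positive probability density on ℝ. Let Y = (Y_1,…,Y_T) where Y_1,…,Y_T are independent random variables each with density f, and let g denote the derivative of c ↦ P(m(Y) ≤ c) on (0,∞). Then for every compact set K ⊂ (0,∞) there exists ε > 0 such that g(c) ≥ ε for all c ∈ K. -/
open MeasureTheory ProbabilityTheory Filter Topology Finset
open scoped ENNReal

lemma cS_zero {T : ℕ} (y : Fin T → ℝ) : cS y 0 = 0 := by
  unfold cS; rw [Finset.sum_eq_zero]; intro j hj; simp at hj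

lemma cS_one {T : ℕ} (hT : 1 ≤ T) (y : Fin T → ℝ) : cS y 1 = y ⟨0, hT⟩ := by
  unfold cS
  rw [Finset.sum_eq_single (⟨0, hT⟩ : Fin T)]
  · intro j hj hne
    simp only [Finset.mem_filter, Nat.lt_one_iff] at hj
    exact absurd (Fin.ext hj.2) hne
  · simp

lemma cS_anti {T : ℕ} (y : Fin T → ℝ) (hneg : ∀ j : Fin T, 0 < (j : ℕ) → y j ≤ 0)
    {k i : ℕ} (hk : 1 ≤ k) (hki : k ≤ i) : cS y i ≤ cS y k := by
  unfold cS
  have hsub : Finset.univ.filter (fun j : Fin T => (j : ℕ) < k) ⊆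
      Finset.univ.filter (fun j : Fin T => (j : ℕ) < i) := by
    intro j hj
    simp only [Finset.mem_filter, Finset.mem_univ, true_and] at hj ⊢
    omega
  have h := Finset.sum_le_sum_of_subset_of_nonneg (f := fun j => -y j) hsub ?_
  · simp only [Finset.sum_neg_distrib] at h
    linarith
  · intro j hj hj'
    simp only [Finset.mem_filter, Finset.mem_univ, true_and] at hj hj'
    simpa using hneg j (by omega)

lemma cM_key {T : ℕ} (hT : 1 ≤ T) (y : Fin T → ℝ) {c x : ℝ} (hc : 0 < c)
    (h1 : c < y ⟨0, hT⟩) (h2 : y ⟨0, hT⟩ ≤ x)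
    (hneg : ∀ j : Fin T, 0 < (j : ℕ) → y j < 0) :
    c < cM hT y ∧ cM hT y ≤ x := by
  have hneg' : ∀ j : Fin T, 0 < (j : ℕ) → y j ≤ 0 := fun j hj => (hneg j hj).le
  have hy0 : 0 < y ⟨0, hT⟩ := hc.trans h1
  have hS1 : cS y 1 = y ⟨0, hT⟩ := cS_one hT y
  constructor
  · -- c < cM : use R_1
    have h1mem : 1 ∈ Finset.Icc 1 T := Finset.mem_Icc.mpr ⟨le_refl 1, hT⟩
    have hle : cR y 1 ≤ cM hT y := Finset.le_sup' (cR y) h1mem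
    have hinf : (Finset.range 2).inf'
        (Finset.nonempty_range_iff.mpr (Nat.succ_ne_zero 1)) (cS y) = 0 := by
      apply le_antisymm
      · have := Finset.inf'_le (f := cS y) (b := 0)
          (by simp : (0 : ℕ) ∈ Finset.range 2)
        rw [cS_zero] at this; exact this
      · apply Finset.le_inf'
        intro k hk
        simp only [Finset.mem_range] at hk
        interval_cases k
        · simp [cS_zero]
        · rw [hS1]; exact hy0.le
    have : cR y 1 = y ⟨0, hT⟩ := by
      unfold cR; rw [hinf, hS1, sub_zero]
    linarith
  · -- cM ≤ x
    apply Finset.sup'_le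
    intro i hi
    simp only [Finset.mem_Icc] at hi
    have hi1 : 1 ≤ i := hi.1
    have hSi1 : cS y i ≤ cS y 1 := cS_anti y hneg' le_rfl hi1
    have hinf_ge : min (cS y i) 0 ≤ (Finset.range (i + 1)).inf'
        (Finset.nonempty_range_iff.mpr (Nat.succ_ne_zero i)) (cS y) := by
      apply Finset.le_inf'
      intro k hk
      simp only [Finset.mem_range] at hk
      rcases Nat.eq_zero_or_pos k with hk0 | hk1
      · subst hk0; rw [cS_zero]; exact min_le_right _ _
      · exact le_trans (min_le_left _ _) (cS_anti y hneg' hk1 (by omega))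
    unfold cR
    have : cS y i - min (cS y i) 0 ≤ x := by
      rcases le_or_gt (cS y i) 0 with h | h
      · rw [min_eq_left h]; linarith
      · rw [min_eq_right h.le]; rw [hS1] at hSi1; linarith
    linarith

lemma measurable_cS {T : ℕ} (k : ℕ) : Measurable (fun y : Fin T → ℝ => cS y k) := by
  unfold cS
  exact Finset.measurable_sum _ (fun j _ => measurable_pi_apply j)

lemma measurable_cR {T : ℕ} (i : ℕ) : Measurable (fun y : Fin T → ℝ => cR y i) := by
  unfold cR
  apply Measurable.sub (measurable_cS i)
  have h : Measurable ((Finset.range (i + 1)).inf'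
      (Finset.nonempty_range_iff.mpr (Nat.succ_ne_zero i))
      (fun k (y : Fin T → ℝ) => cS y k)) := by
    apply Finset.inf'_induction
    · exact fun _f hf _g hg => hf.inf hg
    · exact fun k _ => measurable_cS k
  have heq : ∀ y : Fin T → ℝ, (Finset.range (i + 1)).inf'
      (Finset.nonempty_range_iff.mpr (Nat.succ_ne_zero i)) (cS y) =
      ((Finset.range (i + 1)).inf'
      (Finset.nonempty_range_iff.mpr (Nat.succ_ne_zero i))
      (fun k (y' : Fin T → ℝ) => cS y' k)) y := by
    intro y
    rw [Finset.inf'_apply]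
  rw [show (fun y : Fin T → ℝ => (Finset.range (i + 1)).inf'
      (Finset.nonempty_range_iff.mpr (Nat.succ_ne_zero i)) (cS y)) = _ from funext heq]
  exact h

lemma measurable_cM {T : ℕ} (hT : 1 ≤ T) : Measurable (cM hT) := by
  unfold cM
  have h : Measurable ((Finset.Icc 1 T).sup' (Finset.nonempty_Icc.mpr hT)
      (fun i (y : Fin T → ℝ) => cR y i)) :=
    Finset.measurable_sup' _ (fun i _ => measurable_cR i)
  have heq : ∀ y : Fin T → ℝ, (Finset.Icc 1 T).sup' (Finset.nonempty_Icc.mpr hT) (cR y) =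
      ((Finset.Icc 1 T).sup' (Finset.nonempty_Icc.mpr hT)
        (fun i (y' : Fin T → ℝ) => cR y' i)) y := by
    intro y
    rw [Finset.sup'_apply]
  rw [show (fun y : Fin T → ℝ => (Finset.Icc 1 T).sup'
      (Finset.nonempty_Icc.mpr hT) (cR y)) = _ from funext heq]
  exact h

/-- If `Y_1,…,Y_T` are i.i.d. with a continuous, bounded, strictly positive
probability density `f` on `ℝ` and `g` is the derivative of `c ↦ P(m(Y) ≤ c)` on
`(0,∞)`, then `g` is bounded away from `0` on every compact `K ⊂ (0,∞)`. -/
theorem stmt7 {Ω : Type*} [MeasurableSpace Ω] (P : Measure Ω) [IsProbabilityMeasure P]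
    (T : ℕ) (hT : 1 ≤ T)
    (f : ℝ → ℝ) (hfcont : Continuous f) (hfbdd : ∃ C, ∀ x, f x ≤ C)
    (hfpos : ∀ x, 0 < f x) (hfint : ∫ x, f x = 1)
    (Y : Fin T → Ω → ℝ) (hYmeas : ∀ i, Measurable (Y i))
    (hYindep : iIndepFun (m := fun _ : Fin T => (inferInstance : MeasurableSpace ℝ)) Y P)
    (hYlaw : ∀ i, Measure.map (Y i) P =
      (volume : Measure ℝ).withDensity (fun x => ENNReal.ofReal (f x)))
    (g : ℝ → ℝ)
    (hg : ∀ c ∈ Set.Ioi (0 : ℝ),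
      HasDerivAt (fun c' => (P {ω | cM hT (fun i => Y i ω) ≤ c'}).toReal) (g c) c) :
    ∀ K : Set ℝ, IsCompact K → K ⊆ Set.Ioi (0 : ℝ) →
      ∃ ε > 0, ∀ c ∈ K, ε ≤ g c := by
  intro K hK hKsub
  rcases K.eq_empty_or_nonempty with hKe | hKne
  · exact ⟨1, one_pos, by simp [hKe]⟩
  -- notation
  set i0 : Fin T := ⟨0, hT⟩ with hi0
  set μ : Measure ℝ := (volume : Measure ℝ).withDensity (fun x => ENNReal.ofReal (f x)) with hμ
  set M : Ω → ℝ := fun ω => cM hT (fun i => Y i ω) with hM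
  set F : ℝ → ℝ := fun c' => (P {ω | M ω ≤ c'}).toReal with hF
  have hMmeas : Measurable M := (measurable_cM hT).comp (measurable_pi_lambda _ hYmeas)
  -- bounds on K
  obtain ⟨a, haK, ha_min⟩ := hK.exists_isMinOn hKne continuous_id.continuousOn
  obtain ⟨b, hbK, hb_max⟩ := hK.exists_isMaxOn hKne continuous_id.continuousOn
  have ha_pos : (0 : ℝ) < a := hKsub haK
  have hab : a ≤ b := ha_min hbK
  -- min of f on [a, b+1]
  obtain ⟨x₀, hx₀mem, hx₀min⟩ := (isCompact_Icc (a := a) (b := b + 1)).exists_isMinOn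
    ⟨a, Set.mem_Icc.mpr ⟨le_refl a, by linarith⟩⟩ hfcont.continuousOn
  set fmin := f x₀ with hfmin_def
  have hfmin_pos : 0 < fmin := hfpos x₀
  -- q = μ(Iio 0)
  set q : ℝ≥0∞ := μ (Set.Iio 0) with hq
  have hmap_eq : ∀ (i : Fin T) (s : Set ℝ), MeasurableSet s → P (Y i ⁻¹' s) = μ s := by
    intro i s hs
    rw [← hYlaw i, Measure.map_apply (hYmeas i) hs]
  have hq_le_one : q ≤ 1 := by
    rw [hq, ← hmap_eq i0 _ measurableSet_Iio]
    exact prob_le_one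
  have hq_ne_top : q ≠ ⊤ := (hq_le_one.trans_lt ENNReal.one_lt_top).ne
  have hq_pos : 0 < q := by
    obtain ⟨z, hzmem, hzmin⟩ := (isCompact_Icc (a := (-1:ℝ)) (b := 0)).exists_isMinOn
      ⟨-1, Set.mem_Icc.mpr ⟨le_refl _, by norm_num⟩⟩ hfcont.continuousOn
    have h1 : ENNReal.ofReal (f z) * volume (Set.Ico (-1:ℝ) 0) ≤ μ (Set.Ico (-1:ℝ) 0) := by
      rw [hμ, withDensity_apply _ measurableSet_Ico, ← setLIntegral_const]
      apply setLIntegral_mono (hfcont.measurable.ennreal_ofReal)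
      intro t ht
      exact ENNReal.ofReal_le_ofReal (hzmin (Set.mem_Icc.mpr ⟨ht.1, ht.2.le⟩))
    have h2 : (0:ℝ≥0∞) < ENNReal.ofReal (f z) * volume (Set.Ico (-1:ℝ) 0) := by
      rw [Real.volume_Ico]
      apply ENNReal.mul_pos
      · simpa [ENNReal.ofReal_pos] using hfpos z
      · simp [ENNReal.ofReal_pos]
    exact lt_of_lt_of_le (lt_of_lt_of_le h2 h1) (measure_mono (fun t ht => ht.2))
  set qr := q.toReal with hqr
  have hqr_pos : 0 < qr := ENNReal.toReal_pos hq_pos.ne' hq_ne_top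
  set ε := fmin * qr ^ (T - 1) with hε
  refine ⟨ε, by positivity, ?_⟩
  intro c hcK
  have hc_pos : (0:ℝ) < c := hKsub hcK
  have hac : a ≤ c := ha_min hcK
  have hcb : c ≤ b := hb_max hcK
  -- main slope estimate
  have hslope : ∀ x ∈ Set.Ioc c (c + 1), ε * (x - c) ≤ F x - F c := by
    intro x hx
    obtain ⟨hcx, hxc1⟩ := hx
    -- the event A
    set B : Fin T → Set ℝ := fun i => if i = i0 then Set.Ioc c x else Set.Iio 0 with hB
    have hBmeas : ∀ i, MeasurableSet (B i) := by
      intro i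
      rw [hB]
      by_cases h : i = i0
      · simp only [if_pos h]; exact measurableSet_Ioc
      · simp only [if_neg h]; exact measurableSet_Iio
    set A : Set Ω := ⋂ i, Y i ⁻¹' B i with hA
    -- A ⊆ {M ≤ x} \ {M ≤ c}
    have hAsub : A ⊆ {ω | M ω ≤ x} \ {ω | M ω ≤ c} := by
      intro ω hω
      rw [hA, Set.mem_iInter] at hω
      have h0 := hω i0
      rw [Set.mem_preimage, hB] at h0
      simp only [if_pos rfl] at h0
      have hkey := cM_key hT (fun i => Y i ω) hc_pos h0.1 h0.2 ?_
      · exact ⟨hkey.2, by simp only [Set.mem_setOf_eq]; push_neg; exact hkey.1⟩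
      · intro j hj
        have hjne : j ≠ i0 := by
          intro hcon
          rw [hcon] at hj
          simp [hi0] at hj
        have := hω j
        rw [Set.mem_preimage, hB] at this
        simpa [if_neg hjne] using this
    -- P A = μ(Ioc c x) * q^(T-1)
    have hPA : P A = μ (Set.Ioc c x) * q ^ (T - 1) := by
      rw [hA, hYindep.meas_iInter (fun i => ⟨B i, hBmeas i, rfl⟩)]
      have hPi : ∀ i, P (Y i ⁻¹' B i) = μ (B i) := fun i => hmap_eq i _ (hBmeas i)
      simp only [hPi]
      rw [Finset.prod_eq_mul_prod_sdiff_singleton_of_mem (Finset.mem_univ i0) (fun i => μ (B i))]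
      have hall : ∀ j ∈ Finset.univ \ {i0},
          μ (if j = i0 then Set.Ioc c x else Set.Iio 0) = q := by
        intro j hj
        have hjne : j ≠ i0 := Finset.notMem_singleton.mp (Finset.mem_sdiff.mp hj).2
        rw [if_neg hjne, hq]
      rw [Finset.prod_congr rfl hall, Finset.prod_const,
        Finset.card_sdiff_of_subset (Finset.subset_univ _), Finset.card_univ,
        Finset.card_singleton, Fintype.card_fin]
      simp [hB]
    -- lower bound on μ(Ioc c x)
    have hμIoc : ENNReal.ofReal fmin * ENNReal.ofReal (x - c) ≤ μ (Set.Ioc c x) := by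
      rw [hμ, withDensity_apply _ measurableSet_Ioc, ← Real.volume_Ioc (a := c) (b := x),
        ← setLIntegral_const]
      apply setLIntegral_mono (hfcont.measurable.ennreal_ofReal)
      intro t ht
      apply ENNReal.ofReal_le_ofReal
      exact hx₀min (Set.mem_Icc.mpr ⟨by linarith [ht.1], by linarith [ht.2]⟩)
    -- convert to real bound
    have hPA_lb : ε * (x - c) ≤ (P A).toReal := by
      have hle : ENNReal.ofReal fmin * ENNReal.ofReal (x - c) * q ^ (T - 1) ≤ P A := by
        rw [hPA]
        exact mul_le_mul_left hμIoc _
      have := ENNReal.toReal_mono (measure_ne_top P A) hle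
      calc ε * (x - c) = fmin * (x - c) * qr ^ (T - 1) := by ring
        _ = (ENNReal.ofReal fmin * ENNReal.ofReal (x - c) * q ^ (T - 1)).toReal := by
            rw [ENNReal.toReal_mul, ENNReal.toReal_mul, ENNReal.toReal_pow,
              ENNReal.toReal_ofReal hfmin_pos.le, ENNReal.toReal_ofReal (by linarith)]
        _ ≤ (P A).toReal := this
    -- F x - F c = P({M≤x} \ {M≤c}).toReal
    have hsub_meas : MeasurableSet {ω | M ω ≤ c} := hMmeas measurableSet_Iic
    have hss : {ω | M ω ≤ c} ⊆ {ω | M ω ≤ x} := fun ω hω => le_trans hω hcx.le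
    have hunion : {ω | M ω ≤ c} ∪ {ω | M ω ≤ x} = {ω | M ω ≤ x} :=
      Set.union_eq_self_of_subset_left hss
    have hadd : P {ω | M ω ≤ c} + P ({ω | M ω ≤ x} \ {ω | M ω ≤ c}) = P {ω | M ω ≤ x} := by
      rw [measure_add_diff hsub_meas.nullMeasurableSet, hunion]
    have hFxFc : F x - F c = (P ({ω | M ω ≤ x} \ {ω | M ω ≤ c})).toReal := by
      rw [hF]
      simp only
      rw [← hadd, ENNReal.toReal_add (measure_ne_top P _) (measure_ne_top P _)]
      ring
    rw [hFxFc]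
    exact le_trans hPA_lb (ENNReal.toReal_mono (measure_ne_top P _) (measure_mono hAsub))
  -- conclude via the derivative
  have hder := (hg c hc_pos)
  have htend : Tendsto (slope F c) (𝓝[>] c) (𝓝 (g c)) :=
    (hasDerivAt_iff_tendsto_slope.mp hder).mono_left
      (nhdsWithin_mono c (fun t ht => ne_of_gt ht))
  have hev : ∀ᶠ t in 𝓝[>] c, ε ≤ slope F c t := by
    filter_upwards [show Set.Ioc c (c + 1) ∈ 𝓝[>] c from
      Ioc_mem_nhdsGT_of_mem (Set.mem_Ico.mpr ⟨le_refl c, by linarith⟩)] with t ht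
    have htc : 0 < t - c := by linarith [ht.1]
    rw [slope_def_field, le_div_iff₀ htc]
    linarith [hslope t ht]
  exact ge_of_tendsto htend hev
end

section
/- Fix Δ ∈ ℝ. For a bounded function P : ℝ → ℝ and ξ = (ξ_1,ξ_2) ∈ ℝ × (0,∞), define g(P;ξ) : ℝ → ℝ by g(P;ξ)(x) = P(ξ_1 + Δ/2 + ξ_2 x). Let P : ℝ → ℝ be bounded and fix ξ ∈ ℝ × (0,∞). Then for all sequences ξ_n → ξ in ℝ × (0,∞), t_n → 0 with t_n ≠ 0, and bounded functions h_n with sup_ℝ |h_n − h| → 0 for some h ∈ D_0, one has sup_{x ∈ ℝ} |(g(P + t_n h_n; ξ_n)(x) − g(P; ξ_n)(x))/t_n − g(h;ξ)(x)| → 0 as n → ∞; that is, g is Hadamard differentiable at P around ξ tangentially to D_0 with derivative h ↦ g(h;ξ). -/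
open Filter Topology

/-- Hadamard differentiability of the map `g(P;ξ)(x) = P(ξ_1 + Δ/2 + ξ_2 x)` at a
bounded `P` around `ξ ∈ ℝ × (0,∞)` tangentially to `D_0` (continuous functions
vanishing at `±∞`), with derivative `h ↦ g(h;ξ)`: the difference quotients
`(g(P + t_n h_n; ξ_n) − g(P; ξ_n))/t_n` converge uniformly on `ℝ` to
`x ↦ h(ξ_1 + Δ/2 + ξ_2 x)`. -/
theorem stmt12 (Δ : ℝ) (P : ℝ → ℝ) (hPbdd : ∃ C, ∀ x, |P x| ≤ C)
    (ξ : ℝ × ℝ) (hξ : 0 < ξ.2)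
    (ξn : ℕ → ℝ × ℝ) (hξn : ∀ n, 0 < (ξn n).2)
    (hξnconv : Tendsto ξn atTop (𝓝 ξ))
    (tn : ℕ → ℝ) (htn : Tendsto tn atTop (𝓝 0)) (htn0 : ∀ n, tn n ≠ 0)
    (hn : ℕ → ℝ → ℝ) (hhnbdd : ∀ n, ∃ C, ∀ x, |hn n x| ≤ C)
    (h : ℝ → ℝ) (hhcont : Continuous h)
    (hhtop : Tendsto h atTop (𝓝 0)) (hhbot : Tendsto h atBot (𝓝 0))
    (hhconv : TendstoUniformly hn h atTop) :
    TendstoUniformly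
      (fun n x =>
        ((P ((ξn n).1 + Δ / 2 + (ξn n).2 * x) +
            tn n * hn n ((ξn n).1 + Δ / 2 + (ξn n).2 * x)) -
          P ((ξn n).1 + Δ / 2 + (ξn n).2 * x)) / tn n)
      (fun x => h (ξ.1 + Δ / 2 + ξ.2 * x)) atTop := by
  have hkey : (fun n x =>
      ((P ((ξn n).1 + Δ / 2 + (ξn n).2 * x) +
          tn n * hn n ((ξn n).1 + Δ / 2 + (ξn n).2 * x)) -
        P ((ξn n).1 + Δ / 2 + (ξn n).2 * x)) / tn n)
      = fun n x => hn n ((ξn n).1 + Δ / 2 + (ξn n).2 * x) := by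
    funext n x
    have h0 := htn0 n
    field_simp
    ring
  rw [hkey]
  have hUC : UniformContinuous h := by
    apply hhcont.uniformContinuous_of_tendsto_cocompact (x := 0)
    rw [cocompact_eq_atBot_atTop]
    exact tendsto_sup.mpr ⟨hhbot, hhtop⟩
  set a := ξ.1 + Δ / 2 with ha_def
  set b := ξ.2 with hb_def
  have hb : 0 < b := hξ
  have haconv : Tendsto (fun n => (ξn n).1 + Δ / 2) atTop (𝓝 a) :=
    ((continuous_fst.tendsto ξ).comp hξnconv).add_const _
  have hbconv : Tendsto (fun n => (ξn n).2) atTop (𝓝 b) :=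
    (continuous_snd.tendsto ξ).comp hξnconv
  clear_value a b
  rw [Metric.tendstoUniformly_iff]
  intro ε hε
  obtain ⟨δ, hδpos, hδ⟩ := Metric.uniformContinuous_iff.mp hUC (ε / 2) (by positivity)
  obtain ⟨M1, hM1⟩ : ∃ M1, ∀ y ≥ M1, |h y| < ε / 4 := by
    have := Metric.tendsto_nhds.mp hhtop (ε / 4) (by positivity)
    rw [eventually_atTop] at this
    obtain ⟨M1, hM1⟩ := this
    exact ⟨M1, fun y hy => by simpa [Real.dist_eq] using hM1 y hy⟩
  obtain ⟨M2, hM2⟩ : ∃ M2, ∀ y ≤ M2, |h y| < ε / 4 := by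
    have := Metric.tendsto_nhds.mp hhbot (ε / 4) (by positivity)
    rw [eventually_atBot] at this
    obtain ⟨M2, hM2⟩ := this
    exact ⟨M2, fun y hy => by simpa [Real.dist_eq] using hM2 y hy⟩
  set M : ℝ := max (max M1 (-M2)) 0 with hM_def
  have hM0 : 0 ≤ M := le_max_right _ _
  have hMsmall : ∀ y : ℝ, M ≤ |y| → |h y| < ε / 4 := by
    intro y hy
    rcases abs_cases y with ⟨h1, _⟩ | ⟨h1, _⟩
    · apply hM1
      have : M1 ≤ M := le_trans (le_max_left _ _) (le_max_left _ _)
      linarith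
    · apply hM2
      have : -M2 ≤ M := le_trans (le_max_right _ _) (le_max_left _ _)
      linarith
  clear_value M
  set R : ℝ := 2 * (M + |a| + 1) / b + 1 with hR_def
  clear_value R
  have hRpos : 0 < R := by
    have : 0 < 2 * (M + |a| + 1) / b := by
      apply div_pos _ hb
      have := abs_nonneg a
      linarith
    linarith
  have hbR : b * R = 2 * (M + |a| + 1) + b := by
    rw [hR_def]; field_simp
  -- eventual bounds
  have hevb1 : ∀ᶠ n in atTop, |(ξn n).2 - b| < δ / (2 * R) := by
    have := Metric.tendsto_nhds.mp hbconv (δ / (2 * R))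
      (div_pos hδpos (by linarith))
    filter_upwards [this] with n hn'
    rwa [Real.dist_eq] at hn'
  have hevb2 : ∀ᶠ n in atTop, |(ξn n).2 - b| < b / 2 := by
    have := Metric.tendsto_nhds.mp hbconv (b / 2) (by linarith)
    filter_upwards [this] with n hn'
    rwa [Real.dist_eq] at hn'
  have heva1 : ∀ᶠ n in atTop, |((ξn n).1 + Δ / 2) - a| < δ / 2 := by
    have := Metric.tendsto_nhds.mp haconv (δ / 2) (by linarith)
    filter_upwards [this] with n hn'
    rwa [Real.dist_eq] at hn'
  have heva2 : ∀ᶠ n in atTop, |((ξn n).1 + Δ / 2) - a| < 1 := by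
    have := Metric.tendsto_nhds.mp haconv 1 one_pos
    filter_upwards [this] with n hn'
    rwa [Real.dist_eq] at hn'
  have hevh : ∀ᶠ n in atTop, ∀ y, dist (h y) (hn n y) < ε / 2 :=
    Metric.tendstoUniformly_iff.mp hhconv (ε / 2) (by positivity)
  filter_upwards [hevb1, hevb2, heva1, heva2, hevh] with n hnb1 hnb2 hna1 hna2 hnh x
  set an := (ξn n).1 + Δ / 2 with han_def
  set bn := (ξn n).2 with hbn_def
  have hbnpos : 0 < bn := hξn n
  clear_value an bn
  have key1 : dist (h (a + b * x)) (h (an + bn * x)) < ε / 2 := by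
    rcases le_or_gt |x| R with hx | hx
    · apply hδ
      rw [Real.dist_eq]
      have e : (a + b * x) - (an + bn * x) = (a - an) + (b - bn) * x := by ring
      have h1 : |(a + b * x) - (an + bn * x)| ≤ |a - an| + |b - bn| * |x| := by
        rw [e]
        refine le_trans (abs_add_le _ _) ?_
        rw [abs_mul]
      have h2 : |a - an| < δ / 2 := by rw [abs_sub_comm]; exact hna1
      have h3 : |b - bn| < δ / (2 * R) := by rw [abs_sub_comm]; exact hnb1
      have h4 : |b - bn| * |x| ≤ |b - bn| * R :=
        mul_le_mul_of_nonneg_left hx (abs_nonneg _)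
      have h5 : |b - bn| * R < δ / 2 := by
        have h6 : |b - bn| * R < (δ / (2 * R)) * R := mul_lt_mul_of_pos_right h3 hRpos
        have h7 : (δ / (2 * R)) * R = δ / 2 := by field_simp
        linarith
      linarith
    · have hbn2 : b / 2 < bn := by
        rcases abs_lt.mp hnb2 with ⟨h1, _⟩
        linarith
      have han1 : |an| < |a| + 1 := by
        have : |an| - |a| ≤ |an - a| := abs_sub_abs_le_abs_sub _ _
        linarith
      have hux : M ≤ |a + b * x| := by
        have h1 : |b * x| - |a| ≤ |a + b * x| := by
          have h2 := abs_add_le (a + b * x) (-a)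
          rw [abs_neg] at h2
          have e : a + b * x + -a = b * x := by ring
          rw [e] at h2
          linarith
        have h2 : |b * x| = b * |x| := by rw [abs_mul, abs_of_pos hb]
        have h3 : b * R < b * |x| := mul_lt_mul_of_pos_left hx hb
        have := abs_nonneg a
        linarith [hbR]
      have hunx : M ≤ |an + bn * x| := by
        have h1 : |bn * x| - |an| ≤ |an + bn * x| := by
          have h2 := abs_add_le (an + bn * x) (-an)
          rw [abs_neg] at h2
          have e : an + bn * x + -an = bn * x := by ring
          rw [e] at h2
          linarith
        have h2 : |bn * x| = bn * |x| := by rw [abs_mul, abs_of_pos hbnpos]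
        have h3 : bn * R ≤ bn * |x| := mul_le_mul_of_nonneg_left hx.le hbnpos.le
        have h4 : (b / 2) * R ≤ bn * R := mul_le_mul_of_nonneg_right hbn2.le hRpos.le
        have h5 : (b / 2) * R = (M + |a| + 1) + b / 2 := by
          rw [hR_def]; field_simp
        linarith
      calc dist (h (a + b * x)) (h (an + bn * x))
          ≤ |h (a + b * x)| + |h (an + bn * x)| := by
            rw [Real.dist_eq]; exact abs_sub _ _
        _ < ε / 4 + ε / 4 := add_lt_add (hMsmall _ hux) (hMsmall _ hunx)
        _ = ε / 2 := by ring
  calc dist (h (a + b * x)) (hn n (an + bn * x))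
      ≤ dist (h (a + b * x)) (h (an + bn * x)) +
        dist (h (an + bn * x)) (hn n (an + bn * x)) := dist_triangle _ _ _
    _ < ε / 2 + ε / 2 := add_lt_add key1 (hnh _)
    _ = ε := by ring
end

section
/- Let B_n and c_n, n ∈ ℕ, be real-valued random variables defined on a common probability space (for each n), let G be a real-valued random variable with continuous cumulative distribution function, and let c ∈ ℝ. Suppose that B_n converges in distribution to G and that c_n converges to c in probability. Then P(B_n ≤ c_n) → P(G ≤ c) as n → ∞. -/
open MeasureTheory Filter Topology

/-- If `B_n` converges in distribution to `G`, whose cdf is continuous, and `c_n`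
converges in probability to the constant `c`, then `P(B_n ≤ c_n) → P(G ≤ c)`. -/
theorem stmt15 {Ω Ω' : Type*} [MeasurableSpace Ω] [MeasurableSpace Ω']
    (P : Measure Ω) [IsProbabilityMeasure P]
    (P' : Measure Ω') [IsProbabilityMeasure P']
    (B : ℕ → Ω → ℝ) (hBmeas : ∀ n, Measurable (B n))
    (cn : ℕ → Ω → ℝ) (hcnmeas : ∀ n, Measurable (cn n))
    (G : Ω' → ℝ) (hGmeas : Measurable G) (c : ℝ)
    -- `B_n` converges in distribution to `G`:
    (hBconv : ∀ f : BoundedContinuousFunction ℝ ℝ,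
      Tendsto (fun n => ∫ ω, f (B n ω) ∂P) atTop (𝓝 (∫ ω', f (G ω') ∂P')))
    -- `c_n → c` in probability:
    (hcconv : ∀ ε : ℝ, 0 < ε →
      Tendsto (fun n => P {ω | ε ≤ |cn n ω - c|}) atTop (𝓝 0))
    -- the cdf of `G` is continuous:
    (hGcdf : Continuous fun t => (P' {ω' | G ω' ≤ t}).toReal) :
    Tendsto (fun n => (P {ω | B n ω ≤ cn n ω}).toReal) atTop
      (𝓝 ((P' {ω' | G ω' ≤ c}).toReal)) := by
  set F : ℝ → ℝ := fun t => (P' {ω' | G ω' ≤ t}).toReal with hF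
  -- push-forward measures
  have hmapB : ∀ n, IsProbabilityMeasure (P.map (B n)) :=
    fun n => Measure.isProbabilityMeasure_map (hBmeas n).aemeasurable
  have hmapG : IsProbabilityMeasure (P'.map G) :=
    Measure.isProbabilityMeasure_map hGmeas.aemeasurable
  set μs : ℕ → ProbabilityMeasure ℝ := fun n => ⟨P.map (B n), hmapB n⟩ with hμs
  set ν : ProbabilityMeasure ℝ := ⟨P'.map G, hmapG⟩ with hν
  have hcoeμ : ∀ n, ((μs n : Measure ℝ)) = P.map (B n) := fun n => rfl
  have hcoeν : ((ν : Measure ℝ)) = P'.map G := rfl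
  have hmapBapp : ∀ n t, (P.map (B n)) (Set.Iic t) = P {ω | B n ω ≤ t} := by
    intro n t
    rw [Measure.map_apply (hBmeas n) measurableSet_Iic]
    rfl
  have hmapGapp : ∀ t, (P'.map G) (Set.Iic t) = P' {ω' | G ω' ≤ t} := by
    intro t
    rw [Measure.map_apply hGmeas measurableSet_Iic]
    rfl
  -- weak convergence of the pushforwards
  have hweak : Tendsto μs atTop (𝓝 ν) := by
    rw [ProbabilityMeasure.tendsto_iff_forall_integral_tendsto]
    intro f
    have h1 : ∀ n, ∫ x, f x ∂(μs n : Measure ℝ) = ∫ ω, f (B n ω) ∂P := by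
      intro n
      exact integral_map (hBmeas n).aemeasurable f.continuous.measurable.aestronglyMeasurable
    have h2 : ∫ x, f x ∂(ν : Measure ℝ) = ∫ ω', f (G ω') ∂P' :=
      integral_map hGmeas.aemeasurable f.continuous.measurable.aestronglyMeasurable
    simpa only [h1, h2] using hBconv f
  -- the limit measure gives no mass to points
  have hnull : ∀ t : ℝ, (ν : Measure ℝ) {t} = 0 := by
    intro t
    have hle : ∀ k : ℕ, ((ν : Measure ℝ) {t}).toReal ≤ F t - F (t - 1 / (k + 1)) := by
      intro k
      have hsub : ({t} : Set ℝ) ⊆ Set.Iic t \ Set.Iic (t - 1 / (k + 1)) := by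
        intro x hx
        simp only [Set.mem_singleton_iff] at hx
        subst hx
        constructor
        · exact Set.mem_Iic.2 le_rfl
        · simp only [Set.mem_Iic, not_le]
          have : (0 : ℝ) < 1 / (k + 1) := by positivity
          linarith
      have h1 : (ν : Measure ℝ) {t} ≤ (ν : Measure ℝ) (Set.Iic t \ Set.Iic (t - 1 / (k + 1))) :=
        measure_mono hsub
      have h2 : (ν : Measure ℝ) (Set.Iic t \ Set.Iic (t - 1 / (k + 1)))
          = (ν : Measure ℝ) (Set.Iic t) - (ν : Measure ℝ) (Set.Iic (t - 1 / (k + 1))) := by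
        apply measure_diff _ measurableSet_Iic.nullMeasurableSet (measure_ne_top _ _)
        exact Set.Iic_subset_Iic.2 (by linarith [show (0:ℝ) < 1 / (k+1) by positivity])
      calc ((ν : Measure ℝ) {t}).toReal
          ≤ ((ν : Measure ℝ) (Set.Iic t) - (ν : Measure ℝ) (Set.Iic (t - 1 / (k + 1)))).toReal := by
            rw [← h2]; exact ENNReal.toReal_mono (by rw [h2]; exact (tsub_le_self.trans_lt (measure_lt_top _ _)).ne) h1
        _ ≤ F t - F (t - 1 / (k + 1)) := by
            rw [ENNReal.toReal_sub_of_le (measure_mono (Set.Iic_subset_Iic.2 (by linarith [show (0:ℝ) < 1 / (k+1) by positivity]))) (measure_ne_top _ _)]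
            rw [hcoeν, hmapGapp, hmapGapp]
    have htend : Tendsto (fun k : ℕ => F t - F (t - 1 / (k + 1))) atTop (𝓝 0) := by
      have h1 : Tendsto (fun k : ℕ => t - 1 / ((k : ℝ) + 1)) atTop (𝓝 t) := by
        have := tendsto_one_div_add_atTop_nhds_zero_nat (𝕜 := ℝ)
        have := (tendsto_const_nhds (x := t) (f := atTop (α := ℕ))).sub this
        simpa using this
      have := (hGcdf.tendsto t).comp h1
      have h2 : Tendsto (fun k : ℕ => F t - F (t - 1 / (k + 1))) atTop (𝓝 (F t - F t)) :=
        (tendsto_const_nhds).sub this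
      simpa using h2
    have h0 : ((ν : Measure ℝ) {t}).toReal ≤ 0 := le_of_tendsto_of_tendsto' tendsto_const_nhds htend (fun k => hle k)
    have h0' : ((ν : Measure ℝ) {t}).toReal = 0 :=
      le_antisymm h0 ENNReal.toReal_nonneg
    exact (ENNReal.toReal_eq_zero_iff _).1 h0' |>.resolve_right (measure_ne_top _ _)
  -- pointwise convergence of cdfs
  have hcdf : ∀ t : ℝ, Tendsto (fun n => (P {ω | B n ω ≤ t}).toReal) atTop (𝓝 (F t)) := by
    intro t
    have hfr : (ν : Measure ℝ) (frontier (Set.Iic t)) = 0 := by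
      rw [frontier_Iic]; exact hnull t
    have := ProbabilityMeasure.tendsto_measure_of_null_frontier_of_tendsto' hweak hfr
    have h2 := (ENNReal.tendsto_toReal (measure_ne_top (ν : Measure ℝ) _)).comp this
    simp only [Function.comp_def, hcoeμ, hcoeν] at h2
    simpa only [hmapBapp, hmapGapp, hF] using h2
  -- convergence in probability, real-valued
  have hprob : ∀ ε : ℝ, 0 < ε →
      Tendsto (fun n => (P {ω | ε ≤ |cn n ω - c|}).toReal) atTop (𝓝 0) := by
    intro ε hε
    have := (ENNReal.tendsto_toReal (by simp)).comp (hcconv ε hε)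
    simpa [Function.comp_def] using this
  -- main ε-argument
  rw [Metric.tendsto_atTop]
  intro ε hε
  obtain ⟨δ, hδpos, hδ⟩ := Metric.continuous_iff.1 hGcdf c (ε / 3) (by linarith)
  set d := δ / 2 with hd
  have hdpos : 0 < d := by positivity
  have hFub : |F (c + d) - F c| < ε / 3 := by
    have := hδ (c + d) (by
      rw [Real.dist_eq, show c + d - c = d by ring, abs_of_pos hdpos, hd]; linarith)
    simpa [Real.dist_eq] using this
  have hFlb : |F (c - d) - F c| < ε / 3 := by
    have := hδ (c - d) (by
      rw [Real.dist_eq, show c - d - c = -d by ring, abs_neg, abs_of_pos hdpos, hd]; linarith)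
    simpa [Real.dist_eq] using this
  have h1 := Metric.tendsto_atTop.1 (hcdf (c + d)) (ε / 3) (by linarith)
  have h2 := Metric.tendsto_atTop.1 (hcdf (c - d)) (ε / 3) (by linarith)
  have h3 := Metric.tendsto_atTop.1 (hprob d hdpos) (ε / 3) (by linarith)
  obtain ⟨N1, hN1⟩ := h1
  obtain ⟨N2, hN2⟩ := h2
  obtain ⟨N3, hN3⟩ := h3
  refine ⟨max N1 (max N2 N3), fun n hn => ?_⟩
  have hn1 := hN1 n (le_trans (le_max_left _ _) hn)
  have hn2 := hN2 n (le_trans (le_trans (le_max_left _ _) (le_max_right _ _)) hn)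
  have hn3 := hN3 n (le_trans (le_trans (le_max_right _ _) (le_max_right _ _)) hn)
  rw [Real.dist_eq] at hn1 hn2 hn3 ⊢
  -- sandwich inequalities
  have key : ∀ (s u v : Set Ω), s ⊆ u ∪ v →
      (P s).toReal ≤ (P u).toReal + (P v).toReal := by
    intro s u v hs
    have h := (measure_mono hs).trans (measure_union_le (μ := P) u v)
    calc (P s).toReal ≤ ((P u) + (P v)).toReal :=
          ENNReal.toReal_mono (by finiteness) h
      _ = (P u).toReal + (P v).toReal :=
          ENNReal.toReal_add (measure_ne_top _ _) (measure_ne_top _ _)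
  have hub : (P {ω | B n ω ≤ cn n ω}).toReal
      ≤ (P {ω | B n ω ≤ c + d}).toReal + (P {ω | d ≤ |cn n ω - c|}).toReal := by
    apply key
    intro ω hω
    simp only [Set.mem_setOf_eq] at hω
    by_cases h : d ≤ |cn n ω - c|
    · exact Or.inr h
    · left
      push_neg at h
      rw [abs_lt] at h
      simp only [Set.mem_setOf_eq]
      linarith
  have hlb : (P {ω | B n ω ≤ c - d}).toReal
      ≤ (P {ω | B n ω ≤ cn n ω}).toReal + (P {ω | d ≤ |cn n ω - c|}).toReal := by
    apply key
    intro ω hω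
    simp only [Set.mem_setOf_eq] at hω
    by_cases h : d ≤ |cn n ω - c|
    · exact Or.inr h
    · left
      push_neg at h
      rw [abs_lt] at h
      simp only [Set.mem_setOf_eq]
      linarith
  rw [abs_lt] at hn1 hn2 hFub hFlb ⊢
  have hnn : 0 ≤ (P {ω | d ≤ |cn n ω - c|}).toReal := ENNReal.toReal_nonneg
  have hn3' : (P {ω | d ≤ |cn n ω - c|}).toReal < ε / 3 := by
    rw [sub_zero, abs_of_nonneg hnn] at hn3; exact hn3
  constructor <;> linarith
end
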